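/- arXiv:2105.04334 — 9 statements merged into one kernel-verified Lean document; each statement's English description precedes it below -/
import Mathlib

section
/- Let q ≥ 2, M > m ≥ 0, ℓ ≤ u and n₀ ≥ max{−ℓ/q^m, 0} be integers and let x : ℕ → ℂ be q-recursive with offset n₀, exponents M and m, index shift bounds ℓ and u, and coefficients (c_{s,k}). Set ℓ' := ⌊((ℓ+1)q^{M−m} − q^M)/(q^{M−m}−1)⌋ if ℓ < 0 and ℓ' := 0 otherwise, u' := q^m − 1 + ⌈u·q^{M−m}/(q^{M−m}−1)⌉ if u > 0 and u' := q^m − 1 otherwise, and n₁ := n₀ − ⌊ℓ'/q^M⌋. Then x is q-regular with offset n₁; more precisely, there exist a natural number D = (q^M − 1)/(q − 1) + (M − m)(u' − ℓ' − q^m + 1), a vector-valued sequence v : ℕ → ℂ^D, and matrices A₀, …, A_{q−1} ∈ ℂ^{D×D} such that v(qn + r) = A_r·v(n) holds for all 0 ≤ r < q and all n ≥ n₁, where v consists of the components x∘(n ↦ q^j n + i) for 0 ≤ j < m and 0 ≤ i < q^j together with the components x∘(n ↦ q^j n + i) for m ≤ j < M and ℓ' ≤ i ≤ q^j − q^m +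 u' (with x extended by the value 0 to negative arguments); in particular x itself occurs as a component of v. -/
open scoped BigOperators Matrix


lemma floor_int_div_nat (a : ℤ) (b : ℕ) : ⌊(a : ℚ) / (b : ℚ)⌋ = a / (b : ℤ) :=
  Rat.floor_intCast_div_natCast a b

lemma geo_sum_int (q : ℤ) (hq : 1 < q) (M : ℕ) :
    (q ^ M - 1) / (q - 1) = ∑ j ∈ Finset.range M, q ^ j := by
  have h : (∑ j ∈ Finset.range M, q ^ j) * (q - 1) = q ^ M - 1 := geom_sum_mul q M
  rw [← h, Int.mul_ediv_cancel _ (by omega)]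

lemma claimA (qm Q lp l : ℤ) (hqm : 1 ≤ qm) (hQ : 2 ≤ Q)
    (h1 : lp * (Q - 1) ≤ (l + 1) * Q - qm * Q) :
    lp ≤ qm * (lp / (qm * Q)) + l := by
  have hpos : 0 < qm * Q := by positivity
  set T := lp / (qm * Q) with hT
  have hdecomp : qm * Q * T + lp % (qm * Q) = lp := Int.mul_ediv_add_emod lp (qm * Q)
  have hR0 : 0 ≤ lp % (qm * Q) := Int.emod_nonneg _ hpos.ne'
  have hR1 : lp % (qm * Q) < qm * Q := Int.emod_lt_of_pos _ hpos
  have hX : Q * (lp - qm * T - l) ≤ Q - 1 := by nlinarith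
  nlinarith

lemma claimB (qm Q up u : ℤ) (hqm : 1 ≤ qm) (hQ : 2 ≤ Q)
    (h1 : u * Q ≤ (up - qm + 1) * (Q - 1)) :
    qm * ((qm * Q - qm + up) / (qm * Q)) + u ≤ up := by
  have hpos : 0 < qm * Q := by positivity
  set W := qm * Q - qm + up with hW
  set T := W / (qm * Q) with hT
  have hdecomp : qm * Q * T + W % (qm * Q) = W := Int.mul_ediv_add_emod W (qm * Q)
  have hR0 : 0 ≤ W % (qm * Q) := Int.emod_nonneg _ hpos.ne'
  have hR1 : W % (qm * Q) < qm * Q := Int.emod_lt_of_pos _ hpos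
  have hX : Q * (qm * T + u - up) ≤ Q - 1 := by nlinarith
  nlinarith



/-- lower bound of the index range for level `j` -/
def qrLo (m : ℕ) (ℓ' : ℤ) (j : ℕ) : ℤ := if j < m then 0 else ℓ'

/-- upper bound of the index range for level `j` -/
def qrHi (q m : ℕ) (u' : ℤ) (j : ℕ) : ℤ :=
  if j < m then (q : ℤ) ^ j - 1 else (q : ℤ) ^ j - (q : ℤ) ^ m + u'

/-- the index set of the linear representation -/
noncomputable def qrS (q M m : ℕ) (ℓ' u' : ℤ) : Finset (ℕ × ℤ) :=
  (Finset.range M).biUnion fun j =>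
    (Finset.Icc (qrLo m ℓ' j) (qrHi q m u' j)).map
      ⟨fun i => (j, i), fun a b h => by injection h⟩

lemma qrS_mem {q M m : ℕ} {ℓ' u' : ℤ} {j : ℕ} {i : ℤ} :
    (j, i) ∈ qrS q M m ℓ' u' ↔
      j < M ∧ qrLo m ℓ' j ≤ i ∧ i ≤ qrHi q m u' j := by
  simp only [qrS, Finset.mem_biUnion, Finset.mem_range, Finset.mem_map,
    Finset.mem_Icc, Function.Embedding.coeFn_mk]
  constructor
  · rintro ⟨a, ha, b, hb, h⟩
    obtain ⟨rfl, rfl⟩ : a = j ∧ b = i := by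
      constructor <;> [exact congrArg Prod.fst h; exact congrArg Prod.snd h]
    exact ⟨ha, hb⟩
  · rintro ⟨h1, h2⟩
    exact ⟨j, h1, i, h2, rfl⟩

lemma qrS_card (q M m : ℕ) (ℓ' u' : ℤ) (hq : 2 ≤ q) (hMm : m < M)
    (hℓ'0 : ℓ' ≤ 0) (hu'q : (q : ℤ) ^ m - 1 ≤ u') :
    ((qrS q M m ℓ' u').card : ℤ)
      = ((q : ℤ) ^ M - 1) / ((q : ℤ) - 1)
          + ((M : ℤ) - (m : ℤ)) * (u' - ℓ' - (q : ℤ) ^ m + 1) := by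
  have hcard : (qrS q M m ℓ' u').card
      = ∑ j ∈ Finset.range M, (qrHi q m u' j + 1 - qrLo m ℓ' j).toNat := by
    rw [qrS, Finset.card_biUnion]
    · refine Finset.sum_congr rfl fun j _ => ?_
      rw [Finset.card_map, Int.card_Icc]
    · intro a _ b _ hab
      simp only [Finset.disjoint_left, Finset.mem_map, Function.Embedding.coeFn_mk]
      rintro ⟨p1, p2⟩ ⟨i1, _, h1⟩ ⟨i2, _, h2⟩
      exact hab ((congrArg Prod.fst h1).trans (congrArg Prod.fst h2).symm)
  have hnonneg : ∀ j : ℕ, (0 : ℤ) ≤ qrHi q m u' j + 1 - qrLo m ℓ' j := by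
    intro j
    have hqj : (1 : ℤ) ≤ (q : ℤ) ^ j := one_le_pow₀ (by exact_mod_cast Nat.one_le_of_lt hq)
    unfold qrHi qrLo
    split <;> linarith
  have hcast : ((qrS q M m ℓ' u').card : ℤ)
      = ∑ j ∈ Finset.range M, (qrHi q m u' j + 1 - qrLo m ℓ' j) := by
    rw [hcard, Nat.cast_sum]
    exact Finset.sum_congr rfl fun j _ => Int.toNat_of_nonneg (hnonneg j)
  rw [hcast]
  have hsplit : ∀ j : ℕ, qrHi q m u' j + 1 - qrLo m ℓ' j
      = (q : ℤ) ^ j + (if j < m then 0 else u' - ℓ' - (q : ℤ) ^ m + 1) := by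
    intro j; unfold qrHi qrLo; split <;> ring
  rw [Finset.sum_congr rfl fun j _ => hsplit j, Finset.sum_add_distrib]
  rw [← geo_sum_int (q : ℤ) (by exact_mod_cast hq) M]
  congr 1
  rw [Finset.range_eq_Ico, ← Finset.sum_Ico_consecutive _ (Nat.zero_le m) hMm.le]
  have h1 : ∀ j ∈ Finset.Ico 0 m,
      (if j < m then (0:ℤ) else u' - ℓ' - (q : ℤ) ^ m + 1) = 0 := by
    intro j hj; rw [Finset.mem_Ico] at hj; simp [hj.2]
  have h2 : ∀ j ∈ Finset.Ico m M,
      (if j < m then (0:ℤ) else u' - ℓ' - (q : ℤ) ^ m + 1)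
        = u' - ℓ' - (q : ℤ) ^ m + 1 := by
    intro j hj; rw [Finset.mem_Ico] at hj; simp [Nat.not_lt.mpr hj.1]
  rw [Finset.sum_congr rfl h1, Finset.sum_congr rfl h2, Finset.sum_const,
    Finset.sum_const, smul_zero, zero_add, nsmul_eq_mul, Nat.card_Ico]
  have : ((M - m : ℕ) : ℤ) = (M : ℤ) - (m : ℤ) := by omega
  rw [this]

/-- enumeration of the index set -/
noncomputable def qrE (q M m : ℕ) (ℓ' u' : ℤ) :
    ↥(qrS q M m ℓ' u') ≃ Fin (qrS q M m ℓ' u').card :=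
  (qrS q M m ℓ' u').equivFin

/-- the index function -/
noncomputable def qrIdx (q M m : ℕ) (ℓ' u' : ℤ)
    (h₀ : ((0 : ℕ), (0 : ℤ)) ∈ qrS q M m ℓ' u') (p : ℕ × ℤ) :
    Fin (qrS q M m ℓ' u').card :=
  if h : p ∈ qrS q M m ℓ' u' then qrE q M m ℓ' u' ⟨p, h⟩
  else qrE q M m ℓ' u' ⟨((0 : ℕ), (0 : ℤ)), h₀⟩

lemma qrIdx_apply {q M m : ℕ} {ℓ' u' : ℤ}
    (h₀ : ((0 : ℕ), (0 : ℤ)) ∈ qrS q M m ℓ' u') {p : ℕ × ℤ}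
    (hp : p ∈ qrS q M m ℓ' u') :
    qrIdx q M m ℓ' u' h₀ p = qrE q M m ℓ' u' ⟨p, hp⟩ := dif_pos hp

/-- the vector-valued sequence -/
noncomputable def qrV (q M m : ℕ) (ℓ' u' : ℤ) (xZ : ℤ → ℂ) (n : ℕ)
    (d : Fin (qrS q M m ℓ' u').card) : ℂ :=
  xZ ((q : ℤ) ^ (((qrE q M m ℓ' u').symm d : ℕ × ℤ)).1 * n
    + (((qrE q M m ℓ' u').symm d : ℕ × ℤ)).2)

lemma qrV_idx {q M m : ℕ} {ℓ' u' : ℤ} (xZ : ℤ → ℂ)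
    (h₀ : ((0 : ℕ), (0 : ℤ)) ∈ qrS q M m ℓ' u') {p : ℕ × ℤ}
    (hp : p ∈ qrS q M m ℓ' u') (n : ℕ) :
    qrV q M m ℓ' u' xZ n (qrIdx q M m ℓ' u' h₀ p)
      = xZ ((q : ℤ) ^ p.1 * n + p.2) := by
  rw [qrIdx_apply h₀ hp, qrV, Equiv.symm_apply_apply]

/-- the matrices of the linear representation -/
noncomputable def qrA (q M m : ℕ) (ℓ' u' ℓ u : ℤ) (c : ℕ → ℤ → ℂ)
    (h₀ : ((0 : ℕ), (0 : ℤ)) ∈ qrS q M m ℓ' u') (r : ℕ) :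
    Matrix (Fin (qrS q M m ℓ' u').card) (Fin (qrS q M m ℓ' u').card) ℂ :=
  Matrix.of fun d d' =>
    let j := (((qrE q M m ℓ' u').symm d : ℕ × ℤ)).1
    let i := (((qrE q M m ℓ' u').symm d : ℕ × ℤ)).2
    if j + 1 < M then
      (if d' = qrIdx q M m ℓ' u' h₀ (j + 1, (q : ℤ) ^ j * r + i) then 1 else 0)
    else
      ∑ k ∈ Finset.Icc ℓ u,
        if d' = qrIdx q M m ℓ' u' h₀
            (m, (q : ℤ) ^ m * (((q : ℤ) ^ j * r + i) / (q : ℤ) ^ M) + k)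
        then c (((q : ℤ) ^ j * r + i) % (q : ℤ) ^ M).toNat k else 0

/-- membership is preserved by the shifting step, non-boundary case -/
lemma qrS_step {q M m : ℕ} {ℓ' u' : ℤ} (hq : 2 ≤ q)
    (hℓ'0 : ℓ' ≤ 0) (hu'q : (q : ℤ) ^ m - 1 ≤ u')
    {j : ℕ} {i : ℤ} (hp : (j, i) ∈ qrS q M m ℓ' u') (hjM : j + 1 < M)
    {r : ℕ} (hr : r < q) :
    (j + 1, (q : ℤ) ^ j * r + i) ∈ qrS q M m ℓ' u' := by
  rw [qrS_mem] at hp ⊢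
  obtain ⟨hjM', hlo, hhi⟩ := hp
  have hqj : (0 : ℤ) < (q : ℤ) ^ j := by positivity
  have hr' : (r : ℤ) ≤ (q : ℤ) - 1 := by
    have : (r : ℤ) < (q : ℤ) := by exact_mod_cast hr
    omega
  have hr0 : (0 : ℤ) ≤ (r : ℤ) := Int.natCast_nonneg r
  have hrij : (0 : ℤ) ≤ (q : ℤ) ^ j * r := by positivity
  have hrub : (q : ℤ) ^ j * r ≤ (q : ℤ) ^ j * ((q : ℤ) - 1) :=
    mul_le_mul_of_nonneg_left hr' hqj.le
  have hpow : (q : ℤ) ^ j * (q : ℤ) = (q : ℤ) ^ (j + 1) := (pow_succ _ _).symm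
  refine ⟨hjM, ?_, ?_⟩
  · unfold qrLo at hlo ⊢
    by_cases hjm : j + 1 < m
    · rw [if_pos hjm]
      rw [if_pos (by omega)] at hlo
      linarith
    · rw [if_neg hjm]
      by_cases hjm' : j < m
      · rw [if_pos hjm'] at hlo; linarith
      · rw [if_neg hjm'] at hlo; linarith
  · unfold qrHi at hhi ⊢
    by_cases hjm : j + 1 < m
    · rw [if_pos hjm]
      rw [if_pos (by omega)] at hhi
      nlinarith
    · rw [if_neg hjm]
      by_cases hjm' : j < m
      · -- j < m, j + 1 = m (since ¬ j+1 < m)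
        have hjm2 : j + 1 = m := by omega
        rw [if_pos hjm'] at hhi
        have : (q : ℤ) ^ j * r + i ≤ (q : ℤ) ^ (j + 1) - 1 := by nlinarith
        have h2 : (q : ℤ) ^ (j + 1) = (q : ℤ) ^ m := by rw [hjm2]
        linarith [hu'q, this, h2 ▸ this]
      · rw [if_neg hjm'] at hhi
        nlinarith

/-- membership of the target indices in the boundary case -/
lemma qrS_base {q M m : ℕ} {ℓ u ℓ' u' : ℤ} (hMm : m < M)
    (hq : 2 ≤ q)
    (hA : ℓ' ≤ (q : ℤ) ^ m * (ℓ' / (q : ℤ) ^ M) + ℓ)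
    (hB : (q : ℤ) ^ m * (((q : ℤ) ^ M - (q : ℤ) ^ m + u') / (q : ℤ) ^ M) + u ≤ u')
    {s' : ℤ} (hs1 : ℓ' ≤ s') (hs2 : s' ≤ (q : ℤ) ^ M - (q : ℤ) ^ m + u')
    {k : ℤ} (hk1 : ℓ ≤ k) (hk2 : k ≤ u) :
    (m, (q : ℤ) ^ m * (s' / (q : ℤ) ^ M) + k) ∈ qrS q M m ℓ' u' := by
  have hQM : (0 : ℤ) < (q : ℤ) ^ M := by positivity
  have hQm : (0 : ℤ) ≤ (q : ℤ) ^ m := by positivity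
  have hT1 : ℓ' / (q : ℤ) ^ M ≤ s' / (q : ℤ) ^ M := Int.ediv_le_ediv hQM hs1
  have hT2 : s' / (q : ℤ) ^ M ≤ ((q : ℤ) ^ M - (q : ℤ) ^ m + u') / (q : ℤ) ^ M :=
    Int.ediv_le_ediv hQM hs2
  have h1 : (q : ℤ) ^ m * (ℓ' / (q : ℤ) ^ M) ≤ (q : ℤ) ^ m * (s' / (q : ℤ) ^ M) :=
    mul_le_mul_of_nonneg_left hT1 hQm
  have h2 : (q : ℤ) ^ m * (s' / (q : ℤ) ^ M)
      ≤ (q : ℤ) ^ m * (((q : ℤ) ^ M - (q : ℤ) ^ m + u') / (q : ℤ) ^ M) :=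
    mul_le_mul_of_nonneg_left hT2 hQm
  rw [qrS_mem]
  refine ⟨hMm, ?_, ?_⟩
  · unfold qrLo; rw [if_neg (lt_irrefl m)]; linarith
  · unfold qrHi; rw [if_neg (lt_irrefl m)]; linarith

lemma qr_step (q M m : ℕ) (ℓ u ℓ' u' : ℤ) (n₀ : ℕ)
    (hq : 2 ≤ q) (hMm : m < M)
    (hℓ'0 : ℓ' ≤ 0) (hu'q : (q : ℤ) ^ m - 1 ≤ u')
    (hA : ℓ' ≤ (q : ℤ) ^ m * (ℓ' / (q : ℤ) ^ M) + ℓ)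
    (hB : (q : ℤ) ^ m * (((q : ℤ) ^ M - (q : ℤ) ^ m + u') / (q : ℤ) ^ M) + u ≤ u')
    (x : ℕ → ℂ) (c : ℕ → ℤ → ℂ) (xZ : ℤ → ℂ)
    (hxZ : ∀ k : ℤ, xZ k = if 0 ≤ k then x k.toNat else 0)
    (hrec : ∀ n : ℕ, n₀ ≤ n → ∀ s : ℕ, s < q ^ M →
      x (q ^ M * n + s) = ∑ k ∈ Finset.Icc ℓ u, c s k * xZ ((q : ℤ) ^ m * n + k))
    (h₀ : ((0 : ℕ), (0 : ℤ)) ∈ qrS q M m ℓ' u')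
    (r : ℕ) (hr : r < q) (n : ℕ)
    (hn : (n₀ : ℤ) - ℓ' / (q : ℤ) ^ M ≤ (n : ℤ)) :
    qrV q M m ℓ' u' xZ (q * n + r)
      = qrA q M m ℓ' u' ℓ u c h₀ r *ᵥ qrV q M m ℓ' u' xZ n := by
  have hxZnat : ∀ k : ℕ, xZ k = x k := by
    intro k; rw [hxZ, if_pos (Int.natCast_nonneg k), Int.toNat_natCast]
  have hQM : (0 : ℤ) < (q : ℤ) ^ M := by positivity
  funext d
  obtain ⟨⟨⟨j, i⟩, hp⟩, rfl⟩ : ∃ p : ↥(qrS q M m ℓ' u'), qrE q M m ℓ' u' p = d :=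
    ⟨(qrE q M m ℓ' u').symm d, Equiv.apply_symm_apply _ _⟩
  have hsymm : (((qrE q M m ℓ' u').symm ((qrE q M m ℓ' u') ⟨(j, i), hp⟩) : ℕ × ℤ)) = (j, i) := by
    rw [Equiv.symm_apply_apply]
  have hLHS : qrV q M m ℓ' u' xZ (q * n + r) ((qrE q M m ℓ' u') ⟨(j, i), hp⟩)
      = xZ ((q : ℤ) ^ j * ((q * n + r : ℕ) : ℤ) + i) := by
    rw [qrV, hsymm]
  rw [hLHS, Matrix.mulVec, dotProduct]
  have hAentry : ∀ d' : Fin (qrS q M m ℓ' u').card,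
      qrA q M m ℓ' u' ℓ u c h₀ r ((qrE q M m ℓ' u') ⟨(j, i), hp⟩) d'
        = if j + 1 < M then
            (if d' = qrIdx q M m ℓ' u' h₀ (j + 1, (q : ℤ) ^ j * r + i) then 1 else 0)
          else
            ∑ k ∈ Finset.Icc ℓ u,
              if d' = qrIdx q M m ℓ' u' h₀
                  (m, (q : ℤ) ^ m * (((q : ℤ) ^ j * r + i) / (q : ℤ) ^ M) + k)
              then c (((q : ℤ) ^ j * r + i) % (q : ℤ) ^ M).toNat k else 0 := by
    intro d'; rw [qrA, Matrix.of_apply, hsymm]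
  have hjMlt : j < M := (qrS_mem.mp hp).1
  by_cases hjM : j + 1 < M
  · -- non-boundary case
    have hmem := qrS_step hq hℓ'0 hu'q hp hjM hr
    calc xZ ((q : ℤ) ^ j * ((q * n + r : ℕ) : ℤ) + i)
        = xZ ((q : ℤ) ^ (j + 1) * (n : ℤ) + ((q : ℤ) ^ j * r + i)) := by
          congr 1; push_cast; ring
      _ = qrV q M m ℓ' u' xZ n (qrIdx q M m ℓ' u' h₀ (j + 1, (q : ℤ) ^ j * r + i)) := by
          rw [qrV_idx xZ h₀ hmem]
      _ = ∑ d', qrA q M m ℓ' u' ℓ u c h₀ r ((qrE q M m ℓ' u') ⟨(j, i), hp⟩) d'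
            * qrV q M m ℓ' u' xZ n d' := by
          rw [Finset.sum_congr rfl fun d' _ => by rw [hAentry d', if_pos hjM]]
          rw [Finset.sum_congr rfl fun d' _ => (by rw [ite_mul] :
            (if d' = qrIdx q M m ℓ' u' h₀ (j + 1, (q : ℤ) ^ j * r + i) then (1:ℂ) else 0)
              * qrV q M m ℓ' u' xZ n d'
            = if d' = qrIdx q M m ℓ' u' h₀ (j + 1, (q : ℤ) ^ j * r + i)
              then 1 * qrV q M m ℓ' u' xZ n d' else 0 * qrV q M m ℓ' u' xZ n d')]
          simp only [one_mul, zero_mul, Finset.sum_ite_eq', Finset.mem_univ, if_true]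
  · -- boundary case: j + 1 = M
    have hjM1 : j + 1 = M := by omega
    have hmj : m ≤ j := by omega
    set s' : ℤ := (q : ℤ) ^ j * r + i with hs'
    set T : ℤ := s' / (q : ℤ) ^ M with hT
    set R : ℤ := s' % (q : ℤ) ^ M with hR
    have hdec : (q : ℤ) ^ M * T + R = s' := Int.mul_ediv_add_emod s' _
    have hR0 : 0 ≤ R := Int.emod_nonneg s' hQM.ne'
    have hR1 : R < (q : ℤ) ^ M := Int.emod_lt_of_pos s' hQM
    -- bounds on s'
    obtain ⟨_, hlo, hhi⟩ := qrS_mem.mp hp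
    rw [qrLo, if_neg (by omega)] at hlo
    rw [qrHi, if_neg (by omega)] at hhi
    have hqj : (0 : ℤ) < (q : ℤ) ^ j := by positivity
    have hr' : (r : ℤ) ≤ (q : ℤ) - 1 := by
      have : (r : ℤ) < (q : ℤ) := by exact_mod_cast hr
      omega
    have hpow : (q : ℤ) ^ j * (q : ℤ) = (q : ℤ) ^ M := by
      rw [← hjM1, pow_succ]
    have hs1 : ℓ' ≤ s' := by
      have : (0 : ℤ) ≤ (q : ℤ) ^ j * r := by positivity
      rw [hs']; linarith
    have hs2 : s' ≤ (q : ℤ) ^ M - (q : ℤ) ^ m + u' := by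
      have h1 : (q : ℤ) ^ j * r ≤ (q : ℤ) ^ j * ((q : ℤ) - 1) :=
        mul_le_mul_of_nonneg_left hr' hqj.le
      rw [hs']; nlinarith
    have hT1 : ℓ' / (q : ℤ) ^ M ≤ T := Int.ediv_le_ediv hQM hs1
    -- n + T is a valid argument
    have hnT0 : (0 : ℤ) ≤ (n : ℤ) + T := by
      have : (0 : ℤ) ≤ (n₀ : ℤ) := Int.natCast_nonneg n₀
      linarith
    set N : ℕ := ((n : ℤ) + T).toNat with hN
    have hNcast : (N : ℤ) = (n : ℤ) + T := Int.toNat_of_nonneg hnT0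
    have hNn₀ : n₀ ≤ N := by
      have : (n₀ : ℤ) ≤ (N : ℤ) := by rw [hNcast]; linarith
      exact_mod_cast this
    have hRcast : ((R.toNat : ℕ) : ℤ) = R := Int.toNat_of_nonneg hR0
    have hRlt : R.toNat < q ^ M := by
      have : ((R.toNat : ℕ) : ℤ) < ((q ^ M : ℕ) : ℤ) := by rw [hRcast]; push_cast; exact hR1
      exact_mod_cast this
    -- LHS equals x (q^M N + R.toNat)
    have hLHS2 : xZ ((q : ℤ) ^ j * ((q * n + r : ℕ) : ℤ) + i)
        = x (q ^ M * N + R.toNat) := by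
      rw [← hxZnat]
      congr 1
      push_cast
      rw [hNcast, hRcast]
      linear_combination (n : ℤ) * hpow - hdec - hs'
    rw [hLHS2, hrec N hNn₀ R.toNat hRlt]
    -- now massage the RHS
    have hmemk : ∀ k : ℤ, k ∈ Finset.Icc ℓ u →
        (m, (q : ℤ) ^ m * T + k) ∈ qrS q M m ℓ' u' := by
      intro k hk
      rw [Finset.mem_Icc] at hk
      exact qrS_base hMm hq hA hB hs1 hs2 hk.1 hk.2
    have hRHS : ∑ d', qrA q M m ℓ' u' ℓ u c h₀ r ((qrE q M m ℓ' u') ⟨(j, i), hp⟩) d'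
          * qrV q M m ℓ' u' xZ n d'
        = ∑ k ∈ Finset.Icc ℓ u, c R.toNat k
            * qrV q M m ℓ' u' xZ n (qrIdx q M m ℓ' u' h₀ (m, (q : ℤ) ^ m * T + k)) := by
      rw [Finset.sum_congr rfl fun d' _ => by rw [hAentry d', if_neg hjM]]
      rw [Finset.sum_congr rfl fun d' _ => (Finset.sum_mul _ _ _)]
      rw [Finset.sum_comm]
      refine Finset.sum_congr rfl fun k _ => ?_
      rw [Finset.sum_congr rfl fun d' _ => (by rw [ite_mul] :
        (if d' = qrIdx q M m ℓ' u' h₀ (m, (q : ℤ) ^ m * T + k)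
          then c (((q : ℤ) ^ j * r + i) % (q : ℤ) ^ M).toNat k else 0)
          * qrV q M m ℓ' u' xZ n d'
        = if d' = qrIdx q M m ℓ' u' h₀ (m, (q : ℤ) ^ m * T + k)
          then c (((q : ℤ) ^ j * r + i) % (q : ℤ) ^ M).toNat k * qrV q M m ℓ' u' xZ n d'
          else 0 * qrV q M m ℓ' u' xZ n d')]
      simp only [zero_mul, Finset.sum_ite_eq', Finset.mem_univ, if_true]
      rfl
    rw [hRHS]
    refine Finset.sum_congr rfl fun k hk => ?_
    rw [qrV_idx xZ h₀ (hmemk k hk)]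
    congr 2
    rw [hNcast]
    ring

/-- **Theorem (linear representation of `q`-recursive sequences, general case).**

Let `q ≥ 2`, `M > m ≥ 0`, `ℓ ≤ u` and `n₀ ≥ max{−ℓ/q^m, 0}` be integers and let
`x : ℕ → ℂ` be `q`-recursive with offset `n₀`, exponents `M` and `m`, index shift
bounds `ℓ` and `u` and coefficients `c`.  With `ℓ'`, `u'` and `n₁` as defined below,
`x` is `q`-regular with offset `n₁`: there is a `q`-linear representation with
offset `n₁` of dimension `D = (q^M − 1)/(q − 1) + (M − m)(u' − ℓ' − q^m + 1)`
whose components are exactly the sequences `x ∘ (n ↦ q^j n + i)` for `0 ≤ j < m`,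
`0 ≤ i < q^j`, and for `m ≤ j < M`, `ℓ' ≤ i ≤ q^j − q^m + u'` (with `x` extended by
`0` to negative arguments); in particular `x` itself occurs as a component. -/
theorem q_recursive_is_q_regular_with_offset
    (q M m : ℕ) (ℓ u : ℤ) (n₀ : ℕ)
    (hq : 2 ≤ q) (hMm : m < M) (hℓu : ℓ ≤ u)
    (hn₀ : (-(ℓ : ℚ)) / (q : ℚ) ^ m ≤ (n₀ : ℚ))
    (x : ℕ → ℂ) (c : ℕ → ℤ → ℂ)
    (xZ : ℤ → ℂ) (hxZ : ∀ k : ℤ, xZ k = if 0 ≤ k then x k.toNat else 0)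
    (hrec : ∀ n : ℕ, n₀ ≤ n → ∀ s : ℕ, s < q ^ M →
      x (q ^ M * n + s) = ∑ k ∈ Finset.Icc ℓ u, c s k * xZ ((q : ℤ) ^ m * n + k))
    (ℓ' u' : ℤ)
    (hℓ' : ℓ' = if ℓ < 0 then
      ⌊(((ℓ : ℚ) + 1) * (q : ℚ) ^ (M - m) - (q : ℚ) ^ M) / ((q : ℚ) ^ (M - m) - 1)⌋
      else 0)
    (hu' : u' = (q : ℤ) ^ m - 1 + (if 0 < u then
      ⌈((u : ℚ) * (q : ℚ) ^ (M - m)) / ((q : ℚ) ^ (M - m) - 1)⌉ else 0))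
    (n₁ : ℤ) (hn₁ : n₁ = (n₀ : ℤ) - ⌊(ℓ' : ℚ) / (q : ℚ) ^ M⌋) :
    ∃ (D : ℕ) (v : ℕ → Fin D → ℂ) (A : Fin q → Matrix (Fin D) (Fin D) ℂ)
      (idx : ℕ × ℤ → Fin D),
      -- the dimension of the linear representation
      (D : ℤ) = ((q : ℤ) ^ M - 1) / ((q : ℤ) - 1)
          + ((M : ℤ) - (m : ℤ)) * (u' - ℓ' - (q : ℤ) ^ m + 1) ∧
      -- the recurrence v(qn + r) = A_r v(n) for n ≥ n₁
      (∀ r : Fin q, ∀ n : ℕ, n₁ ≤ (n : ℤ) →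
        v (q * n + (r : ℕ)) = A r *ᵥ v n) ∧
      -- the components of v are exactly the prescribed shifted sequences
      Set.InjOn idx {p : ℕ × ℤ |
        (p.1 < m ∧ 0 ≤ p.2 ∧ p.2 < (q : ℤ) ^ p.1) ∨
        (m ≤ p.1 ∧ p.1 < M ∧ ℓ' ≤ p.2 ∧ p.2 ≤ (q : ℤ) ^ p.1 - (q : ℤ) ^ m + u')} ∧
      (∀ j : ℕ, ∀ i : ℤ,
        ((j < m ∧ 0 ≤ i ∧ i < (q : ℤ) ^ j) ∨
          (m ≤ j ∧ j < M ∧ ℓ' ≤ i ∧ i ≤ (q : ℤ) ^ j - (q : ℤ) ^ m + u')) →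
        ∀ n : ℕ, v n (idx (j, i)) = xZ ((q : ℤ) ^ j * n + i)) ∧
      -- in particular, x itself is a component of v
      (∃ i₀ : Fin D, ∀ n : ℕ, v n i₀ = x n) := by
  classical
  have hq1 : (1 : ℤ) < (q : ℤ) := by exact_mod_cast Nat.lt_of_lt_of_le Nat.one_lt_two hq
  have hQi2 : (2 : ℤ) ≤ (q : ℤ) ^ (M - m) :=
    le_trans (by exact_mod_cast hq) (le_self_pow₀ (by linarith) (by omega))
  have hQm1 : (1 : ℤ) ≤ (q : ℤ) ^ m := one_le_pow₀ hq1.le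
  have hQMeq : (q : ℤ) ^ M = (q : ℤ) ^ m * (q : ℤ) ^ (M - m) := by
    rw [← pow_add]; congr 1; omega
  have hQiℚ : (2 : ℚ) ≤ (q : ℚ) ^ (M - m) := by exact_mod_cast hQi2
  have hQiℚpos : (0 : ℚ) < (q : ℚ) ^ (M - m) - 1 := by linarith
  -- ℓ' is nonpositive
  have hℓ'0 : ℓ' ≤ 0 := by
    rw [hℓ']; split_ifs with h
    · apply Int.floor_nonpos
      apply div_nonpos_of_nonpos_of_nonneg
      · have h1 : ((ℓ : ℚ) + 1) ≤ 0 := by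
          have : (ℓ : ℚ) < 0 := by exact_mod_cast h
          have : (ℓ : ℚ) ≤ -1 := by exact_mod_cast Int.le_sub_one_of_lt h
          linarith
        have h2 : (0 : ℚ) ≤ (q : ℚ) ^ (M - m) := by positivity
        have h3 : (0 : ℚ) ≤ (q : ℚ) ^ M := by positivity
        nlinarith
      · linarith
    · exact le_refl 0
  -- u' is at least q^m - 1
  have hu'q : (q : ℤ) ^ m - 1 ≤ u' := by
    rw [hu']; split_ifs with h
    · have h1 : (0 : ℤ) ≤ ⌈((u : ℚ) * (q : ℚ) ^ (M - m)) / ((q : ℚ) ^ (M - m) - 1)⌉ := by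
        apply Int.ceil_nonneg
        apply div_nonneg _ hQiℚpos.le
        have : (0 : ℚ) ≤ (u : ℚ) := by exact_mod_cast h.le
        positivity
      linarith
    · simp
  -- claim A in integer form
  have hA : ℓ' ≤ (q : ℤ) ^ m * (ℓ' / (q : ℤ) ^ M) + ℓ := by
    by_cases h : ℓ < 0
    · have hfl : (ℓ' : ℚ) ≤ (((ℓ : ℚ) + 1) * (q : ℚ) ^ (M - m) - (q : ℚ) ^ M)
          / ((q : ℚ) ^ (M - m) - 1) := by
        rw [hℓ', if_pos h]; exact_mod_cast Int.floor_le _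
      have h1ℚ : (ℓ' : ℚ) * ((q : ℚ) ^ (M - m) - 1)
          ≤ ((ℓ : ℚ) + 1) * (q : ℚ) ^ (M - m) - (q : ℚ) ^ M :=
        (le_div_iff₀ hQiℚpos).mp hfl
      have h1 : ℓ' * ((q : ℤ) ^ (M - m) - 1)
          ≤ (ℓ + 1) * (q : ℤ) ^ (M - m) - (q : ℤ) ^ M := by exact_mod_cast h1ℚ
      rw [hQMeq] at h1 ⊢
      exact claimA _ _ _ _ hQm1 hQi2 h1
    · have hl0 : ℓ' = 0 := by rw [hℓ', if_neg h]
      push_neg at h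
      rw [hl0, Int.zero_ediv, mul_zero, zero_add]
      exact h
  -- claim B in integer form
  have hB : (q : ℤ) ^ m * (((q : ℤ) ^ M - (q : ℤ) ^ m + u') / (q : ℤ) ^ M) + u ≤ u' := by
    have h1 : u * (q : ℤ) ^ (M - m) ≤ (u' - (q : ℤ) ^ m + 1) * ((q : ℤ) ^ (M - m) - 1) := by
      by_cases h : 0 < u
      · have hceq : u' - (q : ℤ) ^ m + 1
            = ⌈((u : ℚ) * (q : ℚ) ^ (M - m)) / ((q : ℚ) ^ (M - m) - 1)⌉ := by
          rw [hu', if_pos h]; ring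
        have hcl : ((u : ℚ) * (q : ℚ) ^ (M - m)) / ((q : ℚ) ^ (M - m) - 1)
            ≤ ((⌈((u : ℚ) * (q : ℚ) ^ (M - m)) / ((q : ℚ) ^ (M - m) - 1)⌉ : ℤ) : ℚ) :=
          Int.le_ceil _
        have h2ℚ : (u : ℚ) * (q : ℚ) ^ (M - m)
            ≤ ((⌈((u : ℚ) * (q : ℚ) ^ (M - m)) / ((q : ℚ) ^ (M - m) - 1)⌉ : ℤ) : ℚ)
              * ((q : ℚ) ^ (M - m) - 1) :=
          (div_le_iff₀ hQiℚpos).mp hcl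
        rw [hceq]
        exact_mod_cast h2ℚ
      · have hceq : u' - (q : ℤ) ^ m + 1 = 0 := by rw [hu', if_neg h]; ring
        rw [hceq, zero_mul]
        push_neg at h
        have : (0 : ℤ) ≤ (q : ℤ) ^ (M - m) := by positivity
        exact mul_nonpos_of_nonpos_of_nonneg h this
    rw [hQMeq]
    have := claimB ((q : ℤ) ^ m) ((q : ℤ) ^ (M - m)) u' u hQm1 hQi2 h1
    linarith [this]
  -- the point (0,0) lies in the index set
  have h₀ : ((0 : ℕ), (0 : ℤ)) ∈ qrS q M m ℓ' u' := by
    rw [qrS_mem]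
    refine ⟨by omega, ?_, ?_⟩
    · unfold qrLo; split_ifs <;> simp [hℓ'0]
    · unfold qrHi; split_ifs <;> simp <;> linarith
  -- predicate equivalence
  have hPmem : ∀ (j : ℕ) (i : ℤ),
      ((j < m ∧ 0 ≤ i ∧ i < (q : ℤ) ^ j) ∨
        (m ≤ j ∧ j < M ∧ ℓ' ≤ i ∧ i ≤ (q : ℤ) ^ j - (q : ℤ) ^ m + u'))
      ↔ (j, i) ∈ qrS q M m ℓ' u' := by
    intro j i
    rw [qrS_mem]; unfold qrLo qrHi
    by_cases hjm : j < m
    · simp only [if_pos hjm]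
      constructor
      · rintro (⟨-, h2, h3⟩ | ⟨h1, -⟩)
        · exact ⟨hjm.trans hMm, h2, by linarith⟩
        · omega
      · rintro ⟨hjM, h2, h3⟩
        exact Or.inl ⟨hjm, h2, by linarith⟩
    · simp only [if_neg hjm]
      constructor
      · rintro (⟨h1, -⟩ | ⟨-, h2, h3, h4⟩)
        · omega
        · exact ⟨h2, h3, h4⟩
      · rintro ⟨h1, h2, h3⟩
        exact Or.inr ⟨not_lt.mp hjm, h1, h2, h3⟩
  -- floor of ℓ'/q^M as integer division
  have hfloor : ⌊(ℓ' : ℚ) / (q : ℚ) ^ M⌋ = ℓ' / (q : ℤ) ^ M := by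
    have h1 : ((q : ℚ)) ^ M = ((q ^ M : ℕ) : ℚ) := by push_cast; ring
    rw [h1, floor_int_div_nat ℓ' (q ^ M)]
    congr 1
  refine ⟨(qrS q M m ℓ' u').card, qrV q M m ℓ' u' xZ,
    fun r => qrA q M m ℓ' u' ℓ u c h₀ (r : ℕ), qrIdx q M m ℓ' u' h₀,
    qrS_card q M m ℓ' u' hq hMm hℓ'0 hu'q, ?_, ?_, ?_, ?_⟩
  · -- the recurrence
    intro r n hn
    apply qr_step q M m ℓ u ℓ' u' n₀ hq hMm hℓ'0 hu'q hA hB x c xZ hxZ hrec h₀ (r : ℕ) r.isLt n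
    rw [hn₁, hfloor] at hn
    linarith
  · -- injectivity
    rintro ⟨j1, i1⟩ h1 ⟨j2, i2⟩ h2 heq
    simp only [Set.mem_setOf_eq] at h1 h2
    have m1 : (j1, i1) ∈ qrS q M m ℓ' u' := (hPmem j1 i1).mp h1
    have m2 : (j2, i2) ∈ qrS q M m ℓ' u' := (hPmem j2 i2).mp h2
    rw [qrIdx_apply h₀ m1, qrIdx_apply h₀ m2] at heq
    have := (qrE q M m ℓ' u').injective heq
    exact congrArg Subtype.val this
  · -- the components
    intro j i hpred n
    exact qrV_idx xZ h₀ ((hPmem j i).mp hpred) n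
  · -- x itself is a component
    refine ⟨qrIdx q M m ℓ' u' h₀ ((0 : ℕ), (0 : ℤ)), fun n => ?_⟩
    rw [qrV_idx xZ h₀ h₀]
    simp only [pow_zero, one_mul, add_zero]
    rw [hxZ, if_pos (Int.natCast_nonneg n), Int.toNat_natCast]
end

section
/- Let q ≥ 2 and n₀ ≥ 0 be integers, let x : ℕ → ℂ, let D ∈ ℕ, let v : ℕ → ℂ^D have first component x, and let A₀, …, A_{q−1} ∈ ℂ^{D×D} satisfy v(qn + r) = A_r·v(n) for all 0 ≤ r < q and all n ≥ n₀. For 0 ≤ k < n₀ define δ_k : ℕ → ℂ by δ_k(n) = [n = k], set w_{r,k} := v(qk + r) − A_r·v(k) ∈ ℂ^D, let W_r be the D×n₀ matrix with columns w_{r,0}, …, w_{r,n₀−1}, and let J_r ∈ {0,1}^{n₀×n₀} have entries (J_r)_{k,j} = [jq = k − r] for 0 ≤ k, j < n₀. Define ṽ : ℕ → ℂ^{D+n₀} as v followed by δ₀, …, δ_{n₀−1}, and the block matrices Ã_r := [[A_r, W_r],[0, J_r]]. Then ṽ(qn + r) = Ã_r·ṽ(n) holds for all 0 ≤ r < q and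 all n ≥ 0, the first component of ṽ is x (so x is q-regular), and each J_r is a lower triangular matrix whose diagonal is ([r = 0], 0, …, 0). -/
open scoped BigOperators Matrix

/-- **Theorem (offset correction).**

Let `q ≥ 2` and `n₀ ≥ 0` be integers and let `(A₀, …, A_{q−1}, v)` be a `q`-linear
representation with offset `n₀` of a sequence `x`.  With `δ_k(n) = [n = k]`,
`w_{r,k} = v(qk + r) − A_r v(k)`, `W_r` the matrix with columns `w_{r,k}`,
`J_r` the `n₀ × n₀` matrix with entries `[jq = k − r]`, `ṽ = (v, δ₀, …, δ_{n₀−1})ᵀ`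
and `Ã_r = [[A_r, W_r], [0, J_r]]`, the tuple `(Ã₀, …, Ã_{q−1}, ṽ)` is a `q`-linear
representation (with offset `0`) of `x`; moreover each `J_r` is lower triangular with
diagonal `([r = 0], 0, …, 0)`. -/
theorem offset_correction
    (q n₀ D : ℕ) (hq : 2 ≤ q) (hD : 0 < D)
    (x : ℕ → ℂ) (v : ℕ → Fin D → ℂ)
    (A : Fin q → Matrix (Fin D) (Fin D) ℂ)
    (hfirst : ∀ n : ℕ, v n ⟨0, hD⟩ = x n)
    (hrec : ∀ r : Fin q, ∀ n : ℕ, n₀ ≤ n → v (q * n + (r : ℕ)) = A r *ᵥ v n)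
    (δ : Fin n₀ → ℕ → ℂ)
    (hδ : ∀ (k : Fin n₀) (n : ℕ), δ k n = if n = (k : ℕ) then 1 else 0)
    (w : Fin q → Fin n₀ → Fin D → ℂ)
    (hw : ∀ (r : Fin q) (k : Fin n₀),
      w r k = v (q * (k : ℕ) + (r : ℕ)) - A r *ᵥ v (k : ℕ))
    (W : Fin q → Matrix (Fin D) (Fin n₀) ℂ)
    (hW : ∀ (r : Fin q) (i : Fin D) (k : Fin n₀), W r i k = w r k i)
    (J : Fin q → Matrix (Fin n₀) (Fin n₀) ℂ)
    (hJ : ∀ (r : Fin q) (k j : Fin n₀),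
      J r k j = if (j : ℤ) * (q : ℤ) = (k : ℤ) - (r : ℤ) then 1 else 0)
    (vt : ℕ → (Fin D ⊕ Fin n₀) → ℂ)
    (hvt : ∀ n : ℕ, vt n = Sum.elim (v n) (fun k => δ k n))
    (At : Fin q → Matrix (Fin D ⊕ Fin n₀) (Fin D ⊕ Fin n₀) ℂ)
    (hAt : ∀ r : Fin q, At r = Matrix.fromBlocks (A r) (W r) 0 (J r)) :
    -- ṽ(qn + r) = Ã_r ṽ(n) for all n ≥ 0
    (∀ r : Fin q, ∀ n : ℕ, vt (q * n + (r : ℕ)) = At r *ᵥ vt n) ∧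
    -- the first component of ṽ is x, so x is q-regular
    (∀ n : ℕ, vt n (Sum.inl ⟨0, hD⟩) = x n) ∧
    -- each J_r is lower triangular ...
    (∀ r : Fin q, ∀ k j : Fin n₀, k < j → J r k j = 0) ∧
    -- ... with diagonal ([r = 0], 0, …, 0)
    (∀ r : Fin q, ∀ k : Fin n₀,
      J r k k = if (k : ℕ) = 0 then (if (r : ℕ) = 0 then 1 else 0) else 0) := by
  refine ⟨?_, ?_, ?_, ?_⟩
  · intro r n
    have hrbound : (r : ℕ) < q := r.isLt
    rw [hvt, hvt, hAt, Matrix.fromBlocks_mulVec]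
    simp only [Matrix.zero_mulVec, zero_add, Sum.elim_comp_inl, Sum.elim_comp_inr]
    rcases lt_or_ge n n₀ with hn | hn
    · -- n < n₀
      set k₀ : Fin n₀ := ⟨n, hn⟩ with hk₀
      have hδn : (fun k : Fin n₀ => δ k n) = Pi.single k₀ 1 := by
        funext k
        rw [hδ]
        rcases eq_or_ne k k₀ with h | h
        · rw [if_pos (by rw [h, hk₀]), h, Pi.single_eq_same]
        · rw [Pi.single_eq_of_ne h, if_neg]
          intro hc
          exact h (Fin.ext (by simpa [hk₀] using hc.symm))
      rw [hδn]
      funext i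
      rcases i with i | k
      · -- first block
        simp only [Sum.elim_inl, Pi.add_apply]
        rw [Matrix.mulVec_single]
        have h1 : (MulOpposite.op (1 : ℂ) • (W r).col k₀) i = w r k₀ i := by simp [hW]
        rw [h1, hw]
        simp only [Pi.sub_apply, hk₀]
        ring
      · -- second block
        simp only [Sum.elim_inr, Pi.add_apply]
        rw [Matrix.mulVec_single]
        have h1 : (MulOpposite.op (1 : ℂ) • (J r).col k₀) k = J r k k₀ := by simp
        rw [h1, hδ, hJ]
        have key : q * n + (r : ℕ) = (k : ℕ) ↔
            ((k₀ : ℕ) : ℤ) * (q : ℤ) = ((k : ℕ) : ℤ) - ((r : ℕ) : ℤ) := by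
          simp only [hk₀]
          constructor
          · intro hh
            have h2 := congrArg (fun m : ℕ => (m : ℤ)) hh
            push_cast at h2
            linarith [mul_comm (n : ℤ) (q : ℤ)]
          · intro hh
            have h2 : ((q * n + (r : ℕ) : ℕ) : ℤ) = ((k : ℕ) : ℤ) := by
              push_cast
              linarith [mul_comm (n : ℤ) (q : ℤ)]
            exact_mod_cast h2
        rcases eq_or_ne (q * n + (r : ℕ)) (k : ℕ) with h | h
        · rw [if_pos h, if_pos (key.mp h)]
        · rw [if_neg h, if_neg (fun hc => h (key.mpr hc))]
    · -- n ≥ n₀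
      have hδz : ∀ k : Fin n₀, δ k n = 0 := by
        intro k
        rw [hδ, if_neg]
        have := k.isLt
        omega
      have hδz2 : ∀ k : Fin n₀, δ k (q * n + (r : ℕ)) = 0 := by
        intro k
        rw [hδ, if_neg]
        have h1 := k.isLt
        have h2 : n ≤ q * n := Nat.le_mul_of_pos_left n (by omega)
        omega
      funext i
      rcases i with i | k
      · simp only [Sum.elim_inl, Pi.add_apply]
        have h1 : (W r *ᵥ fun k => δ k n) i = 0 := by
          simp [Matrix.mulVec, dotProduct, hδz]
        rw [h1, add_zero, hrec r n hn]
      · simp only [Sum.elim_inr, Pi.add_apply, hδz2]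
        have h1 : (J r *ᵥ fun k => δ k n) k = 0 := by
          simp [Matrix.mulVec, dotProduct, hδz]
        rw [h1]
  · intro n
    rw [hvt]
    simp [hfirst]
  · intro r k j hkj
    rw [hJ, if_neg]
    have hj1 : 1 ≤ (j : ℕ) := by omega
    have hj1' : (1 : ℤ) ≤ ((j : ℕ) : ℤ) := by exact_mod_cast hj1
    have h2 : (2 : ℤ) ≤ (q : ℤ) := by exact_mod_cast hq
    have hge : ((j : ℕ) : ℤ) * (q : ℤ) ≥ 2 * ((j : ℕ) : ℤ) := by nlinarith
    have hkj' : ((k : ℕ) : ℤ) < ((j : ℕ) : ℤ) := by exact_mod_cast hkj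
    have hr : (0 : ℤ) ≤ ((r : ℕ) : ℤ) := by positivity
    intro hc
    linarith
  · intro r k
    rw [hJ]
    have h2 : (2 : ℤ) ≤ (q : ℤ) := by exact_mod_cast hq
    rcases Nat.eq_zero_or_pos (k : ℕ) with h | h
    · simp only [h, Nat.cast_zero, zero_mul, zero_sub, if_pos rfl]
      rcases Nat.eq_zero_or_pos (r : ℕ) with hr | hr
      · simp [hr]
      · rw [if_neg (by omega)]; simp [Nat.pos_iff_ne_zero.mp hr]
    · have hk1 : (1 : ℤ) ≤ ((k : ℕ) : ℤ) := by exact_mod_cast h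
      have hge : ((k : ℕ) : ℤ) * (q : ℤ) ≥ 2 * ((k : ℕ) : ℤ) := by nlinarith
      have hr : (0 : ℤ) ≤ ((r : ℕ) : ℤ) := by positivity
      rw [if_neg (by intro hc; linarith), if_neg (by omega)]
end

section
/- Let q ≥ 2, M > m ≥ 0, ℓ ≤ u and n₀ ≥ max{−ℓ/q^m, 0} be integers. Every sequence x : ℕ → ℂ that is q-recursive with offset n₀, exponents M and m, index shift bounds ℓ and u, and some coefficients (c_{s,k}) is q-regular: there exist D ∈ ℕ, a vector-valued sequence v : ℕ → ℂ^D whose first component is x, and matrices A₀, …, A_{q−1} ∈ ℂ^{D×D} such that v(qn + r) = A_r·v(n) holds for all 0 ≤ r < q and all n ≥ 0. -/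
set_option maxHeartbeats 1000000

open scoped BigOperators Matrix

/-- A sequence `x : ℕ → ℂ` is `q`-regular if there are `D ∈ ℕ`, a vector-valued
sequence `v : ℕ → ℂ^D` whose first component coincides with `x`, and matrices
`A₀, …, A_{q−1}` with `v(qn + r) = A_r v(n)` for all `0 ≤ r < q` and `n ≥ 0`. -/
def IsQRegular (q : ℕ) (x : ℕ → ℂ) : Prop :=
  ∃ (D : ℕ) (v : ℕ → Fin (D + 1) → ℂ)
    (A : Fin q → Matrix (Fin (D + 1)) (Fin (D + 1)) ℂ),
    (∀ n : ℕ, v n 0 = x n) ∧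
    ∀ r : Fin q, ∀ n : ℕ, v (q * n + (r : ℕ)) = A r *ᵥ v n

lemma regular_of_eventually {q : ℕ} (hq : 1 ≤ q) {x : ℕ → ℂ}
    (ι : Type) [Fintype ι] [DecidableEq ι] (i₀ : ι) (w : ι → ℕ → ℂ)
    (B : ℕ → ι → ι → ℂ) (N : ℕ)
    (h0 : ∀ n, w i₀ n = x n)
    (hB : ∀ r, r < q → ∀ n, N ≤ n → ∀ i, w i (q * n + r) = ∑ j, B r i j * w j n) :
    IsQRegular q x := by
  classical
  let w' : ι ⊕ Fin N → ℕ → ℂ := fun i' n =>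
    match i' with
    | Sum.inl i => w i n
    | Sum.inr j => if n = (j : ℕ) then 1 else 0
  let B' : ℕ → ι ⊕ Fin N → ι ⊕ Fin N → ℂ := fun r i' j' =>
    match i', j' with
    | Sum.inl i, Sum.inl j => B r i j
    | Sum.inl i, Sum.inr j => w i (q * (j : ℕ) + r) - ∑ k, B r i k * w k (j : ℕ)
    | Sum.inr _, Sum.inl _ => 0
    | Sum.inr j', Sum.inr j => if q * (j : ℕ) + r = (j' : ℕ) then 1 else 0
  have hwl : ∀ i n, w' (Sum.inl i) n = w i n := fun _ _ => rfl
  have hwr : ∀ (j : Fin N) n, w' (Sum.inr j) n = if n = (j : ℕ) then 1 else 0 := fun _ _ => rfl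
  have key : ∀ r, r < q → ∀ n, ∀ i', w' i' (q * n + r) = ∑ j', B' r i' j' * w' j' n := by
    intro r hr n i'
    rw [Fintype.sum_sum_type]
    cases i' with
    | inl i =>
      have hsum2 : ∑ j : Fin N, B' r (Sum.inl i) (Sum.inr j) * w' (Sum.inr j) n
          = if h : n < N then
              (w i (q * n + r) - ∑ k, B r i k * w k n) else 0 := by
        split
        · next h =>
          rw [Finset.sum_eq_single (⟨n, h⟩ : Fin N)]
          · show _ * w' (Sum.inr ⟨n, h⟩) n = _
            rw [hwr]; simp [B']
          · intro b _ hb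
            have hne : ¬ (n = (b : ℕ)) := fun he => hb (Fin.ext he.symm)
            show _ * w' (Sum.inr b) n = 0
            rw [hwr, if_neg hne, mul_zero]
          · simp
        · next h =>
          apply Finset.sum_eq_zero
          intro j _
          have hne : ¬ (n = (j : ℕ)) := by have := j.isLt; omega
          show _ * w' (Sum.inr j) n = 0
          rw [hwr, if_neg hne, mul_zero]
      rw [hsum2]
      by_cases h : n < N
      · rw [dif_pos h]
        show w i (q * n + r) = (∑ j, B r i j * w j n) + _
        ring
      · rw [dif_neg h]
        show w i (q * n + r) = (∑ j, B r i j * w j n) + 0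
        rw [add_zero]
        exact hB r hr n (le_of_not_gt h) i
    | inr j' =>
      have hsum1 : ∑ j : ι, B' r (Sum.inr j') (Sum.inl j) * w' (Sum.inl j) n = 0 := by
        apply Finset.sum_eq_zero; intro j _
        show (0:ℂ) * _ = 0; rw [zero_mul]
      rw [hsum1, zero_add]
      show (if q * n + r = (j' : ℕ) then (1:ℂ) else 0) = _
      by_cases h : n < N
      · rw [Finset.sum_eq_single (⟨n, h⟩ : Fin N)]
        · show _ = B' r (Sum.inr j') (Sum.inr ⟨n, h⟩) * w' (Sum.inr ⟨n, h⟩) n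
          rw [hwr]; simp [B']
        · intro b _ hb
          have hne : ¬ (n = (b : ℕ)) := fun he => hb (Fin.ext he.symm)
          show _ * w' (Sum.inr b) n = 0
          rw [hwr, if_neg hne, mul_zero]
        · simp
      · have h1 : ¬ (q * n + r = (j' : ℕ)) := by
          have := j'.isLt
          have : n ≤ q * n := Nat.le_mul_of_pos_left n (by omega : 0 < q)
          omega
        rw [if_neg h1]
        symm; apply Finset.sum_eq_zero
        intro j _
        have hne : ¬ (n = (j : ℕ)) := by have := j.isLt; omega
        show _ * w' (Sum.inr j) n = 0
        rw [hwr, if_neg hne, mul_zero]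
  haveI : Nonempty (ι ⊕ Fin N) := ⟨Sum.inl i₀⟩
  have hcard : 0 < Fintype.card (ι ⊕ Fin N) := Fintype.card_pos
  obtain ⟨D, hD⟩ : ∃ D, Fintype.card (ι ⊕ Fin N) = D + 1 :=
    ⟨Fintype.card (ι ⊕ Fin N) - 1, by omega⟩
  let e : ι ⊕ Fin N ≃ Fin (D + 1) := (Fintype.equivFinOfCardEq hD).trans
    (Equiv.swap ((Fintype.equivFinOfCardEq hD) (Sum.inl i₀)) 0)
  have he0 : e (Sum.inl i₀) = 0 := by
    simp [e, Equiv.swap_apply_left]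
  refine ⟨D, fun n i => w' (e.symm i) n,
    fun r => Matrix.of fun i j => B' (r : ℕ) (e.symm i) (e.symm j), ?_, ?_⟩
  · intro n
    show w' (e.symm 0) n = x n
    have hs : e.symm 0 = Sum.inl i₀ := by rw [← he0, Equiv.symm_apply_apply]
    rw [hs, hwl]; exact h0 n
  · intro r n
    funext i
    show w' (e.symm i) (q * n + (r : ℕ)) = _
    rw [key (r : ℕ) r.isLt n (e.symm i)]
    show _ = ∑ j, B' (r:ℕ) (e.symm i) (e.symm j) * w' (e.symm j) n
    exact (Equiv.sum_comp e.symm (fun j' => B' (r:ℕ) (e.symm i) j' * w' j' n)).symm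

/-- **Corollary.** Every `q`-recursive sequence (with any offset `n₀`, exponents
`M > m ≥ 0`, index shift bounds `ℓ ≤ u` and `n₀ ≥ max{−ℓ/q^m, 0}`) is `q`-regular. -/
theorem q_recursive_is_q_regular
    (q M m : ℕ) (ℓ u : ℤ) (n₀ : ℕ)
    (hq : 2 ≤ q) (hMm : m < M) (hℓu : ℓ ≤ u)
    (hn₀ : (-(ℓ : ℚ)) / (q : ℚ) ^ m ≤ (n₀ : ℚ))
    (x : ℕ → ℂ) (c : ℕ → ℤ → ℂ)
    (xZ : ℤ → ℂ) (hxZ : ∀ k : ℤ, xZ k = if 0 ≤ k then x k.toNat else 0)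
    (hrec : ∀ n : ℕ, n₀ ≤ n → ∀ s : ℕ, s < q ^ M →
      x (q ^ M * n + s) = ∑ k ∈ Finset.Icc ℓ u, c s k * xZ ((q : ℤ) ^ m * n + k)) :
    IsQRegular q x := by
  classical
  have hq1 : 1 ≤ q := by omega
  have hqZ : (2:ℤ) ≤ (q:ℤ) := by exact_mod_cast hq
  have hM0 : 0 < M := by omega
  set K₀ : ℤ := |ℓ| + |u| + 2 with hK₀def
  have hK₀pos : 0 < K₀ := by have := abs_nonneg ℓ; have := abs_nonneg u; omega
  have habsl : -K₀ ≤ ℓ ∧ ℓ ≤ K₀ := by have := abs_le.mp (le_refl |ℓ|); have := abs_nonneg u; omega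
  have habsu : -K₀ ≤ u ∧ u ≤ K₀ - 2 := by have := abs_le.mp (le_refl |u|); have := abs_nonneg ℓ; omega
  set K : ℤ := 2 * K₀ with hKdef
  set I : ℕ → Finset ℤ := fun j => Finset.Icc (-(K * (q:ℤ)^j)) (K * (q:ℤ)^j) with hIdef
  set N : ℕ := n₀ + K₀.toNat with hNdef
  -- the recursion over ℤ
  have hqMpos : (0:ℤ) < (q:ℤ)^M := by positivity
  have hqmpos : (0:ℤ) < (q:ℤ)^m := by positivity
  have hrecZ : ∀ nz : ℤ, (n₀:ℤ) ≤ nz → ∀ sz : ℤ, 0 ≤ sz → sz < (q:ℤ)^M →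
      xZ ((q:ℤ)^M * nz + sz)
        = ∑ k ∈ Finset.Icc ℓ u, c sz.toNat k * xZ ((q:ℤ)^m * nz + k) := by
    intro nz hnz sz hsz0 hszlt
    have hnz0 : 0 ≤ nz := le_trans (by positivity) hnz
    have hpowcast : ((q^M : ℕ) : ℤ) = (q:ℤ)^M := by push_cast; ring
    have h2 := hrec nz.toNat (by omega) sz.toNat (by omega)
    have harg : ((q^M * nz.toNat + sz.toNat : ℕ) : ℤ) = (q:ℤ)^M * nz + sz := by
      push_cast [Int.toNat_of_nonneg hnz0, Int.toNat_of_nonneg hsz0]; ring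
    rw [hxZ, if_pos (by omega : (0:ℤ) ≤ (q:ℤ)^M * nz + sz)]
    have harg2 : ((q:ℤ)^M * nz + sz).toNat = q^M * nz.toNat + sz.toNat := by omega
    rw [harg2, h2]
    apply Finset.sum_congr rfl
    intro k _
    rw [Int.toNat_of_nonneg hnz0]
  -- the index type
  let ι : Type := Σ j : Fin M, ↥(I (j : ℕ))
  have hi₀mem : (0:ℤ) ∈ I 0 := by
    rw [hIdef]; simp only [Finset.mem_Icc, pow_zero, mul_one]; omega
  let i₀ : ι := ⟨⟨0, hM0⟩, ⟨0, hi₀mem⟩⟩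
  let W : ι → ℕ → ℂ := fun i n => xZ ((q:ℤ)^((i.1 : ℕ)) * n + (i.2 : ℤ))
  let Bm : ℕ → ι → ι → ℂ := fun r i i' =>
    if hj : (i.1 : ℕ) + 1 < M then
      (if hmem : ((q:ℤ)^((i.1:ℕ)) * r + (i.2:ℤ)) ∈ I ((i.1:ℕ)+1) then
        (if i' = ⟨⟨(i.1:ℕ)+1, hj⟩, ⟨_, hmem⟩⟩ then 1 else 0) else 0)
    else
      ∑ k ∈ Finset.Icc ℓ u,
        (if hmem : ((q:ℤ)^m * (((q:ℤ)^((i.1:ℕ)) * r + (i.2:ℤ)) / (q:ℤ)^M) + k) ∈ I m then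
          (if i' = ⟨⟨m, hMm⟩, ⟨_, hmem⟩⟩ then
            c ((((q:ℤ)^((i.1:ℕ)) * r + (i.2:ℤ)) % (q:ℤ)^M).toNat) k else 0)
        else 0)
  apply regular_of_eventually hq1 ι i₀ W Bm N
  · intro n
    show xZ ((q:ℤ)^((0:ℕ)) * n + (0:ℤ)) = x n
    rw [pow_zero, one_mul, add_zero, hxZ, if_pos (by positivity)]
    norm_num
  · rintro r hr n hn ⟨⟨j, hjM⟩, ⟨d, hd⟩⟩
    have hrZ0 : (0:ℤ) ≤ (r:ℤ) := by positivity
    have hrZ : (r:ℤ) ≤ (q:ℤ) - 1 := by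
      have : (r:ℤ) < (q:ℤ) := by exact_mod_cast hr
      omega
    have hqjpos : (0:ℤ) < (q:ℤ)^j := by positivity
    have hqj1 : (1:ℤ) ≤ (q:ℤ)^j := one_le_pow₀ (by omega)
    have hqm1 : (1:ℤ) ≤ (q:ℤ)^m := one_le_pow₀ (by omega)
    have hdmem : -(K * (q:ℤ)^j) ≤ d ∧ d ≤ K * (q:ℤ)^j := Finset.mem_Icc.mp hd
    have hrqj : (q:ℤ)^j * (r:ℤ) ≤ (q:ℤ)^(j+1) - (q:ℤ)^j := by
      have e1 : (q:ℤ)^j * (r:ℤ) ≤ (q:ℤ)^j * ((q:ℤ) - 1) :=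
        mul_le_mul_of_nonneg_left hrZ (le_of_lt hqjpos)
      have e2 : (q:ℤ)^j * ((q:ℤ) - 1) = (q:ℤ)^(j+1) - (q:ℤ)^j := by ring
      linarith only [e1, e2]
    have hrqj0 : (0:ℤ) ≤ (q:ℤ)^j * (r:ℤ) := mul_nonneg (le_of_lt hqjpos) hrZ0
    by_cases hj : j + 1 < M
    · -- intermediate level
      have hmem : ((q:ℤ)^j * r + d) ∈ I (j+1) := by
        rw [hIdef]
        simp only [Finset.mem_Icc]
        have e3 : (q:ℤ)^j ≤ (q:ℤ)^(j+1) := by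
          have h5 := mul_le_mul_of_nonneg_left hqZ (le_of_lt hqjpos)
          have h6 : (q:ℤ)^j * (q:ℤ) = (q:ℤ)^(j+1) := by ring
          linarith only [h5, h6, hqjpos]
        have hK1 : (0:ℤ) ≤ K - 1 := by rw [hKdef]; linarith only [hK₀pos]
        have e4 : K * (q:ℤ)^j ≤ K * (q:ℤ)^(j+1) :=
          mul_le_mul_of_nonneg_left e3 (by linarith only [hK1])
        have e5 : (K - 1) * (q:ℤ)^j ≤ (K - 1) * (q:ℤ)^(j+1) :=
          mul_le_mul_of_nonneg_left e3 hK1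
        constructor
        · linarith only [hdmem.1, hrqj0, e4]
        · linarith only [hdmem.2, hrqj, e5]
      show xZ _ = ∑ i' : ι, Bm r ⟨⟨j, hjM⟩, ⟨d, hd⟩⟩ i' * W i' n
      have hBm : ∀ i' : ι, Bm r ⟨⟨j, hjM⟩, ⟨d, hd⟩⟩ i'
          = (if i' = ⟨⟨j+1, hj⟩, ⟨_, hmem⟩⟩ then 1 else 0) := by
        intro i'
        show dite _ _ _ = _
        rw [dif_pos hj, dif_pos hmem]
      rw [Finset.sum_congr rfl (fun i' _ => by rw [hBm i'])]
      simp only [ite_mul, one_mul, zero_mul]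
      rw [Finset.sum_ite_eq' Finset.univ _ (fun i' => W i' n), if_pos (Finset.mem_univ _)]
      show xZ ((q:ℤ)^j * (↑(q * n + r)) + d) = xZ ((q:ℤ)^(j+1) * n + ((q:ℤ)^j * r + d))
      congr 1
      push_cast
      ring
    · -- top level
      have hjM1 : j + 1 = M := by omega
      set s : ℤ := (q:ℤ)^j * r + d with hsdef
      set t : ℤ := s / (q:ℤ)^M with htdef
      set s' : ℤ := s % (q:ℤ)^M with hs'def
      have hs'0 : 0 ≤ s' := Int.emod_nonneg s (ne_of_gt hqMpos)
      have hs'lt : s' < (q:ℤ)^M := Int.emod_lt_of_pos s hqMpos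
      have hst : (q:ℤ)^M * t + s' = s := Int.mul_ediv_add_emod s ((q:ℤ)^M)
      have hqMj : (q:ℤ)^M = (q:ℤ)^j * q := by rw [← hjM1]; ring
      have hrqM : (q:ℤ)^j * (r:ℤ) ≤ (q:ℤ)^M - (q:ℤ)^j := by rw [hjM1] at hrqj; exact hrqj
      have hslo : -(K * (q:ℤ)^j) ≤ s := by rw [hsdef]; linarith only [hdmem.1, hrqj0]
      have hshi : s ≤ (q:ℤ)^M + K * (q:ℤ)^j := by
        rw [hsdef]; linarith only [hdmem.2, hrqM, hqj1]
      have hqjM : 2 * (q:ℤ)^j ≤ (q:ℤ)^M := by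
        have := mul_le_mul_of_nonneg_left hqZ (le_of_lt hqjpos)
        rw [hqMj]; linarith only [this]
      have hKqjM : K * (q:ℤ)^j ≤ K₀ * (q:ℤ)^M := by
        have := mul_le_mul_of_nonneg_left hqjM (le_of_lt hK₀pos)
        rw [hKdef]; linarith only [this]
      have htlo : -K₀ ≤ t := by
        have h1 : -K₀ * (q:ℤ)^M ≤ s := by linarith only [hslo, hKqjM]
        have h2 := Int.ediv_le_ediv hqMpos h1
        rw [Int.mul_ediv_cancel _ (ne_of_gt hqMpos)] at h2
        rw [htdef]; linarith only [h2]
      have hthi : t ≤ K₀ + 1 := by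
        have h1 : s ≤ (K₀ + 1) * (q:ℤ)^M := by linarith only [hshi, hKqjM]
        have h2 := Int.ediv_le_ediv hqMpos h1
        rw [Int.mul_ediv_cancel _ (ne_of_gt hqMpos)] at h2
        rw [htdef]; linarith only [h2]
      have hkmem : ∀ k ∈ Finset.Icc ℓ u, ((q:ℤ)^m * t + k) ∈ I m := by
        intro k hk
        have hk' := Finset.mem_Icc.mp hk
        have e1 : (q:ℤ)^m * (-K₀) ≤ (q:ℤ)^m * t :=
          mul_le_mul_of_nonneg_left htlo (le_of_lt hqmpos)
        have e2 : (q:ℤ)^m * t ≤ (q:ℤ)^m * (K₀ + 1) :=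
          mul_le_mul_of_nonneg_left hthi (le_of_lt hqmpos)
        have e3 : K₀ * 1 ≤ K₀ * (q:ℤ)^m :=
          mul_le_mul_of_nonneg_left hqm1 (le_of_lt hK₀pos)
        have e4 : (K₀ - 1) * 1 ≤ (K₀ - 1) * (q:ℤ)^m :=
          mul_le_mul_of_nonneg_left hqm1 (by omega)
        rw [hIdef]
        simp only [Finset.mem_Icc]
        have e1' : -(K₀ * (q:ℤ)^m) ≤ (q:ℤ)^m * t := by linarith only [e1]
        have e2' : (q:ℤ)^m * t ≤ K₀ * (q:ℤ)^m + (q:ℤ)^m := by linarith only [e2]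
        constructor
        · rw [hKdef]; linarith only [habsl.1, hk'.1, e1', e3]
        · rw [hKdef]; linarith only [habsu.2, hk'.2, e2', e4]
      have hnt : (n₀:ℤ) ≤ (n:ℤ) + t := by
        have : (N:ℤ) ≤ (n:ℤ) := by exact_mod_cast hn
        rw [hNdef] at this
        push_cast [Int.toNat_of_nonneg (le_of_lt hK₀pos)] at this
        omega
      have hlhs : (q:ℤ)^j * (↑(q * n + r)) + d = (q:ℤ)^M * ((n:ℤ) + t) + s' := by
        push_cast
        linear_combination (-(n:ℤ)) * hqMj - hst - hsdef
      show xZ ((q:ℤ)^j * (↑(q * n + r)) + d) = ∑ i' : ι, Bm r ⟨⟨j, hjM⟩, ⟨d, hd⟩⟩ i' * W i' n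
      rw [hlhs, hrecZ ((n:ℤ) + t) hnt s' hs'0 hs'lt]
      have hBm : ∀ i' : ι, Bm r ⟨⟨j, hjM⟩, ⟨d, hd⟩⟩ i'
          = ∑ k ∈ Finset.Icc ℓ u,
              (if hmem : ((q:ℤ)^m * t + k) ∈ I m then
                (if i' = ⟨⟨m, hMm⟩, ⟨_, hmem⟩⟩ then c s'.toNat k else 0) else 0) := by
        intro i'
        show dite _ _ _ = _
        rw [dif_neg hj]
      have step1 : (∑ i' : ι, Bm r ⟨⟨j, hjM⟩, ⟨d, hd⟩⟩ i' * W i' n)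
          = ∑ i' : ι, (∑ k ∈ Finset.Icc ℓ u,
              (if hmem : ((q:ℤ)^m * t + k) ∈ I m then
                (if i' = ⟨⟨m, hMm⟩, ⟨_, hmem⟩⟩ then c s'.toNat k else 0) else 0)) * W i' n :=
        Finset.sum_congr rfl (fun i' _ => by rw [hBm i'])
      rw [step1]
      simp only [Finset.sum_mul]
      rw [Finset.sum_comm]
      apply Finset.sum_congr rfl
      intro k hk
      have step2 : (∑ i' : ι,
            (if hmem : ((q:ℤ)^m * t + k) ∈ I m then
              (if i' = ⟨⟨m, hMm⟩, ⟨_, hmem⟩⟩ then c s'.toNat k else 0) else 0) * W i' n)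
          = ∑ i' : ι,
            (if i' = ⟨⟨m, hMm⟩, ⟨_, hkmem k hk⟩⟩ then c s'.toNat k else 0) * W i' n :=
        Finset.sum_congr rfl (fun i' _ => by rw [dif_pos (hkmem k hk)])
      rw [step2]
      simp only [ite_mul, zero_mul]
      rw [Finset.sum_ite_eq' Finset.univ _ (fun i' => c s'.toNat k * W i' n),
        if_pos (Finset.mem_univ _)]
      show c s'.toNat k * xZ ((q:ℤ)^m * ((n:ℤ) + t) + k)
          = c s'.toNat k * xZ ((q:ℤ)^m * (n:ℤ) + ((q:ℤ)^m * t + k))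
      congr 2
      ring
end

section
/- Let q ≥ 2 and m ≥ 0 be integers and let x : ℕ → ℂ be q-recursive with offset 0, exponents M = m + 1 and m, index shift bounds ℓ = 0 and u = q^m − 1, and coefficients (c_{s,k})_{0≤s<q^{m+1}, 0≤k<q^m}, i.e. x(q^{m+1} n + s) = Σ_{0≤k<q^m} c_{s,k} x(q^m n + k) for all n ≥ 0 and 0 ≤ s < q^{m+1}. For 0 ≤ r < q define the q^m × q^m matrix B_r := (c_{r·q^m + i, k})_{0≤i<q^m, 0≤k<q^m}. Then x is q-regular, and there is a q-linear representation (A₀, …, A_{q−1}, v) of x of dimension D = (q^{m+1} − 1)/(q − 1) such that: v consists of the blocks v_j = (x∘(n ↦ q^j n + i))_{0≤i<q^j} for 0 ≤ j ≤ m (so the first component of v is x); for each 0 ≤ r < q the matrix A_r has block form A_r = [[J_{r0}, J_{r1}],[0, B_r]], where J_{r0} and J_{r1} have all entries in {0,1} and J_{r0} is an upper triangular (q^m − 1)/(q − 1) × (q^m − 1)/(q − 1) matrix with zeros on the diagonal; and v(qn + r) = A_r·v(n) holds for all 0 ≤ r < q and n ≥ 0. -/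
open scoped BigOperators Matrix

namespace QRA

/-- geometric sum `1 + q + ... + q^{j-1}` -/
def S (q j : ℕ) : ℕ := ∑ t ∈ Finset.range j, q ^ t

lemma S_zero (q : ℕ) : S q 0 = 0 := by simp [S]

lemma S_succ (q j : ℕ) : S q (j+1) = S q j + q ^ j := Finset.sum_range_succ _ _

lemma S_strictMono {q : ℕ} (hq : 2 ≤ q) : StrictMono (S q) :=
  strictMono_nat_of_lt_succ fun n => by
    rw [S_succ]; exact Nat.lt_add_of_pos_right (pow_pos (by omega) n)

lemma S_mul {q : ℕ} (hq : 2 ≤ q) (j : ℕ) : (q - 1) * S q j = q ^ j - 1 := by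
  induction j with
  | zero => simp [S]
  | succ j ih =>
    have h1 : 1 ≤ q ^ j := Nat.one_le_pow _ _ (by omega)
    have h2 : (q - 1) * q ^ j = q ^ (j+1) - q ^ j := by
      rw [Nat.sub_mul, one_mul, pow_succ, mul_comm]
    have h3 : q ^ j ≤ q ^ (j+1) := Nat.pow_le_pow_right (by omega) (by omega)
    rw [S_succ, Nat.mul_add, ih, h2]
    omega

lemma S_add_lt {q : ℕ} (hq : 2 ≤ q) {j1 j2 i1 : ℕ} (h : j1 < j2) (hi : i1 < q ^ j1) (i2 : ℕ) :
    S q j1 + i1 < S q j2 + i2 := by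
  have h1 : S q (j1 + 1) ≤ S q j2 := (S_strictMono hq).monotone h
  rw [S_succ] at h1
  omega

/-- block index of position `a` -/
def dec (q m a : ℕ) : ℕ := Nat.findGreatest (fun j => S q j ≤ a) m

lemma dec_spec {q m a : ℕ} (hq : 2 ≤ q) (ha : a < S q m) :
    dec q m a < m ∧ S q (dec q m a) ≤ a ∧ a - S q (dec q m a) < q ^ (dec q m a) := by
  set g := dec q m a with hg
  have hle : S q g ≤ a := Nat.findGreatest_spec (P := fun j => S q j ≤ a) (Nat.zero_le m)
    (by simp [S_zero])
  have hgm : g ≤ m := Nat.findGreatest_le m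
  have hlt : g < m := by
    rcases lt_or_eq_of_le hgm with h | h
    · exact h
    · exfalso; rw [h] at hle; omega
  refine ⟨hlt, hle, ?_⟩
  by_contra hcon
  push_neg at hcon
  have h1 : S q (g+1) ≤ a := by rw [S_succ]; omega
  have hgeq : Nat.findGreatest (fun j => S q j ≤ a) m = g := hg.symm
  exact Nat.findGreatest_is_greatest (P := fun j => S q j ≤ a) (n := m) (by omega) (by omega) h1

lemma dec_eq {q m j i : ℕ} (hq : 2 ≤ q) (hj : j < m) (hi : i < q ^ j) :
    dec q m (S q j + i) = j := by
  have hle : j ≤ dec q m (S q j + i) :=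
    Nat.le_findGreatest (by omega) (by omega)
  by_contra hne
  have hgt : j + 1 ≤ dec q m (S q j + i) := by omega
  have hspec : S q (dec q m (S q j + i)) ≤ S q j + i :=
    Nat.findGreatest_spec (P := fun j' => S q j' ≤ S q j + i) (Nat.zero_le m) (by simp [S_zero])
  have hmono : S q (j+1) ≤ S q (dec q m (S q j + i)) := (S_strictMono hq).monotone hgt
  rw [S_succ] at hmono
  omega

/-- the index map -/
def idxF (q m K : ℕ) (hm : 0 < q ^ m) (p : ℕ × ℕ) : Fin K ⊕ Fin (q ^ m) :=
  if h : p.1 < m ∧ S q p.1 + p.2 < K then Sum.inl ⟨S q p.1 + p.2, h.2⟩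
  else Sum.inr ⟨p.2 % q ^ m, Nat.mod_lt _ hm⟩

/-- the vector -/
noncomputable def vv (q m K : ℕ) (x : ℕ → ℂ) (n : ℕ) : Fin K ⊕ Fin (q ^ m) → ℂ
  | Sum.inl a => x (q ^ (dec q m a) * n + ((a : ℕ) - S q (dec q m a)))
  | Sum.inr b => x (q ^ m * n + (b : ℕ))

/-- upper-left block -/
noncomputable def J0d (q m K : ℕ) (r : ℕ) : Matrix (Fin K) (Fin K) ℂ := fun a b =>
  if dec q m (a : ℕ) + 1 < m ∧
      (b : ℕ) = S q (dec q m (a : ℕ) + 1) + r * q ^ (dec q m (a : ℕ))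
        + ((a : ℕ) - S q (dec q m (a : ℕ))) then 1 else 0

/-- upper-right block -/
noncomputable def J1d (q m K : ℕ) (r : ℕ) : Matrix (Fin K) (Fin (q ^ m)) ℂ := fun a b =>
  if dec q m (a : ℕ) + 1 = m ∧
      (b : ℕ) = r * q ^ (dec q m (a : ℕ)) + ((a : ℕ) - S q (dec q m (a : ℕ))) then 1 else 0

end QRA

/-- **Theorem (linear representation of `q`-recursive sequences, special case
`M = m + 1`, `ℓ = 0`, `u = q^m − 1`).**

Let `q ≥ 2` and `m ≥ 0` be integers and let `x : ℕ → ℂ` satisfy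
`x(q^{m+1} n + s) = Σ_{0≤k<q^m} c_{s,k} x(q^m n + k)` for all `n ≥ 0` and
`0 ≤ s < q^{m+1}`.  With `B_r = (c_{r q^m + i, k})`, the sequence `x` is
`q`-regular with a `q`-linear representation of dimension
`D = K + q^m = (q^{m+1} − 1)/(q − 1)` (where `K = (q^m − 1)/(q − 1)`) whose
vector `v` consists of the blocks `v_j = (x ∘ (n ↦ q^j n + i))_{0 ≤ i < q^j}` for
`0 ≤ j ≤ m` (the first component being `x`), and whose matrices have the block
form `A_r = [[J_{r0}, J_{r1}], [0, B_r]]` with `J_{r0}, J_{r1}` having entries in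
`{0, 1}` and `J_{r0}` upper triangular with zero diagonal. -/
theorem q_recursive_special_case_is_q_regular
    (q m : ℕ) (hq : 2 ≤ q)
    (x : ℕ → ℂ) (c : ℕ → ℕ → ℂ)
    (hrec : ∀ n : ℕ, ∀ s : ℕ, s < q ^ (m + 1) →
      x (q ^ (m + 1) * n + s) = ∑ k ∈ Finset.range (q ^ m), c s k * x (q ^ m * n + k))
    (K : ℕ) (hK : K = (q ^ m - 1) / (q - 1))
    (B : Fin q → Matrix (Fin (q ^ m)) (Fin (q ^ m)) ℂ)
    (hB : ∀ (r : Fin q) (i k : Fin (q ^ m)),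
      B r i k = c ((r : ℕ) * q ^ m + (i : ℕ)) (k : ℕ)) :
    -- the dimension K + q^m equals (q^{m+1} − 1)/(q − 1)
    (K + q ^ m) * (q - 1) = q ^ (m + 1) - 1 ∧
    ∃ (v : ℕ → (Fin K ⊕ Fin (q ^ m)) → ℂ)
      (J0 : Fin q → Matrix (Fin K) (Fin K) ℂ)
      (J1 : Fin q → Matrix (Fin K) (Fin (q ^ m)) ℂ)
      (idx : ℕ × ℕ → Fin K ⊕ Fin (q ^ m)),
      -- the first component of v is x itself (block j = 0)
      (∀ n : ℕ, v n (idx (0, 0)) = x n) ∧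
      -- v consists of the blocks v_j = (x ∘ (n ↦ q^j n + i))_{0 ≤ i < q^j}, 0 ≤ j ≤ m
      Set.InjOn idx {p : ℕ × ℕ | p.1 ≤ m ∧ p.2 < q ^ p.1} ∧
      (∀ j i : ℕ, j ≤ m → i < q ^ j →
        ∀ n : ℕ, v n (idx (j, i)) = x (q ^ j * n + i)) ∧
      -- the blocks with j < m form the first K components, the block j = m the last q^m
      (∀ j i : ℕ, j < m → i < q ^ j → ∃ a : Fin K, idx (j, i) = Sum.inl a) ∧
      (∀ i : ℕ, i < q ^ m → ∃ b : Fin (q ^ m), idx (m, i) = Sum.inr b) ∧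
      -- J_{r0} is upper triangular with zeros on the diagonal
      (∀ r : Fin q, ∀ a b : Fin K, b ≤ a → J0 r a b = 0) ∧
      -- J_{r0} and J_{r1} have all entries in {0, 1}
      (∀ r : Fin q, ∀ a b : Fin K, J0 r a b = 0 ∨ J0 r a b = 1) ∧
      (∀ r : Fin q, ∀ (a : Fin K) (b : Fin (q ^ m)), J1 r a b = 0 ∨ J1 r a b = 1) ∧
      -- the recurrence v(qn + r) = A_r v(n) for all n ≥ 0, A_r = [[J_{r0}, J_{r1}], [0, B_r]]
      (∀ r : Fin q, ∀ n : ℕ,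
        v (q * n + (r : ℕ)) = Matrix.fromBlocks (J0 r) (J1 r) 0 (B r) *ᵥ v n) := by
  have hq0 : 0 < q := by omega
  have hqm : 0 < q ^ m := pow_pos hq0 m
  -- K equals the geometric sum
  have hKS : K = QRA.S q m := by
    rw [hK, ← QRA.S_mul hq m, Nat.mul_div_cancel_left _ (by omega : 0 < q - 1)]
  have hdim : (K + q ^ m) * (q - 1) = q ^ (m + 1) - 1 := by
    have h1 := QRA.S_mul hq (m + 1)
    rw [QRA.S_succ] at h1
    rw [hKS, mul_comm]
    exact h1
  -- positions of blocks with j < m land in Fin K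
  have hSltK : ∀ j i : ℕ, j < m → i < q ^ j → QRA.S q j + i < K := by
    intro j i hj hi
    have h1 : QRA.S q (j + 1) ≤ QRA.S q m := (QRA.S_strictMono hq).monotone hj
    rw [QRA.S_succ] at h1
    omega
  have hidxlt : ∀ j i : ℕ, (hj : j < m) → (hi : i < q ^ j) →
      QRA.idxF q m K hqm (j, i) = Sum.inl ⟨QRA.S q j + i, hSltK j i hj hi⟩ := by
    intro j i hj hi
    rw [QRA.idxF, dif_pos ⟨hj, hSltK j i hj hi⟩]
  have hidxm : ∀ i : ℕ, (hi : i < q ^ m) →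
      QRA.idxF q m K hqm (m, i) = Sum.inr ⟨i, hi⟩ := by
    intro i hi
    rw [QRA.idxF, dif_neg (by simp)]
    simp [Nat.mod_eq_of_lt hi]
  -- evaluation of v on blocks
  have hveval : ∀ j i : ℕ, j ≤ m → i < q ^ j → ∀ n : ℕ,
      QRA.vv q m K x n (QRA.idxF q m K hqm (j, i)) = x (q ^ j * n + i) := by
    intro j i hjm hi n
    rcases lt_or_eq_of_le hjm with hj | hj
    · rw [hidxlt j i hj hi]
      show x (q ^ (QRA.dec q m (QRA.S q j + i)) * n
        + (QRA.S q j + i - QRA.S q (QRA.dec q m (QRA.S q j + i)))) = _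
      rw [QRA.dec_eq hq hj hi, Nat.add_sub_cancel_left]
    · subst hj
      rw [hidxm i hi]
      rfl
  refine ⟨hdim, QRA.vv q m K x, fun r => QRA.J0d q m K r, fun r => QRA.J1d q m K r,
    QRA.idxF q m K hqm, ?_, ?_, ?_, ?_, ?_, ?_, ?_, ?_, ?_⟩
  · -- first component
    intro n
    have := hveval 0 0 (Nat.zero_le m) (by simp) n
    simpa using this
  · -- injectivity
    rintro ⟨j1, i1⟩ ⟨hj1, hi1⟩ ⟨j2, i2⟩ ⟨hj2, hi2⟩ heq
    simp only [Set.mem_setOf_eq] at hj1 hi1 hj2 hi2 ⊢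
    rcases lt_or_eq_of_le hj1 with h1 | h1 <;> rcases lt_or_eq_of_le hj2 with h2 | h2
    · rw [hidxlt j1 i1 h1 hi1, hidxlt j2 i2 h2 hi2] at heq
      have hval : QRA.S q j1 + i1 = QRA.S q j2 + i2 := by
        simpa [Fin.ext_iff] using heq
      have hjj : j1 = j2 := by
        rcases lt_trichotomy j1 j2 with h | h | h
        · exact absurd hval (Nat.ne_of_lt (QRA.S_add_lt hq h hi1 i2))
        · exact h
        · exact absurd hval.symm (Nat.ne_of_lt (QRA.S_add_lt hq h hi2 i1))
      subst hjj
      exact Prod.ext rfl (by omega)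
    · subst h2
      rw [hidxlt j1 i1 h1 hi1, hidxm i2 hi2] at heq
      exact absurd heq (by simp)
    · subst h1
      rw [hidxm i1 hi1, hidxlt j2 i2 h2 hi2] at heq
      exact absurd heq (by simp)
    · subst h1; subst h2
      rw [hidxm i1 hi1, hidxm i2 hi2] at heq
      simpa [Fin.ext_iff] using heq
  · -- block evaluation
    exact fun j i hj hi n => hveval j i hj hi n
  · -- blocks j < m are inl
    intro j i hj hi
    exact ⟨_, hidxlt j i hj hi⟩
  · -- block j = m is inr
    intro i hi
    exact ⟨_, hidxm i hi⟩
  · -- J0 upper triangular with zero diagonal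
    intro r a b hba
    have ha : (a : ℕ) < QRA.S q m := hKS ▸ a.2
    obtain ⟨hjm, hSa, hia⟩ := QRA.dec_spec hq ha
    simp only [QRA.J0d]
    rw [if_neg]
    rintro ⟨h1, h2⟩
    have h3 : QRA.S q (QRA.dec q m (a : ℕ) + 1)
        = QRA.S q (QRA.dec q m (a : ℕ)) + q ^ (QRA.dec q m (a : ℕ)) := QRA.S_succ q _
    have h4 : (b : ℕ) ≤ (a : ℕ) := hba
    have h5 : QRA.S q (QRA.dec q m (a : ℕ) + 1) ≤ (b : ℕ) := by
      rw [h2]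
      have := Nat.zero_le ((r : ℕ) * q ^ (QRA.dec q m (a : ℕ)))
      omega
    omega
  · -- J0 entries in {0, 1}
    intro r a b
    simp only [QRA.J0d]
    split <;> simp
  · -- J1 entries in {0, 1}
    intro r a b
    simp only [QRA.J1d]
    split <;> simp
  · -- the recurrence
    intro r n
    funext s
    rw [Matrix.fromBlocks_mulVec]
    cases s with
    | inr b =>
      -- bottom block
      simp only [Sum.elim_inr, Pi.add_apply, Matrix.zero_mulVec, Pi.zero_apply, zero_add]
      have hs : (r : ℕ) * q ^ m + (b : ℕ) < q ^ (m + 1) := by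
        have h1 : (r : ℕ) + 1 ≤ q := r.2
        calc (r : ℕ) * q ^ m + (b : ℕ) < ((r : ℕ) + 1) * q ^ m := by
              rw [add_mul, one_mul]; exact Nat.add_lt_add_left b.2 _
          _ ≤ q * q ^ m := Nat.mul_le_mul_right _ h1
          _ = q ^ (m + 1) := by rw [pow_succ, mul_comm]
      have harg : q ^ m * (q * n + (r : ℕ)) + (b : ℕ)
          = q ^ (m + 1) * n + ((r : ℕ) * q ^ m + (b : ℕ)) := by
        rw [pow_succ]; ring
      show x (q ^ m * (q * n + (r : ℕ)) + (b : ℕ)) = _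
      rw [harg, hrec n _ hs]
      rw [Matrix.mulVec, dotProduct]
      rw [← Fin.sum_univ_eq_sum_range (fun k => c ((r : ℕ) * q ^ m + (b : ℕ)) k * x (q ^ m * n + k)) (q ^ m)]
      refine Finset.sum_congr rfl fun k _ => ?_
      rw [hB r b k]
      rfl
    | inl a =>
      -- top block
      simp only [Sum.elim_inl, Pi.add_apply]
      have ha : (a : ℕ) < QRA.S q m := hKS ▸ a.2
      obtain ⟨hjm, hSa, hia⟩ := QRA.dec_spec hq ha
      set j := QRA.dec q m (a : ℕ) with hjdef
      set i := (a : ℕ) - QRA.S q j with hidef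
      have hrq : (r : ℕ) * q ^ j + i < q ^ (j + 1) := by
        have h1 : (r : ℕ) + 1 ≤ q := r.2
        calc (r : ℕ) * q ^ j + i < ((r : ℕ) + 1) * q ^ j := by
              rw [add_mul, one_mul]; exact Nat.add_lt_add_left hia _
          _ ≤ q * q ^ j := Nat.mul_le_mul_right _ h1
          _ = q ^ (j + 1) := by rw [pow_succ, mul_comm]
      have hlhs : QRA.vv q m K x (q * n + (r : ℕ)) (Sum.inl a)
          = x (q ^ (j + 1) * n + ((r : ℕ) * q ^ j + i)) := by
        show x (q ^ j * (q * n + (r : ℕ)) + i) = _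
        congr 1
        rw [pow_succ]; ring
      rw [hlhs]
      rcases lt_or_eq_of_le (Nat.succ_le_of_lt hjm) with hc | hc
      · -- j + 1 < m : the 1 sits in J0
        have ht : QRA.S q (j + 1) + ((r : ℕ) * q ^ j + i) < K := hSltK _ _ hc hrq
        have hJ1 : (QRA.J1d q m K (r : ℕ)).mulVec (QRA.vv q m K x n ∘ Sum.inr) a = 0 := by
          rw [Matrix.mulVec, dotProduct]
          refine Finset.sum_eq_zero fun b _ => ?_
          simp only [QRA.J1d]
          rw [if_neg (by rintro ⟨h1, _⟩; omega), zero_mul]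
        have hJ0 : (QRA.J0d q m K (r : ℕ)).mulVec (QRA.vv q m K x n ∘ Sum.inl) a
            = QRA.vv q m K x n
              (Sum.inl ⟨QRA.S q (j + 1) + ((r : ℕ) * q ^ j + i), ht⟩) := by
          rw [Matrix.mulVec, dotProduct]
          have hstep : ∀ b : Fin K,
              QRA.J0d q m K (r : ℕ) a b * (QRA.vv q m K x n ∘ Sum.inl) b
              = if b = (⟨QRA.S q (j + 1) + ((r : ℕ) * q ^ j + i), ht⟩ : Fin K)
                then (QRA.vv q m K x n ∘ Sum.inl) b else 0 := by
            intro b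
            simp only [QRA.J0d]
            by_cases hb : b = (⟨QRA.S q (j + 1) + ((r : ℕ) * q ^ j + i), ht⟩ : Fin K)
            · rw [if_pos hb, if_pos, one_mul]
              refine ⟨hc, ?_⟩
              rw [hb]
              show QRA.S q (j + 1) + ((r : ℕ) * q ^ j + i) = _
              ring
            · rw [if_neg hb, if_neg, zero_mul]
              rintro ⟨_, h2⟩
              apply hb
              apply Fin.ext
              show (b : ℕ) = QRA.S q (j + 1) + ((r : ℕ) * q ^ j + i)
              rw [h2]; ring
          rw [Finset.sum_congr rfl fun b _ => hstep b, Finset.sum_ite_eq']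
          rw [if_pos (Finset.mem_univ _)]
          rfl
        rw [hJ0, hJ1, add_zero]
        have hdect : QRA.dec q m (QRA.S q (j + 1) + ((r : ℕ) * q ^ j + i)) = j + 1 :=
          QRA.dec_eq hq hc hrq
        show x _ = x (q ^ (QRA.dec q m (QRA.S q (j + 1) + ((r : ℕ) * q ^ j + i))) * n
          + (QRA.S q (j + 1) + ((r : ℕ) * q ^ j + i)
            - QRA.S q (QRA.dec q m (QRA.S q (j + 1) + ((r : ℕ) * q ^ j + i)))))
        rw [hdect, Nat.add_sub_cancel_left]
      · -- j + 1 = m : the 1 sits in J1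
        have hc : j + 1 = m := hc
        have ht : (r : ℕ) * q ^ j + i < q ^ m := by rw [← hc]; exact hrq
        have hJ0 : (QRA.J0d q m K (r : ℕ)).mulVec (QRA.vv q m K x n ∘ Sum.inl) a = 0 := by
          rw [Matrix.mulVec, dotProduct]
          refine Finset.sum_eq_zero fun b _ => ?_
          simp only [QRA.J0d]
          rw [if_neg (by rintro ⟨h1, _⟩; omega), zero_mul]
        have hJ1 : (QRA.J1d q m K (r : ℕ)).mulVec (QRA.vv q m K x n ∘ Sum.inr) a
            = QRA.vv q m K x n (Sum.inr ⟨(r : ℕ) * q ^ j + i, ht⟩) := by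
          rw [Matrix.mulVec, dotProduct]
          have hstep : ∀ b : Fin (q ^ m),
              QRA.J1d q m K (r : ℕ) a b * (QRA.vv q m K x n ∘ Sum.inr) b
              = if b = (⟨(r : ℕ) * q ^ j + i, ht⟩ : Fin (q ^ m))
                then (QRA.vv q m K x n ∘ Sum.inr) b else 0 := by
            intro b
            simp only [QRA.J1d]
            by_cases hb : b = (⟨(r : ℕ) * q ^ j + i, ht⟩ : Fin (q ^ m))
            · rw [if_pos hb, if_pos ⟨hc, by rw [hb]⟩, one_mul]
            · rw [if_neg hb, if_neg, zero_mul]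
              rintro ⟨_, h2⟩
              exact hb (Fin.ext h2)
          rw [Finset.sum_congr rfl fun b _ => hstep b, Finset.sum_ite_eq']
          rw [if_pos (Finset.mem_univ _)]
          rfl
        rw [hJ0, hJ1, zero_add]
        show x (q ^ (j + 1) * n + ((r : ℕ) * q ^ j + i)) = x (q ^ m * n + _)
        rw [hc]
end

section
/- Let q ≥ 2, M > m ≥ 0 and ℓ ≤ u be integers. Set ℓ' := ⌊((ℓ+1)q^{M−m} − q^M)/(q^{M−m}−1)⌋ if ℓ < 0 and ℓ' := 0 otherwise, and u' := q^m − 1 + ⌈u·q^{M−m}/(q^{M−m}−1)⌉ if u > 0 and u' := q^m − 1 otherwise. Let d be an integer with ℓ' ≤ d ≤ q^{M−1} − q^m + u' and write d = d'·q^M + r' with d' ∈ ℤ and 0 ≤ r' < q^M. Then ℓ' ≤ q^m·d' + ℓ and q^m·d' + u ≤ u'. If additionally r' ≥ q^{M−1}, then q^m·d' + q^m + u ≤ u'. -/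
/-- **Lemma (bounds for the index shifts).**

Let `q ≥ 2`, `M > m ≥ 0` and `ℓ ≤ u` be integers and let `ℓ'` and `u'` be defined
as in the paper.  Let `d` be an integer with `ℓ' ≤ d ≤ q^{M−1} − q^m + u'` and
write `d = d' q^M + r'` with `0 ≤ r' < q^M`.  Then `ℓ' ≤ q^m d' + ℓ` and
`q^m d' + u ≤ u'`; if additionally `r' ≥ q^{M−1}`, then `q^m d' + q^m + u ≤ u'`. -/
theorem bounds_lemma
    (q M m : ℕ) (ℓ u : ℤ)
    (hq : 2 ≤ q) (hMm : m < M) (hℓu : ℓ ≤ u)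
    (ℓ' u' : ℤ)
    (hℓ' : ℓ' = if ℓ < 0 then
      ⌊(((ℓ : ℚ) + 1) * (q : ℚ) ^ (M - m) - (q : ℚ) ^ M) / ((q : ℚ) ^ (M - m) - 1)⌋
      else 0)
    (hu' : u' = (q : ℤ) ^ m - 1 + (if 0 < u then
      ⌈((u : ℚ) * (q : ℚ) ^ (M - m)) / ((q : ℚ) ^ (M - m) - 1)⌉ else 0))
    (d d' r' : ℤ)
    (hd₁ : ℓ' ≤ d) (hd₂ : d ≤ (q : ℤ) ^ (M - 1) - (q : ℤ) ^ m + u')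
    (hsplit : d = d' * (q : ℤ) ^ M + r')
    (hr'₁ : 0 ≤ r') (hr'₂ : r' < (q : ℤ) ^ M) :
    ℓ' ≤ (q : ℤ) ^ m * d' + ℓ ∧
    (q : ℤ) ^ m * d' + u ≤ u' ∧
    ((q : ℤ) ^ (M - 1) ≤ r' → (q : ℤ) ^ m * d' + (q : ℤ) ^ m + u ≤ u') := by
  have hq1 : (2:ℤ) ≤ (q:ℤ) := by exact_mod_cast hq
  have hQ2 : 2 ≤ (q:ℤ) ^ (M - m) := by
    calc (2:ℤ) ≤ (q:ℤ) ^ 1 := by simpa using hq1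
    _ ≤ (q:ℤ) ^ (M - m) := pow_le_pow_right₀ (by linarith) (by omega)
  have hqm : (1:ℤ) ≤ (q:ℤ) ^ m := one_le_pow₀ (by linarith)
  have hqM1 : (1:ℤ) ≤ (q:ℤ) ^ (M-1) := one_le_pow₀ (by linarith)
  have hM : (q:ℤ) ^ M = (q:ℤ) ^ m * (q:ℤ) ^ (M - m) := by
    rw [← pow_add]; congr 1; omega
  have hM1 : (q:ℤ) ^ M = (q:ℤ) ^ (M-1) * q := by
    rw [← pow_succ]; congr 1; omega
  have hDpos : (0:ℚ) < (q:ℚ) ^ (M - m) - 1 := by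
    have : ((2:ℤ):ℚ) ≤ (((q:ℤ) ^ (M-m) : ℤ) : ℚ) := by exact_mod_cast hQ2
    push_cast at this
    linarith
  have hkQ : ((q:ℤ)^m * d') * (q:ℤ)^(M-m) = d' * (q:ℤ) ^ M := by rw [hM]; ring
  have hlow : ℓ' - ((q:ℤ)^M - 1) ≤ ((q:ℤ)^m * d') * (q:ℤ)^(M-m) := by
    rw [hkQ]; omega
  have hup : ((q:ℤ)^m * d') * (q:ℤ)^(M-m) ≤ (q:ℤ)^(M-1) - (q:ℤ)^m + u' := by
    rw [hkQ]
    have : d' * (q:ℤ)^M ≤ d := by omega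
    linarith
  have hB : 0 < u → u * (q:ℤ)^(M-m) ≤
      ⌈((u : ℚ) * (q : ℚ) ^ (M - m)) / ((q : ℚ) ^ (M - m) - 1)⌉ * ((q:ℤ)^(M-m) - 1) := by
    intro _
    have hx := Int.le_ceil (((u : ℚ) * (q : ℚ) ^ (M - m)) / ((q : ℚ) ^ (M - m) - 1))
    rw [div_le_iff₀ hDpos] at hx
    exact_mod_cast hx
  refine ⟨?_, ?_, ?_⟩
  · -- ℓ' ≤ q^m d' + ℓ
    by_cases hℓneg : ℓ < 0
    · have heq : ℓ' = ⌊(((ℓ : ℚ) + 1) * (q : ℚ) ^ (M - m) - (q : ℚ) ^ M) /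
          ((q : ℚ) ^ (M - m) - 1)⌋ := by rw [hℓ', if_pos hℓneg]
      have hA : ℓ' * ((q:ℤ)^(M-m) - 1) ≤ (ℓ + 1) * (q:ℤ)^(M-m) - (q:ℤ)^M := by
        have hx := Int.floor_le ((((ℓ : ℚ) + 1) * (q : ℚ) ^ (M - m) - (q : ℚ) ^ M) /
          ((q : ℚ) ^ (M - m) - 1))
        rw [← heq, le_div_iff₀ hDpos] at hx
        exact_mod_cast hx
      nlinarith [hlow, hA, hQ2]
    · have heq : ℓ' = 0 := by rw [hℓ', if_neg hℓneg]
      push_neg at hℓneg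
      have hd0 : 0 ≤ d := heq ▸ hd₁
      have hd'0 : 0 ≤ d' := by nlinarith [pow_pos (show (0:ℤ) < q by linarith) M]
      have : 0 ≤ (q:ℤ)^m * d' := by positivity
      omega
  · by_cases hu : 0 < u
    · have heq : u' = (q:ℤ)^m - 1 +
          ⌈((u : ℚ) * (q : ℚ) ^ (M - m)) / ((q : ℚ) ^ (M - m) - 1)⌉ := by
        rw [hu', if_pos hu]
      have hB' := hB hu
      by_contra hcon
      push_neg at hcon
      nlinarith [hup, hB', hQ2, hqM1, hq1]
    · have heq : u' = (q:ℤ)^m - 1 := by rw [hu', if_neg hu]; ring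
      push_neg at hu
      have : (q:ℤ)^m * d' ≤ (q:ℤ)^m - 1 := by
        nlinarith [hup, hQ2, hqM1, hq1]
      linarith
  · intro hr
    have hup2 : ((q:ℤ)^m * d') * (q:ℤ)^(M-m) ≤ u' - (q:ℤ)^m := by
      rw [hkQ]
      have : d' * (q:ℤ)^M ≤ d - (q:ℤ)^(M-1) := by omega
      linarith
    by_cases hu : 0 < u
    · have heq : u' = (q:ℤ)^m - 1 +
          ⌈((u : ℚ) * (q : ℚ) ^ (M - m)) / ((q : ℚ) ^ (M - m) - 1)⌉ := by
        rw [hu', if_pos hu]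
      have hB' := hB hu
      by_contra hcon
      push_neg at hcon
      set c : ℤ := ⌈((u : ℚ) * (q : ℚ) ^ (M - m)) / ((q : ℚ) ^ (M - m) - 1)⌉ with hc
      have hk' : c - u ≤ (q:ℤ)^m * d' := by linarith
      have hmul := mul_le_mul_of_nonneg_right hk'
        (show (0:ℤ) ≤ (q:ℤ)^(M-m) by positivity)
      linarith [hup2, hB', hQ2, hmul]
    · have heq : u' = (q:ℤ)^m - 1 := by rw [hu', if_neg hu]; ring
      push_neg at hu
      have h1 : ((q:ℤ)^m * d') * (q:ℤ)^(M-m) ≤ -1 := by linarith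
      have h2 : (q:ℤ)^m * d' ≤ -1 := by
        by_contra hcc
        push_neg at hcc
        have : 0 ≤ ((q:ℤ)^m * d') * (q:ℤ)^(M-m) :=
          mul_nonneg (by linarith) (by positivity)
        linarith
      linarith
end

section
/- Let 𝒢 be a finite set of (D₁+D₂)×(D₁+D₂) complex block upper triangular matrices, where each G ∈ 𝒢 is written as G = [[G^{(11)}, G^{(12)}],[0, G^{(22)}]] with G^{(ij)} a D_i×D_j matrix. Let R₁, R₂ ≥ 0 be constants with R₁ ≠ R₂ such that for i ∈ {1,2} there is a constant C_i with ‖G₁^{(ii)}⋯G_k^{(ii)}‖ ≤ C_i·R_i^k for all k ≥ 1 and all G₁, …, G_k ∈ 𝒢. Set R := max{R₁, R₂}. Then there is a constant C such that ‖G₁⋯G_k‖ ≤ C·R^k holds for all k ≥ 1 and all G₁, …, G_k ∈ 𝒢. -/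
open scoped BigOperators NNReal

attribute [local instance] Matrix.linftyOpNormedAddCommGroup Matrix.linftyOpNormedRing

namespace GrowthAux

open Matrix

variable {D₁ D₂ : ℕ} {ι : Type*}

/-- Recursive definition of the off-diagonal block of a product of block
upper triangular matrices. -/
noncomputable def Xl (A : ι → Matrix (Fin D₁) (Fin D₁) ℂ)
    (B : ι → Matrix (Fin D₁) (Fin D₂) ℂ)
    (Dm : ι → Matrix (Fin D₂) (Fin D₂) ℂ) : List ι → Matrix (Fin D₁) (Fin D₂) ℂ
  | [] => 0
  | t :: l => A t * Xl A B Dm l + B t * (l.map Dm).prod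

lemma prod_fromBlocks (A : ι → Matrix (Fin D₁) (Fin D₁) ℂ)
    (B : ι → Matrix (Fin D₁) (Fin D₂) ℂ)
    (Dm : ι → Matrix (Fin D₂) (Fin D₂) ℂ) (l : List ι) :
    (l.map fun t => Matrix.fromBlocks (A t) (B t) 0 (Dm t)).prod
      = Matrix.fromBlocks (l.map A).prod (Xl A B Dm l) 0 (l.map Dm).prod := by
  induction l with
  | nil => simp [Xl, Matrix.fromBlocks_one]
  | cons t l ih => simp [Xl, ih, Matrix.fromBlocks_multiply, Matrix.mul_add]

lemma row_nnnorm_le {m n : Type*} [Fintype m] [Fintype n]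
    (M : Matrix m n ℂ) (i : m) : ∑ j, ‖M i j‖₊ ≤ ‖M‖₊ := by
  rw [Matrix.linfty_opNNNorm_def]
  exact Finset.le_sup (f := fun i : m => ∑ j, ‖M i j‖₊) (Finset.mem_univ i)

lemma norm_fromBlocks_le {m₁ m₂ n₁ n₂ : Type*} [Fintype m₁] [Fintype m₂]
    [Fintype n₁] [Fintype n₂]
    (A : Matrix m₁ n₁ ℂ) (B : Matrix m₁ n₂ ℂ) (C : Matrix m₂ n₁ ℂ)
    (D : Matrix m₂ n₂ ℂ) :
    ‖Matrix.fromBlocks A B C D‖ ≤ ‖A‖ + ‖B‖ + ‖C‖ + ‖D‖ := by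
  have h : ‖Matrix.fromBlocks A B C D‖₊ ≤ ‖A‖₊ + ‖B‖₊ + ‖C‖₊ + ‖D‖₊ := by
    rw [Matrix.linfty_opNNNorm_def]
    apply Finset.sup_le
    rintro (i | i) -
    · have : ∑ j, ‖Matrix.fromBlocks A B C D (Sum.inl i) j‖₊
          = (∑ j, ‖A i j‖₊) + ∑ j, ‖B i j‖₊ := by
        simp [Fintype.sum_sum_type, Matrix.fromBlocks]
      rw [this]
      calc (∑ j, ‖A i j‖₊) + ∑ j, ‖B i j‖₊ ≤ ‖A‖₊ + ‖B‖₊ :=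
            add_le_add (row_nnnorm_le A i) (row_nnnorm_le B i)
        _ ≤ ‖A‖₊ + ‖B‖₊ + ‖C‖₊ + ‖D‖₊ := by
            exact le_add_right (le_add_right le_rfl)
    · have : ∑ j, ‖Matrix.fromBlocks A B C D (Sum.inr i) j‖₊
          = (∑ j, ‖C i j‖₊) + ∑ j, ‖D i j‖₊ := by
        simp [Fintype.sum_sum_type, Matrix.fromBlocks]
      rw [this]
      calc (∑ j, ‖C i j‖₊) + ∑ j, ‖D i j‖₊ ≤ ‖C‖₊ + ‖D‖₊ :=
            add_le_add (row_nnnorm_le C i) (row_nnnorm_le D i)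
        _ ≤ ‖A‖₊ + ‖B‖₊ + ‖C‖₊ + ‖D‖₊ := by
            rw [add_assoc]
            exact le_add_of_nonneg_left zero_le
  calc ‖Matrix.fromBlocks A B C D‖ = ((‖Matrix.fromBlocks A B C D‖₊ : ℝ≥0) : ℝ) := rfl
    _ ≤ ((‖A‖₊ + ‖B‖₊ + ‖C‖₊ + ‖D‖₊ : ℝ≥0) : ℝ) := by exact_mod_cast h
    _ = ‖A‖ + ‖B‖ + ‖C‖ + ‖D‖ := by push_cast; rfl

lemma norm_toBlocks₁₂_le {m₁ m₂ n₁ n₂ : Type*} [Fintype m₁] [Fintype m₂]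
    [Fintype n₁] [Fintype n₂] (M : Matrix (m₁ ⊕ m₂) (n₁ ⊕ n₂) ℂ) :
    ‖M.toBlocks₁₂‖ ≤ ‖M‖ := by
  have h : ‖M.toBlocks₁₂‖₊ ≤ ‖M‖₊ := by
    rw [Matrix.linfty_opNNNorm_def]
    apply Finset.sup_le
    intro i _
    calc ∑ j, ‖M.toBlocks₁₂ i j‖₊ ≤ ∑ j, ‖M (Sum.inl i) j‖₊ := by
          rw [Fintype.sum_sum_type]
          exact le_add_self
      _ ≤ ‖M‖₊ := row_nnnorm_le M (Sum.inl i)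
  exact_mod_cast h

lemma norm_one_le_matrix (n : ℕ) : ‖(1 : Matrix (Fin n) (Fin n) ℂ)‖ ≤ 1 := by
  rw [← Matrix.diagonal_one, Matrix.linfty_opNorm_diagonal]
  refine (pi_norm_le_iff_of_nonneg zero_le_one).mpr fun i => ?_
  simp

lemma norm_Xl_le (A : ι → Matrix (Fin D₁) (Fin D₁) ℂ)
    (B : ι → Matrix (Fin D₁) (Fin D₂) ℂ)
    (Dm : ι → Matrix (Fin D₂) (Fin D₂) ℂ)
    (c d Mb R₁ R₂ : ℝ) (hR₁ : 0 ≤ R₁) (hR₂ : 0 ≤ R₂)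
    (hc : 0 ≤ c) (hd : 0 ≤ d) (hMb : 0 ≤ Mb)
    (hA : ∀ l : List ι, ‖(l.map A).prod‖ ≤ c * R₁ ^ l.length)
    (hD : ∀ l : List ι, ‖(l.map Dm).prod‖ ≤ d * R₂ ^ l.length)
    (hB : ∀ t, ‖B t‖ ≤ Mb) :
    ∀ (l p : List ι),
      ‖(p.map A).prod * Xl A B Dm l‖
        ≤ c * Mb * d * ∑ j ∈ Finset.range l.length,
            R₁ ^ (p.length + j) * R₂ ^ (l.length - 1 - j) := by
  intro l
  induction l with
  | nil => intro p; simp [Xl]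
  | cons t l ih =>
    intro p
    have hkey : ((p ++ [t]).map A).prod = (p.map A).prod * A t := by simp
    have hexp : (p.map A).prod * Xl A B Dm (t :: l)
        = ((p ++ [t]).map A).prod * Xl A B Dm l
          + (p.map A).prod * (B t * (l.map Dm).prod) := by
      rw [hkey]
      show (p.map A).prod * (A t * Xl A B Dm l + B t * (l.map Dm).prod) = _
      rw [Matrix.mul_add, Matrix.mul_assoc]
    have h1 : ‖((p ++ [t]).map A).prod * Xl A B Dm l‖
        ≤ c * Mb * d * ∑ j ∈ Finset.range l.length,
            R₁ ^ (p.length + 1 + j) * R₂ ^ (l.length - 1 - j) := by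
      have := ih (p ++ [t])
      simpa using this
    have h2 : ‖(p.map A).prod * (B t * (l.map Dm).prod)‖
        ≤ c * Mb * d * (R₁ ^ p.length * R₂ ^ l.length) := by
      calc ‖(p.map A).prod * (B t * (l.map Dm).prod)‖
          ≤ ‖(p.map A).prod‖ * ‖B t * (l.map Dm).prod‖ :=
            Matrix.linfty_opNorm_mul _ _
        _ ≤ ‖(p.map A).prod‖ * (‖B t‖ * ‖(l.map Dm).prod‖) := by
            exact mul_le_mul_of_nonneg_left (Matrix.linfty_opNorm_mul _ _)
              (norm_nonneg _)
        _ ≤ (c * R₁ ^ p.length) * (Mb * (d * R₂ ^ l.length)) := by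
            apply mul_le_mul (hA p) _ (by positivity) (by positivity)
            exact mul_le_mul (hB t) (hD l) (norm_nonneg _) hMb
        _ = c * Mb * d * (R₁ ^ p.length * R₂ ^ l.length) := by ring
    rw [hexp]
    refine (norm_add_le _ _).trans ?_
    refine (add_le_add h1 h2).trans (le_of_eq ?_)
    rw [show (t :: l).length = l.length + 1 from rfl, Finset.sum_range_succ']
    have h3 : ∀ j, l.length + 1 - 1 - (j + 1) = l.length - 1 - j := by
      intro j; omega
    have h4 : l.length + 1 - 1 - 0 = l.length := by omega
    rw [mul_add]
    congr 1
    · congr 1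
      apply Finset.sum_congr rfl
      intro j _
      rw [h3 j]
      ring

end GrowthAux

/-- **Lemma (growth of products of block upper triangular matrices, two blocks).**

Let `𝒢` be a finite set of `(D₁+D₂) × (D₁+D₂)` block upper triangular matrices
(given here as a family `G` indexed by a finite type `ι`), and let `R₁ ≠ R₂` be
non-negative constants such that the products of the diagonal `(i,i)`-blocks of
matrices of `𝒢` grow like `O(Rᵢᵏ)`.  Then `‖G₁ ⋯ G_k‖ = O(max{R₁, R₂}ᵏ)` for all
`G₁, …, G_k ∈ 𝒢`.  The matrix norm is the row sum norm (operator norm induced by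
the maximum norm); by norm equivalence the statement is independent of this
choice. -/
theorem growth_block_triangular_two_blocks
    {D₁ D₂ : ℕ} {ι : Type*} [Fintype ι]
    (G : ι → Matrix (Fin D₁ ⊕ Fin D₂) (Fin D₁ ⊕ Fin D₂) ℂ)
    (htri : ∀ (t : ι) (a : Fin D₁) (b : Fin D₂), G t (Sum.inr b) (Sum.inl a) = 0)
    (R₁ R₂ : ℝ) (hR₁ : 0 ≤ R₁) (hR₂ : 0 ≤ R₂) (hne : R₁ ≠ R₂)
    (C₁ : ℝ)
    (h₁ : ∀ k : ℕ, 1 ≤ k → ∀ w : Fin k → ι,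
      ‖(List.ofFn fun i => Matrix.of fun a b : Fin D₁ =>
          G (w i) (Sum.inl a) (Sum.inl b)).prod‖ ≤ C₁ * R₁ ^ k)
    (C₂ : ℝ)
    (h₂ : ∀ k : ℕ, 1 ≤ k → ∀ w : Fin k → ι,
      ‖(List.ofFn fun i => Matrix.of fun a b : Fin D₂ =>
          G (w i) (Sum.inr a) (Sum.inr b)).prod‖ ≤ C₂ * R₂ ^ k) :
    ∃ C : ℝ, ∀ k : ℕ, 1 ≤ k → ∀ w : Fin k → ι,
      ‖(List.ofFn fun i => G (w i)).prod‖ ≤ C * max R₁ R₂ ^ k := by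
  classical
  set A : ι → Matrix (Fin D₁) (Fin D₁) ℂ :=
    fun t => Matrix.of fun a b : Fin D₁ => G t (Sum.inl a) (Sum.inl b) with hAdef
  set B : ι → Matrix (Fin D₁) (Fin D₂) ℂ :=
    fun t => Matrix.of fun (a : Fin D₁) (b : Fin D₂) => G t (Sum.inl a) (Sum.inr b)
    with hBdef
  set Dm : ι → Matrix (Fin D₂) (Fin D₂) ℂ :=
    fun t => Matrix.of fun a b : Fin D₂ => G t (Sum.inr a) (Sum.inr b) with hDdef
  have hGt : ∀ t, G t = Matrix.fromBlocks (A t) (B t) 0 (Dm t) := by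
    intro t
    ext i j
    cases i <;> cases j <;>
      simp [Matrix.fromBlocks, hAdef, hBdef, hDdef, htri]
  set c : ℝ := max C₁ 1 with hcdef
  set d : ℝ := max C₂ 1 with hddef
  have hc1 : (1 : ℝ) ≤ c := le_max_right _ _
  have hd1 : (1 : ℝ) ≤ d := le_max_right _ _
  have hc0 : (0 : ℝ) ≤ c := le_trans zero_le_one hc1
  have hd0 : (0 : ℝ) ≤ d := le_trans zero_le_one hd1
  set Mb : ℝ := ∑ t : ι, ‖B t‖ with hMdef
  have hMb0 : 0 ≤ Mb := Finset.sum_nonneg fun t _ => norm_nonneg _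
  have hBle : ∀ t : ι, ‖B t‖ ≤ Mb := fun t =>
    Finset.single_le_sum (fun t _ => norm_nonneg (B t)) (Finset.mem_univ t)
  -- product bounds for all lists (including the empty list)
  have hA : ∀ l : List ι, ‖(l.map A).prod‖ ≤ c * R₁ ^ l.length := by
    intro l
    cases l with
    | nil =>
      rw [List.map_nil, List.prod_nil, List.length_nil, pow_zero, mul_one]
      exact (GrowthAux.norm_one_le_matrix D₁).trans hc1
    | cons t l' =>
      have hlen : 1 ≤ (t :: l').length := by simp
      have := h₁ (t :: l').length hlen (fun i => (t :: l').get i)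
      have heq : (List.ofFn fun i => Matrix.of fun a b : Fin D₁ =>
          G ((t :: l').get i) (Sum.inl a) (Sum.inl b)) = (t :: l').map A := by
        rw [show (fun i => Matrix.of fun a b : Fin D₁ =>
            G ((t :: l').get i) (Sum.inl a) (Sum.inl b)) = A ∘ (t :: l').get from rfl,
          ← List.map_ofFn, List.ofFn_get]
      rw [heq] at this
      exact this.trans (mul_le_mul_of_nonneg_right (le_max_left _ _)
        (pow_nonneg hR₁ _))
  have hD : ∀ l : List ι, ‖(l.map Dm).prod‖ ≤ d * R₂ ^ l.length := by
    intro l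
    cases l with
    | nil =>
      rw [List.map_nil, List.prod_nil, List.length_nil, pow_zero, mul_one]
      exact (GrowthAux.norm_one_le_matrix D₂).trans hd1
    | cons t l' =>
      have hlen : 1 ≤ (t :: l').length := by simp
      have := h₂ (t :: l').length hlen (fun i => (t :: l').get i)
      have heq : (List.ofFn fun i => Matrix.of fun a b : Fin D₂ =>
          G ((t :: l').get i) (Sum.inr a) (Sum.inr b)) = (t :: l').map Dm := by
        rw [show (fun i => Matrix.of fun a b : Fin D₂ =>
            G ((t :: l').get i) (Sum.inr a) (Sum.inr b)) = Dm ∘ (t :: l').get from rfl,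
          ← List.map_ofFn, List.ofFn_get]
      rw [heq] at this
      exact this.trans (mul_le_mul_of_nonneg_right (le_max_left _ _)
        (pow_nonneg hR₂ _))
  set R : ℝ := max R₁ R₂ with hRdef
  have hR0 : 0 ≤ R := le_trans hR₁ (le_max_left _ _)
  have habs : 0 < |R₁ - R₂| := abs_pos.mpr (sub_ne_zero.mpr hne)
  -- bound for the geometric double sum
  have hsum : ∀ k : ℕ, (∑ j ∈ Finset.range k, R₁ ^ j * R₂ ^ (k - 1 - j))
      ≤ 2 * R ^ k / |R₁ - R₂| := by
    intro k
    set S : ℝ := ∑ j ∈ Finset.range k, R₁ ^ j * R₂ ^ (k - 1 - j) with hSdef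
    have hS0 : 0 ≤ S :=
      Finset.sum_nonneg fun j _ => mul_nonneg (pow_nonneg hR₁ _) (pow_nonneg hR₂ _)
    have hgeom : S * (R₁ - R₂) = R₁ ^ k - R₂ ^ k := geom_sum₂_mul R₁ R₂ k
    have hmul : S * |R₁ - R₂| ≤ 2 * R ^ k := by
      have h1 : S * |R₁ - R₂| = |S * (R₁ - R₂)| := by
        rw [abs_mul, abs_of_nonneg hS0]
      rw [h1, hgeom]
      have h2 : |R₁ ^ k - R₂ ^ k| ≤ R₁ ^ k + R₂ ^ k := by
        refine (abs_sub _ _).trans ?_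
        rw [abs_of_nonneg (pow_nonneg hR₁ _), abs_of_nonneg (pow_nonneg hR₂ _)]
      refine h2.trans ?_
      have := add_le_add (pow_le_pow_left₀ hR₁ (le_max_left R₁ R₂) k)
        (pow_le_pow_left₀ hR₂ (le_max_right R₁ R₂) k)
      linarith
    exact (le_div_iff₀ habs).mpr hmul
  refine ⟨c + d + 2 * (c * Mb * d) / |R₁ - R₂|, ?_⟩
  intro k hk w
  set l : List ι := List.ofFn w with hldef
  have hlen : l.length = k := by simp [hldef]
  have hprod : (List.ofFn fun i => G (w i)).prod = (l.map G).prod := by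
    rw [hldef, List.map_ofFn]
    rfl
  have hfact : (l.map G).prod
      = Matrix.fromBlocks (l.map A).prod (GrowthAux.Xl A B Dm l) 0 (l.map Dm).prod := by
    have : l.map G = l.map fun t => Matrix.fromBlocks (A t) (B t) 0 (Dm t) := by
      apply List.map_congr_left
      intro t _
      exact hGt t
    rw [this, GrowthAux.prod_fromBlocks]
  have hX : ‖GrowthAux.Xl A B Dm l‖
      ≤ c * Mb * d * ∑ j ∈ Finset.range l.length,
          R₁ ^ j * R₂ ^ (l.length - 1 - j) := by
    have := GrowthAux.norm_Xl_le A B Dm c d Mb R₁ R₂ hR₁ hR₂ hc0 hd0 hMb0 hA hD hBle l []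
    simpa using this
  have hXR : ‖GrowthAux.Xl A B Dm l‖ ≤ c * Mb * d * (2 * R ^ k / |R₁ - R₂|) := by
    refine hX.trans ?_
    rw [hlen]
    exact mul_le_mul_of_nonneg_left (hsum k) (by positivity)
  have hAR : ‖(l.map A).prod‖ ≤ c * R ^ k := by
    refine (hA l).trans ?_
    rw [hlen]
    exact mul_le_mul_of_nonneg_left (pow_le_pow_left₀ hR₁ (le_max_left _ _) k) hc0
  have hDR : ‖(l.map Dm).prod‖ ≤ d * R ^ k := by
    refine (hD l).trans ?_
    rw [hlen]
    exact mul_le_mul_of_nonneg_left (pow_le_pow_left₀ hR₂ (le_max_right _ _) k) hd0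
  rw [hprod, hfact]
  refine (GrowthAux.norm_fromBlocks_le _ _ _ _).trans ?_
  have hz : ‖(0 : Matrix (Fin D₂) (Fin D₁) ℂ)‖ = 0 := norm_zero
  rw [hz]
  have : c * Mb * d * (2 * R ^ k / |R₁ - R₂|)
      = 2 * (c * Mb * d) / |R₁ - R₂| * R ^ k := by
    field_simp
  calc ‖(l.map A).prod‖ + ‖GrowthAux.Xl A B Dm l‖ + 0 + ‖(l.map Dm).prod‖
      ≤ c * R ^ k + c * Mb * d * (2 * R ^ k / |R₁ - R₂|) + 0 + d * R ^ k := by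
        exact add_le_add (add_le_add (add_le_add hAR hXR) le_rfl) hDR
    _ = (c + d + 2 * (c * Mb * d) / |R₁ - R₂|) * R ^ k := by
        field_simp
        ring
end

section
/- Let q ≥ 2 and n₀ ≥ 1 be integers, let C be a D×D complex matrix, W a D×n₀ complex matrix, and let J be the n₀×n₀ matrix with entries J_{k,j} = [jq ≤ k < jq + q] for 0 ≤ k, j < n₀ (i.e., J = Σ_{0≤r<q} J_r where (J_r)_{k,j} = [jq = k − r]). Let C̃ := [[C, W],[0, J]] be the corresponding (D+n₀)×(D+n₀) block matrix. Then σ(C̃) ⊆ σ(C) ∪ {0, 1}. Moreover: (a) if n₀ = 1, then σ(C̃) = σ(C) ∪ {1}, and for every λ ∈ ℂ \ {1} the size of the largest Jordan block of C̃ for λ equals the size of the largest Jordan block of C for λ; (b) if n₀ ≥ 2, then σ(C̃) = σ(C) ∪ {0, 1}, and for every λ ∈ ℂ \ {0, 1} the size of the largest Jordan block of C̃ for λ equals the size of the largest Jordan block of C for λ. -/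
open scoped BigOperators


open Polynomial Matrix

-- matrix of a function: row k has a single 1 at column g k
private def funMat {n : ℕ} (g : Fin n → Fin n) : Matrix (Fin n) (Fin n) ℂ :=
  Matrix.of fun k j => if j = g k then 1 else 0

private lemma funMat_mul {n : ℕ} (g h : Fin n → Fin n) :
    funMat g * funMat h = funMat (fun k => h (g k)) := by
  ext k j
  simp only [funMat, Matrix.mul_apply, Matrix.of_apply, ite_mul, one_mul, zero_mul]
  rw [Finset.sum_ite_eq' Finset.univ (g k) (fun x => if j = h x then (1:ℂ) else 0)]
  simp

private lemma funMat_id {n : ℕ} : funMat (id : Fin n → Fin n) = 1 := by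
  ext k j
  simp [funMat, Matrix.one_apply, eq_comm]

private lemma funMat_pow {n : ℕ} (g : Fin n → Fin n) (m : ℕ) :
    funMat g ^ m = funMat (g^[m]) := by
  induction m with
  | zero => simp [funMat_id]
  | succ m ih =>
      rw [pow_succ, ih, funMat_mul, Function.iterate_succ']
      rfl

private lemma aeval_blockTriangular {n m : ℕ}
    (A : Matrix (Fin n) (Fin n) ℂ) (W : Matrix (Fin n) (Fin m) ℂ)
    (B : Matrix (Fin m) (Fin m) ℂ) (p : ℂ[X]) :
    ∃ U, aeval (fromBlocks A W 0 B) p = fromBlocks (aeval A p) U 0 (aeval B p) := by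
  induction p using Polynomial.induction_on with
  | C a =>
      refine ⟨0, ?_⟩
      simp only [aeval_C]
      rw [Algebra.algebraMap_eq_smul_one, Algebra.algebraMap_eq_smul_one,
        Algebra.algebraMap_eq_smul_one, ← Matrix.fromBlocks_one, Matrix.fromBlocks_smul]
      simp
  | add p q hp hq =>
      obtain ⟨U1, h1⟩ := hp; obtain ⟨U2, h2⟩ := hq
      refine ⟨U1 + U2, ?_⟩
      rw [map_add, map_add, map_add, h1, h2, Matrix.fromBlocks_add, add_zero]
  | monomial k a ih =>
      obtain ⟨U1, h1⟩ := ih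
      refine ⟨aeval A (C a * X ^ k) * W + U1 * B, ?_⟩
      have e0 : (C a * X ^ (k+1) : ℂ[X]) = (C a * X ^ k) * X := by ring
      have e1 : ∀ {d₁ d₂ : ℕ} (M : Matrix (Fin d₁ ⊕ Fin d₂) (Fin d₁ ⊕ Fin d₂) ℂ),
          aeval M (C a * X ^ k * X) = aeval M (C a * X ^ k) * M := fun M => by
        rw [_root_.map_mul, aeval_X]
      have e2 : ∀ {d : ℕ} (M : Matrix (Fin d) (Fin d) ℂ),
          aeval M (C a * X ^ k * X) = aeval M (C a * X ^ k) * M := fun M => by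
        rw [_root_.map_mul, aeval_X]
      rw [e0, e1, e2, e2, h1, Matrix.fromBlocks_multiply]
      simp

private lemma mem_spectrum_iff_isRoot {n : Type*} [Fintype n] [DecidableEq n]
    (M : Matrix n n ℂ) (μ : ℂ) :
    μ ∈ spectrum ℂ M ↔ (minpoly ℂ M).IsRoot μ := by
  rw [← AlgEquiv.spectrum_eq (Matrix.toLinAlgEquiv (Pi.basisFun ℂ n)) M,
    ← Module.End.hasEigenvalue_iff_mem_spectrum,
    Module.End.hasEigenvalue_iff_isRoot]
  rw [minpoly.algEquiv_eq]

/-- **Proposition (eigenvalues after offset correction).**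

Let `q ≥ 2` and `n₀ ≥ 1` be integers, `C` a `D × D` complex matrix, `W` a
`D × n₀` complex matrix, and `J` the `n₀ × n₀` matrix with entries
`J_{k,j} = [jq ≤ k < jq + q]` (i.e., `J = Σ_r J_r` with `(J_r)_{k,j} = [jq = k − r]`).
Let `C̃ = [[C, W], [0, J]]`.  Then `σ(C̃) ⊆ σ(C) ∪ {0, 1}`; if `n₀ = 1` then
`σ(C̃) = σ(C) ∪ {1}` and the largest Jordan block sizes (`= root multiplicities
in the minimal polynomial`) of `C̃` and `C` agree for every `λ ≠ 1`; if `n₀ ≥ 2`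
then `σ(C̃) = σ(C) ∪ {0, 1}` and they agree for every `λ ∉ {0, 1}`. -/
theorem spectrum_offset_correction
    (q n₀ D : ℕ) (hq : 2 ≤ q) (hn₀ : 1 ≤ n₀)
    (C : Matrix (Fin D) (Fin D) ℂ) (W : Matrix (Fin D) (Fin n₀) ℂ)
    (J : Matrix (Fin n₀) (Fin n₀) ℂ)
    (hJ : ∀ k j : Fin n₀,
      J k j = if (j : ℕ) * q ≤ (k : ℕ) ∧ (k : ℕ) < (j : ℕ) * q + q then 1 else 0)
    (Ct : Matrix (Fin D ⊕ Fin n₀) (Fin D ⊕ Fin n₀) ℂ)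
    (hCt : Ct = Matrix.fromBlocks C W 0 J) :
    spectrum ℂ Ct ⊆ spectrum ℂ C ∪ {0, 1} ∧
    (n₀ = 1 →
      spectrum ℂ Ct = spectrum ℂ C ∪ {1} ∧
      ∀ μ : ℂ, μ ≠ 1 →
        Polynomial.rootMultiplicity μ (minpoly ℂ Ct)
          = Polynomial.rootMultiplicity μ (minpoly ℂ C)) ∧
    (2 ≤ n₀ →
      spectrum ℂ Ct = spectrum ℂ C ∪ {0, 1} ∧
      ∀ μ : ℂ, μ ≠ 0 → μ ≠ 1 →
        Polynomial.rootMultiplicity μ (minpoly ℂ Ct)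
          = Polynomial.rootMultiplicity μ (minpoly ℂ C)) := by
  subst hCt
  have hq0 : 0 < q := by omega
  have hn0 : 0 < n₀ := hn₀
  -- the function whose matrix is J
  set f : Fin n₀ → Fin n₀ :=
    fun k => ⟨(k : ℕ) / q, lt_of_le_of_lt (Nat.div_le_self _ _) k.2⟩ with hf
  have hJf : J = funMat f := by
    ext k j
    rw [hJ]
    simp only [funMat, Matrix.of_apply]
    congr 1
    rw [eq_iff_iff]
    constructor
    · rintro ⟨h1, h2⟩
      have hdiv : (k : ℕ) / q = (j : ℕ) :=
        Nat.div_eq_of_lt_le h1 (by rw [Nat.succ_mul]; exact h2)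
      exact Fin.ext (by simp [hf, hdiv])
    · intro h
      have hv : (j : ℕ) = (k : ℕ) / q := by rw [h]
      refine ⟨by rw [hv]; exact Nat.div_mul_le_self _ _, ?_⟩
      rw [hv]
      calc (k : ℕ) = q * ((k : ℕ) / q) + (k : ℕ) % q := (Nat.div_add_mod _ _).symm
        _ < q * ((k : ℕ) / q) + q := Nat.add_lt_add_left (Nat.mod_lt _ hq0) _
        _ = (k : ℕ) / q * q + q := by rw [Nat.mul_comm]
  have hfix : f ⟨0, hn0⟩ = ⟨0, hn0⟩ := Fin.ext (by simp [hf])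
  have hiter : ∀ (m : ℕ) (k : Fin n₀), (k : ℕ) < m → f^[m] k = ⟨0, hn0⟩ := by
    intro m
    induction m with
    | zero => exact fun k hk => absurd hk (Nat.not_lt_zero _)
    | succ m ih =>
        intro k hk
        rw [Function.iterate_succ_apply]
        by_cases h0 : (k : ℕ) = 0
        · have hk0 : k = ⟨0, hn0⟩ := Fin.ext h0
          rw [hk0, hfix]
          exact Function.iterate_fixed hfix m
        · refine ih (f k) ?_
          have hlt : (k : ℕ) / q < (k : ℕ) := Nat.div_lt_self (by omega) (by omega)
          have : ((f k : Fin n₀) : ℕ) = (k : ℕ) / q := by simp [hf]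
          omega
  have hpow : J ^ (n₀ + 1) = J ^ n₀ := by
    have hff : f^[n₀ + 1] = f^[n₀] := by
      funext k
      rw [Function.iterate_succ_apply', hiter n₀ k k.2, hfix]
    rw [hJf, funMat_pow, funMat_pow, hff]
  have hJann : aeval J ((X : ℂ[X]) ^ n₀ * (X - 1)) = 0 := by
    rw [_root_.map_mul, map_pow, aeval_X, map_sub, aeval_X, _root_.map_one,
      mul_sub, mul_one, ← pow_succ, hpow, sub_self]
  -- minimal polynomial divisibilities
  have hintC : IsIntegral ℂ C := Matrix.isIntegral C
  have hintJ : IsIntegral ℂ J := Matrix.isIntegral J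
  have hintT : IsIntegral ℂ (fromBlocks C W 0 J) := Matrix.isIntegral _
  have hCne : minpoly ℂ C ≠ 0 := minpoly.ne_zero hintC
  have hJne : minpoly ℂ J ≠ 0 := minpoly.ne_zero hintJ
  have hTne : minpoly ℂ (fromBlocks C W 0 J) ≠ 0 := minpoly.ne_zero hintT
  have hdvdC : minpoly ℂ C ∣ minpoly ℂ (fromBlocks C W 0 J) := by
    apply minpoly.dvd
    obtain ⟨U, hU⟩ := aeval_blockTriangular C W J (minpoly ℂ (fromBlocks C W 0 J))
    rw [minpoly.aeval] at hU
    ext i j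
    have := congrFun (congrFun hU (Sum.inl i)) (Sum.inl j)
    simpa using this.symm
  have hdvdJ : minpoly ℂ J ∣ minpoly ℂ (fromBlocks C W 0 J) := by
    apply minpoly.dvd
    obtain ⟨U, hU⟩ := aeval_blockTriangular C W J (minpoly ℂ (fromBlocks C W 0 J))
    rw [minpoly.aeval] at hU
    ext i j
    have := congrFun (congrFun hU (Sum.inr i)) (Sum.inr j)
    simpa using this.symm
  have hdvdT : minpoly ℂ (fromBlocks C W 0 J) ∣ minpoly ℂ C * minpoly ℂ J := by
    apply minpoly.dvd
    obtain ⟨U1, h1⟩ := aeval_blockTriangular C W J (minpoly ℂ C)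
    obtain ⟨U2, h2⟩ := aeval_blockTriangular C W J (minpoly ℂ J)
    rw [_root_.map_mul, h1, h2, minpoly.aeval, minpoly.aeval, Matrix.fromBlocks_multiply]
    simp
  have hspecUnion : spectrum ℂ (fromBlocks C W 0 J) = spectrum ℂ C ∪ spectrum ℂ J := by
    ext μ
    simp only [mem_spectrum_iff_isRoot, Set.mem_union]
    constructor
    · intro h
      have h' := h.dvd hdvdT
      simp only [IsRoot, eval_mul] at h'
      rcases mul_eq_zero.mp h' with h' | h'
      · exact Or.inl h'
      · exact Or.inr h'
    · rintro (h | h)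
      exacts [h.dvd hdvdC, h.dvd hdvdJ]
  have hrootJ01 : ∀ μ : ℂ, (minpoly ℂ J).IsRoot μ → μ = 0 ∨ μ = 1 := by
    intro μ h
    have hd : minpoly ℂ J ∣ (X : ℂ[X]) ^ n₀ * (X - 1) := minpoly.dvd _ _ hJann
    have h' := h.dvd hd
    simp only [IsRoot, eval_mul, eval_pow, eval_X, eval_sub, eval_one] at h'
    rcases mul_eq_zero.mp h' with h' | h'
    · exact Or.inl (pow_eq_zero_iff (by omega) |>.mp h')
    · exact Or.inr (sub_eq_zero.mp h')
  have hone : (1 : ℂ) ∈ spectrum ℂ J := by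
    rw [spectrum.mem_iff]
    intro h
    rw [_root_.map_one] at h
    have hdet := (Matrix.isUnit_iff_isUnit_det _).mp h
    have hdet0 : ((1 : Matrix (Fin n₀) (Fin n₀) ℂ) - J).det = 0 := by
      rw [← Matrix.exists_mulVec_eq_zero_iff]
      refine ⟨fun _ => 1, ?_, ?_⟩
      · intro h0
        have := congrFun h0 ⟨0, hn0⟩
        simpa using this
      · funext k
        simp [Matrix.mulVec, dotProduct, Matrix.sub_apply, Matrix.one_apply, hJf, funMat,
          Finset.sum_sub_distrib]
    rw [hdet0] at hdet
    simp at hdet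
  have hmult : ∀ μ : ℂ, ¬(minpoly ℂ J).IsRoot μ →
      rootMultiplicity μ (minpoly ℂ (fromBlocks C W 0 J))
        = rootMultiplicity μ (minpoly ℂ C) := by
    intro μ hμ
    apply le_antisymm
    · have h1 : rootMultiplicity μ (minpoly ℂ (fromBlocks C W 0 J))
          ≤ rootMultiplicity μ (minpoly ℂ C * minpoly ℂ J) := by
        rw [le_rootMultiplicity_iff (mul_ne_zero hCne hJne)]
        exact dvd_trans (pow_rootMultiplicity_dvd _ _) hdvdT
      rwa [rootMultiplicity_mul (mul_ne_zero hCne hJne),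
        rootMultiplicity_eq_zero hμ, add_zero] at h1
    · rw [le_rootMultiplicity_iff hTne]
      exact dvd_trans (pow_rootMultiplicity_dvd _ _) hdvdC
  refine ⟨?_, ?_, ?_⟩
  · -- σ(Ct) ⊆ σ(C) ∪ {0, 1}
    intro μ hμ
    rw [hspecUnion] at hμ
    rcases hμ with h | h
    · exact Or.inl h
    · right
      have := hrootJ01 μ ((mem_spectrum_iff_isRoot J μ).mp h)
      simpa using this
  · -- n₀ = 1
    intro h1
    subst h1
    have hJ1 : J = 1 := by
      ext k j
      fin_cases k; fin_cases j
      rw [hJ]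
      simp only [Fin.val_zero, Nat.zero_mul, Nat.zero_add, Nat.le_refl, true_and]
      rw [if_pos (by omega)]
      simp [Matrix.one_apply]
    constructor
    · rw [hspecUnion, hJ1, spectrum.one_eq]
    · intro μ hμ
      apply hmult
      intro hr
      have hd : minpoly ℂ J ∣ (X - 1 : ℂ[X]) := by
        apply minpoly.dvd
        rw [hJ1, map_sub, aeval_X, _root_.map_one, sub_self]
      have := hr.dvd hd
      simp only [IsRoot, eval_sub, eval_X, eval_one] at this
      exact hμ (sub_eq_zero.mp this)
  · -- 2 ≤ n₀
    intro h2
    have hzero : (0 : ℂ) ∈ spectrum ℂ J := by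
      rw [spectrum.zero_mem_iff]
      intro h
      have hdet := (Matrix.isUnit_iff_isUnit_det _).mp h
      have hlast : n₀ - 1 < n₀ := by omega
      have hcol : ∀ k : Fin n₀, J k ⟨n₀ - 1, hlast⟩ = 0 := by
        intro k
        rw [hJ]
        apply if_neg
        rintro ⟨hle, -⟩
        have h3 : (n₀ - 1) * 2 ≤ (n₀ - 1) * q := Nat.mul_le_mul_left _ hq
        have h4 := Nat.le_trans h3 hle
        have h5 := k.2
        omega
      have hdet0 : J.det = 0 := by
        rw [← Matrix.exists_mulVec_eq_zero_iff]
        refine ⟨Pi.single ⟨n₀ - 1, hlast⟩ 1, ?_, ?_⟩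
        · intro h0
          have := congrFun h0 ⟨n₀ - 1, hlast⟩
          simpa using this
        · rw [Matrix.mulVec_single]
          funext k
          simp [hcol k]
      rw [hdet0] at hdet
      simp at hdet
    have hJspec : spectrum ℂ J = {0, 1} := by
      ext μ
      constructor
      · intro h
        have := hrootJ01 μ ((mem_spectrum_iff_isRoot J μ).mp h)
        simpa using this
      · intro h
        simp only [Set.mem_insert_iff, Set.mem_singleton_iff] at h
        rcases h with rfl | rfl
        exacts [hzero, hone]
    constructor
    · rw [hspecUnion, hJspec]
    · intro μ hμ0 hμ1
      apply hmult
      intro hr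
      rcases hrootJ01 μ hr with h | h
      exacts [hμ0 h, hμ1 h]
end

section
/- Let q ≥ 2 and n₀ ≥ 1 be integers. For 0 ≤ r < q let A_r be a D×D complex matrix, W_r a D×n₀ complex matrix, and J_r the n₀×n₀ matrix with entries (J_r)_{k,j} = [jq = k − r] for 0 ≤ k, j < n₀; set Ã_r := [[A_r, W_r],[0, J_r]]. Let 𝒜 := {A₀, …, A_{q−1}}, 𝒜̃ := {Ã₀, …, Ã_{q−1}} and 𝒥 := {J₀, …, J_{q−1}}. Then the joint spectral radii satisfy ρ(𝒜̃) = max{ρ(𝒜), 1} and ρ(𝒥) = 1; in particular, if ρ(𝒜) ≥ 1 then ρ(𝒜̃) = ρ(𝒜). Furthermore, if ρ(𝒜) > 1 and 𝒜 has the simple growth property, then 𝒜̃ has the simple growth property. -/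
open scoped BigOperators

attribute [local instance] Matrix.linftyOpNormedRing

/-- The joint spectral radius of a finite family of square complex matrices,
defined (following Rota–Strang) as
`inf_{k ≥ 1} max {‖G₁ ⋯ G_k‖^{1/k} : G₁, …, G_k ∈ 𝒢}`,
which coincides with the limit `lim_{k → ∞} max {‖G₁ ⋯ G_k‖^{1/k}}`.
The norm is the row sum norm; the value is independent of the chosen norm. -/
noncomputable def jsr {n ι : Type*} [Fintype n] [DecidableEq n] [Fintype ι]
    (A : ι → Matrix n n ℂ) : ℝ :=
  ⨅ k : ℕ, ⨆ w : Fin (k + 1) → ι,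
    ‖(List.ofFn fun i => A (w i)).prod‖ ^ ((k + 1 : ℝ)⁻¹)

/-- A finite family `A` of square matrices has the simple growth property if
`‖G₁ ⋯ G_k‖ = O(ρ(𝒢)^k)` for products of matrices of the family. -/
def HasSimpleGrowth {n ι : Type*} [Fintype n] [DecidableEq n] [Fintype ι]
    (A : ι → Matrix n n ℂ) : Prop :=
  ∃ C : ℝ, ∀ k : ℕ, 1 ≤ k → ∀ w : Fin k → ι,
    ‖(List.ofFn fun i => A (w i)).prod‖ ≤ C * jsr A ^ k

attribute [local instance] Matrix.linftyOpNormedAddCommGroup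

open scoped NNReal

namespace JsrAux

set_option linter.unusedSectionVars false

section NormLemmas

variable {m' n' p' q' : Type*} [Fintype m'] [Fintype n'] [Fintype p'] [Fintype q']

lemma mat_norm_le (M : Matrix m' n' ℂ) {c : ℝ} (hc : 0 ≤ c)
    (h : ∀ i, ∑ j, ‖M i j‖ ≤ c) : ‖M‖ ≤ c := by
  rw [Matrix.linfty_opNorm_def, ← Real.coe_toNNReal c hc, NNReal.coe_le_coe]
  refine Finset.sup_le fun i _ => ?_
  rw [← NNReal.coe_le_coe, Real.coe_toNNReal c hc, NNReal.coe_sum]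
  simpa [coe_nnnorm] using h i

lemma row_sum_le_norm (M : Matrix m' n' ℂ) (i : m') : ∑ j, ‖M i j‖ ≤ ‖M‖ := by
  rw [Matrix.linfty_opNorm_def]
  have h := Finset.le_sup (f := fun i => ∑ j, ‖M i j‖₊) (Finset.mem_univ i)
  calc ∑ j, ‖M i j‖ = ((∑ j, ‖M i j‖₊ : ℝ≥0) : ℝ) := by
        rw [NNReal.coe_sum]; simp [coe_nnnorm]
    _ ≤ _ := NNReal.coe_le_coe.2 h

lemma entry_le_norm (M : Matrix m' n' ℂ) (i : m') (j : n') : ‖M i j‖ ≤ ‖M‖ :=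
  le_trans (Finset.single_le_sum (f := fun j => ‖M i j‖)
    (fun _ _ => norm_nonneg _) (Finset.mem_univ j)) (row_sum_le_norm M i)

lemma norm_one_le [DecidableEq n'] : ‖(1 : Matrix n' n' ℂ)‖ ≤ 1 := by
  refine mat_norm_le _ zero_le_one fun i => ?_
  have h : ∀ j, ‖(1 : Matrix n' n' ℂ) i j‖ = if i = j then 1 else 0 := by
    intro j; rw [Matrix.one_apply]; split <;> simp
  simp [h]

lemma norm_fromBlocks_le (P : Matrix m' n' ℂ) (B : Matrix m' q' ℂ)
    (C : Matrix p' n' ℂ) (Q : Matrix p' q' ℂ) :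
    ‖Matrix.fromBlocks P B C Q‖ ≤ max (‖P‖ + ‖B‖) (‖C‖ + ‖Q‖) := by
  refine mat_norm_le _ (le_max_of_le_left (by positivity)) fun i => ?_
  cases i with
  | inl a =>
      refine le_max_of_le_left ?_
      rw [Fintype.sum_sum_type]
      exact add_le_add (row_sum_le_norm P a) (row_sum_le_norm B a)
  | inr a =>
      refine le_max_of_le_right ?_
      rw [Fintype.sum_sum_type]
      exact add_le_add (row_sum_le_norm C a) (row_sum_le_norm Q a)

lemma norm_fromBlocks_ge₁₁ (P : Matrix m' n' ℂ) (B : Matrix m' q' ℂ)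
    (C : Matrix p' n' ℂ) (Q : Matrix p' q' ℂ) :
    ‖P‖ ≤ ‖Matrix.fromBlocks P B C Q‖ := by
  refine mat_norm_le _ (norm_nonneg _) fun i => ?_
  refine le_trans ?_ (row_sum_le_norm (Matrix.fromBlocks P B C Q) (Sum.inl i))
  rw [Fintype.sum_sum_type]
  simp only [Matrix.fromBlocks_apply₁₁, Matrix.fromBlocks_apply₁₂]
  exact le_add_of_nonneg_right (Finset.sum_nonneg fun j _ => norm_nonneg (B i j))

lemma norm_fromBlocks_ge₂₂ (P : Matrix m' n' ℂ) (B : Matrix m' q' ℂ)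
    (C : Matrix p' n' ℂ) (Q : Matrix p' q' ℂ) :
    ‖Q‖ ≤ ‖Matrix.fromBlocks P B C Q‖ := by
  refine mat_norm_le _ (norm_nonneg _) fun i => ?_
  refine le_trans ?_ (row_sum_le_norm (Matrix.fromBlocks P B C Q) (Sum.inr i))
  rw [Fintype.sum_sum_type]
  simp only [Matrix.fromBlocks_apply₂₁, Matrix.fromBlocks_apply₂₂]
  exact le_add_of_nonneg_left (Finset.sum_nonneg fun j _ => norm_nonneg (C i j))

end NormLemmas

lemma pow_rpow_inv (x : ℝ) (hx : 0 ≤ x) (k : ℕ) :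
    (x ^ (k + 1)) ^ (((k : ℝ) + 1)⁻¹) = x := by
  rw [show ((k : ℝ) + 1) = ((k + 1 : ℕ) : ℝ) by push_cast; ring]
  exact Real.pow_rpow_inv_natCast hx k.succ_ne_zero

lemma rpow_inv_pow (x : ℝ) (hx : 0 ≤ x) (k : ℕ) :
    (x ^ (((k : ℝ) + 1)⁻¹)) ^ (k + 1) = x := by
  rw [show ((k : ℝ) + 1) = ((k + 1 : ℕ) : ℝ) by push_cast; ring]
  exact Real.rpow_inv_natCast_pow hx k.succ_ne_zero

variable {n ι : Type*} [Fintype n] [DecidableEq n] [Fintype ι] [Nonempty ι]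
variable {G : ι → Matrix n n ℂ}

lemma exists_ofFn : ∀ (k : ℕ) (l : List ι), l.length = k → ∃ w : Fin k → ι, l = List.ofFn w := by
  intro k l h
  subst h
  exact ⟨l.get, (List.ofFn_get l).symm⟩

lemma ofFn_comp_eq_map (G : ι → Matrix n n ℂ) {k : ℕ} (w : Fin k → ι) :
    (List.ofFn fun i => G (w i)) = (List.ofFn w).map G := by
  simp [List.map_ofFn]; rfl

lemma bddAbove_vals (k : ℕ) :
    BddAbove (Set.range fun w : Fin (k + 1) → ι =>
      ‖(List.ofFn fun i => G (w i)).prod‖ ^ ((k + 1 : ℝ)⁻¹)) :=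
  Set.Finite.bddAbove (Set.finite_range _)

lemma term_nonneg (k : ℕ) :
    0 ≤ ⨆ w : Fin (k + 1) → ι, ‖(List.ofFn fun i => G (w i)).prod‖ ^ ((k + 1 : ℝ)⁻¹) :=
  le_ciSup_of_le (bddAbove_vals k) (Classical.arbitrary _)
    (Real.rpow_nonneg (norm_nonneg _) _)

lemma bddBelow_terms :
    BddBelow (Set.range fun k : ℕ => ⨆ w : Fin (k + 1) → ι,
      ‖(List.ofFn fun i => G (w i)).prod‖ ^ ((k + 1 : ℝ)⁻¹)) := by
  refine ⟨0, ?_⟩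
  rintro x ⟨k, rfl⟩
  exact term_nonneg k

lemma jsr_nonneg (G : ι → Matrix n n ℂ) : 0 ≤ jsr G :=
  le_ciInf fun k => term_nonneg k

lemma jsr_le_of_forall_words (k : ℕ) {x : ℝ}
    (h : ∀ w : Fin (k + 1) → ι,
      ‖(List.ofFn fun i => G (w i)).prod‖ ^ ((k + 1 : ℝ)⁻¹) ≤ x) : jsr G ≤ x :=
  le_trans (ciInf_le bddBelow_terms k) (ciSup_le h)

lemma le_jsr_of_forall {c : ℝ}
    (h : ∀ k : ℕ, ∃ w : Fin (k + 1) → ι,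
      c ≤ ‖(List.ofFn fun i => G (w i)).prod‖ ^ ((k + 1 : ℝ)⁻¹)) : c ≤ jsr G :=
  le_ciInf fun k => (h k).elim fun w hw => le_trans hw (le_ciSup (bddAbove_vals k) w)

/-- comparison of jsr for two families with pointwise norm domination -/
lemma jsr_le_jsr {n' : Type*} [Fintype n'] [DecidableEq n'] {H : ι → Matrix n' n' ℂ}
    (h : ∀ (k : ℕ) (w : Fin (k + 1) → ι),
      ‖(List.ofFn fun i => G (w i)).prod‖ ≤ ‖(List.ofFn fun i => H (w i)).prod‖) :
    jsr G ≤ jsr H :=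
  le_ciInf fun k => le_trans (ciInf_le bddBelow_terms k) <| ciSup_le fun w =>
    le_trans (Real.rpow_le_rpow (norm_nonneg _) (h k w) (by positivity))
      (le_ciSup (bddAbove_vals k) w)

/-- from `jsr G < s`, all words of some length `k+1` are bounded by `s^(k+1)` -/
lemma words_le_of_jsr_lt {s : ℝ} (h : jsr G < s) :
    ∃ k : ℕ, ∀ l : List ι, l.length = k + 1 → ‖(l.map G).prod‖ ≤ s ^ (k + 1) := by
  obtain ⟨k, hk⟩ := exists_lt_of_ciInf_lt h
  refine ⟨k, fun l hl => ?_⟩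
  obtain ⟨w, rfl⟩ := exists_ofFn _ l hl
  rw [← ofFn_comp_eq_map]
  have h1 : ‖(List.ofFn fun i => G (w i)).prod‖ ^ ((k + 1 : ℝ)⁻¹) ≤ s :=
    le_of_lt (lt_of_le_of_lt (le_ciSup (bddAbove_vals k) w) hk)
  calc ‖(List.ofFn fun i => G (w i)).prod‖
      = (‖(List.ofFn fun i => G (w i)).prod‖ ^ ((k + 1 : ℝ)⁻¹)) ^ (k + 1) :=
        (rpow_inv_pow _ (norm_nonneg _) k).symm
    _ ≤ s ^ (k + 1) := pow_le_pow_left₀ (Real.rpow_nonneg (norm_nonneg _) _) h1 _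

lemma word_le_pow (G : ι → Matrix n n ℂ) (l : List ι) :
    ‖(l.map G).prod‖ ≤ (1 + ∑ r, ‖G r‖) ^ l.length := by
  induction l with
  | nil =>
      rw [List.map_nil, List.prod_nil, List.length_nil, pow_zero]
      exact norm_one_le
  | cons r l ih =>
      rw [List.map_cons, List.prod_cons, List.length_cons, pow_succ']
      refine le_trans (norm_mul_le _ _) (mul_le_mul ?_ ih (norm_nonneg _) ?_)
      · exact le_add_of_nonneg_of_le zero_le_one
          (Finset.single_le_sum (fun r _ => norm_nonneg (G r)) (Finset.mem_univ r))
      · positivity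

/-- all words (any length) bounded by `c * s ^ length` when `jsr G < s`, `1 ≤ s` -/
lemma words_bound_of_jsr_lt {s : ℝ} (h : jsr G < s) (hs : 1 ≤ s) :
    ∃ c : ℝ, 1 ≤ c ∧ ∀ l : List ι, ‖(l.map G).prod‖ ≤ c * s ^ l.length := by
  obtain ⟨k, hk⟩ := words_le_of_jsr_lt h
  set b := 1 + ∑ r, ‖G r‖ with hb
  have hb1 : 1 ≤ b := le_add_of_le_of_nonneg le_rfl
    (Finset.sum_nonneg fun r _ => norm_nonneg _)
  refine ⟨b ^ (k + 1), one_le_pow₀ hb1, ?_⟩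
  suffices H : ∀ (m : ℕ) (l : List ι), l.length = m →
      ‖(l.map G).prod‖ ≤ b ^ (k + 1) * s ^ l.length from fun l => H l.length l rfl
  intro m
  induction m using Nat.strong_induction_on with
  | _ m ih =>
    intro l hl
    subst hl
    by_cases hm : l.length < k + 1
    · calc ‖(l.map G).prod‖ ≤ b ^ l.length := word_le_pow G l
        _ ≤ b ^ (k + 1) := pow_le_pow_right₀ hb1 (Nat.le_of_lt_succ (by omega))
        _ ≤ b ^ (k + 1) * s ^ l.length :=
          le_mul_of_one_le_right (by positivity) (one_le_pow₀ hs)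
    · push_neg at hm
      have htl : (l.take (k + 1)).length = k + 1 := by
        rw [List.length_take]; omega
      have hdl : (l.drop (k + 1)).length = l.length - (k + 1) := List.length_drop
      have hlt : (l.drop (k + 1)).length < l.length := by omega
      have hbound2 := ih _ hlt (l.drop (k + 1)) rfl
      have hbound1 := hk _ htl
      have hsplit : (l.map G).prod
          = ((l.take (k + 1)).map G).prod * ((l.drop (k + 1)).map G).prod := by
        rw [← List.prod_append, ← List.map_append, List.take_append_drop]
      calc ‖(l.map G).prod‖
          ≤ ‖((l.take (k + 1)).map G).prod‖ * ‖((l.drop (k + 1)).map G).prod‖ := by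
            rw [hsplit]; exact norm_mul_le _ _
        _ ≤ s ^ (k + 1) * (b ^ (k + 1) * s ^ (l.drop (k + 1)).length) :=
            mul_le_mul hbound1 hbound2 (norm_nonneg _) (by positivity)
        _ = b ^ (k + 1) * (s ^ (k + 1) * s ^ (l.length - (k + 1))) := by
            rw [hdl]; ring
        _ = b ^ (k + 1) * s ^ l.length := by
            rw [← pow_add, Nat.add_sub_cancel' hm]

lemma one_le_rpow_inv {x : ℝ} (k : ℕ) (h : 1 ≤ x) : (1 : ℝ) ≤ x ^ ((k + 1 : ℝ)⁻¹) :=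
  calc (1 : ℝ) = 1 ^ ((k + 1 : ℝ)⁻¹) := (Real.one_rpow _).symm
    _ ≤ x ^ ((k + 1 : ℝ)⁻¹) := Real.rpow_le_rpow zero_le_one h (by positivity)

end JsrAux

open JsrAux in
/-- **Proposition (joint spectral radius after offset correction).**

Let `q ≥ 2` and `n₀ ≥ 1` be integers, `A_r` be `D × D` matrices, `W_r` be
`D × n₀` matrices and `J_r` the `n₀ × n₀` matrices with entries `[jq = k − r]`,
and set `Ã_r = [[A_r, W_r], [0, J_r]]`.  Then `ρ(𝒜̃) = max{ρ(𝒜), 1}` and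
`ρ(𝒥) = 1`; in particular `ρ(𝒜) ≥ 1` implies `ρ(𝒜̃) = ρ(𝒜)`.  Furthermore, if
`ρ(𝒜) > 1` and `𝒜` has the simple growth property, then so does `𝒜̃`. -/
theorem jsr_offset_correction
    (q n₀ D : ℕ) (hq : 2 ≤ q) (hn₀ : 1 ≤ n₀)
    (A : Fin q → Matrix (Fin D) (Fin D) ℂ)
    (W : Fin q → Matrix (Fin D) (Fin n₀) ℂ)
    (J : Fin q → Matrix (Fin n₀) (Fin n₀) ℂ)
    (hJ : ∀ (r : Fin q) (k j : Fin n₀),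
      J r k j = if (j : ℤ) * (q : ℤ) = (k : ℤ) - (r : ℤ) then 1 else 0)
    (At : Fin q → Matrix (Fin D ⊕ Fin n₀) (Fin D ⊕ Fin n₀) ℂ)
    (hAt : ∀ r : Fin q, At r = Matrix.fromBlocks (A r) (W r) 0 (J r)) :
    jsr At = max (jsr A) 1 ∧
    jsr J = 1 ∧
    (1 ≤ jsr A → jsr At = jsr A) ∧
    (1 < jsr A → HasSimpleGrowth A → HasSimpleGrowth At) := by
  haveI : NeZero q := ⟨by omega⟩
  haveI : Nonempty (Fin q) := ⟨⟨0, by omega⟩⟩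
  set z0 : Fin n₀ := ⟨0, by omega⟩ with hz0
  -- single letters of 𝒥 have norm at most one
  have hJr_le : ∀ r : Fin q, ‖J r‖ ≤ 1 := by
    intro r
    refine mat_norm_le _ zero_le_one fun i => ?_
    have hval : ∀ j, ‖J r i j‖ = if (j : ℤ) * (q : ℤ) = (i : ℤ) - (r : ℤ) then 1 else 0 := by
      intro j; rw [hJ r i j]; split <;> simp
    rw [Finset.sum_congr rfl fun j _ => hval j, Finset.sum_boole]
    have hcard : (Finset.univ.filter
        fun j : Fin n₀ => (j : ℤ) * (q : ℤ) = (i : ℤ) - (r : ℤ)).card ≤ 1 := by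
      refine Finset.card_le_one.2 fun a ha b hb => ?_
      simp only [Finset.mem_filter] at ha hb
      have hab : (a : ℤ) * (q : ℤ) = (b : ℤ) * (q : ℤ) := by rw [ha.2, hb.2]
      have hq0 : (q : ℤ) ≠ 0 := by exact_mod_cast (by omega : q ≠ 0)
      have := mul_right_cancel₀ hq0 hab
      exact Fin.ext (by exact_mod_cast this)
    exact_mod_cast hcard
  -- words of 𝒥 have norm at most one
  have hJ_word_le : ∀ l : List (Fin q), ‖(l.map J).prod‖ ≤ 1 := by
    intro l
    induction l with
    | nil =>
        rw [List.map_nil, List.prod_nil]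
        exact norm_one_le
    | cons r l ih =>
        rw [List.map_cons, List.prod_cons]
        refine le_trans (norm_mul_le _ _) ?_
        nlinarith [hJr_le r, norm_nonneg (J r), norm_nonneg ((l.map J).prod)]
  -- the constant word `J 0 ⋯ J 0` fixes the basis vector `e_{z0}`
  have hJ0_col : ∀ (m : ℕ) (i : Fin n₀),
      ((List.replicate m (J 0)).prod) i z0 = if i = z0 then 1 else 0 := by
    intro m
    induction m with
    | zero => intro i; simp [Matrix.one_apply]
    | succ m ih =>
        intro i
        rw [List.replicate_succ, List.prod_cons, Matrix.mul_apply]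
        have hterm : ∀ j, J 0 i j * ((List.replicate m (J 0)).prod) j z0
            = if j = z0 then J 0 i z0 else 0 := by
          intro j
          rw [ih j]
          by_cases hj : j = z0
          · subst hj; simp
          · simp [hj]
        rw [Finset.sum_congr rfl fun j _ => hterm j,
          Finset.sum_ite_eq' Finset.univ z0 fun _ => J 0 i z0]
        simp only [Finset.mem_univ, if_true]
        rw [hJ 0 i z0]
        have hzv : ((z0 : Fin n₀) : ℤ) = 0 := by simp [hz0]
        have h0v : ((0 : Fin q) : ℤ) = 0 := by simp
        rw [hzv, h0v, zero_mul, sub_zero]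
        by_cases hi : i = z0
        · subst hi; rw [hzv]; simp
        · rw [if_neg hi, if_neg]
          intro hcon
          have hvi : (i : ℕ) = 0 := by exact_mod_cast hcon.symm
          exact hi (Fin.ext (by simp [hz0, hvi]))
  have hJ_word_ge : ∀ m : ℕ, (1 : ℝ) ≤ ‖(List.replicate m (J 0)).prod‖ := by
    intro m
    have h := entry_le_norm ((List.replicate m (J 0)).prod) z0 z0
    rw [hJ0_col m z0, if_pos rfl] at h
    simpa using h
  -- block structure of products of 𝒜̃
  have hstruct : ∀ l : List (Fin q), ∃ B, (l.map At).prod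
      = Matrix.fromBlocks ((l.map A).prod) B 0 ((l.map J).prod) := by
    intro l
    induction l using List.reverseRecOn with
    | nil => exact ⟨0, by simp [Matrix.fromBlocks_one]⟩
    | append_singleton l r ih =>
        obtain ⟨B, hB⟩ := ih
        refine ⟨(l.map A).prod * W r + B * J r, ?_⟩
        rw [List.map_append, List.prod_append, List.map_singleton, List.prod_singleton,
          hB, hAt r, Matrix.fromBlocks_multiply, List.map_append, List.prod_append,
          List.map_singleton, List.prod_singleton, List.map_append, List.prod_append,
          List.map_singleton, List.prod_singleton]
        simp
  -- the quantitative block bound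
  have hmain : ∀ s cA : ℝ, 1 < s → 0 ≤ cA →
      (∀ l : List (Fin q), ‖(l.map A).prod‖ ≤ cA * s ^ l.length) →
      ∃ c : ℝ, 1 ≤ c ∧ ∀ l : List (Fin q), ‖(l.map At).prod‖ ≤ c * s ^ l.length := by
    intro s cA hs hcA hA
    set WS := 1 + ∑ r, ‖W r‖ with hWS
    have hW0 : (0 : ℝ) ≤ WS := by positivity
    have hWr : ∀ r, ‖W r‖ ≤ WS := fun r => le_add_of_nonneg_of_le zero_le_one
      (Finset.single_le_sum (fun r _ => norm_nonneg (W r)) (Finset.mem_univ r))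
    have key : ∀ l : List (Fin q), ∃ B, (l.map At).prod
        = Matrix.fromBlocks ((l.map A).prod) B 0 ((l.map J).prod)
        ∧ ‖B‖ ≤ cA * WS * ∑ i ∈ Finset.range l.length, s ^ i := by
      intro l
      induction l using List.reverseRecOn with
      | nil => exact ⟨0, by simp [Matrix.fromBlocks_one], by simp⟩
      | append_singleton l r ih =>
          obtain ⟨B, hB, hBn⟩ := ih
          refine ⟨(l.map A).prod * W r + B * J r, ?_, ?_⟩
          · rw [List.map_append, List.prod_append, List.map_singleton, List.prod_singleton,
              hB, hAt r, Matrix.fromBlocks_multiply, List.map_append, List.prod_append,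
              List.map_singleton, List.prod_singleton, List.map_append, List.prod_append,
              List.map_singleton, List.prod_singleton]
            simp
          · calc ‖(l.map A).prod * W r + B * J r‖
                ≤ ‖(l.map A).prod‖ * ‖W r‖ + ‖B‖ * ‖J r‖ :=
                  le_trans (norm_add_le _ _)
                    (add_le_add (Matrix.linfty_opNorm_mul _ _) (Matrix.linfty_opNorm_mul _ _))
              _ ≤ (cA * s ^ l.length) * WS
                  + (cA * WS * ∑ i ∈ Finset.range l.length, s ^ i) * 1 :=
                  add_le_add
                    (mul_le_mul (hA l) (hWr r) (norm_nonneg _) (by positivity))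
                    (mul_le_mul hBn (hJr_le r) (norm_nonneg _) (by positivity))
              _ = cA * WS * ∑ i ∈ Finset.range (l ++ [r]).length, s ^ i := by
                  rw [List.length_append, List.length_singleton, Finset.sum_range_succ]
                  ring
    refine ⟨cA + cA * WS * (s - 1)⁻¹ + 1, ?_, ?_⟩
    · have h1 : (0 : ℝ) ≤ cA * WS * (s - 1)⁻¹ :=
        mul_nonneg (mul_nonneg hcA hW0) (inv_nonneg.2 (by linarith))
      linarith
    intro l
    obtain ⟨B, hB, hBn⟩ := key l
    have hs1 : (0 : ℝ) < s - 1 := by linarith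
    have hgeom : ∑ i ∈ Finset.range l.length, s ^ i ≤ s ^ l.length * (s - 1)⁻¹ := by
      rw [geom_sum_eq (by linarith : s ≠ 1), div_eq_mul_inv]
      have : s ^ l.length - 1 ≤ s ^ l.length := by linarith
      exact mul_le_mul_of_nonneg_right this (inv_nonneg.2 hs1.le)
    have hpow1 : (1 : ℝ) ≤ s ^ l.length := one_le_pow₀ hs.le
    refine le_trans (by rw [hB]; exact norm_fromBlocks_le _ _ _ _) (max_le ?_ ?_)
    · have h2 : ‖B‖ ≤ cA * WS * (s ^ l.length * (s - 1)⁻¹) :=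
        le_trans hBn (mul_le_mul_of_nonneg_left hgeom (by positivity))
      have h3 := hA l
      nlinarith [norm_nonneg B, norm_nonneg ((l.map A).prod)]
    · have h4 := hJ_word_le l
      rw [norm_zero, zero_add]
      nlinarith [mul_nonneg (mul_nonneg hcA hW0) (inv_nonneg.2 hs1.le)]
  -- ρ(𝒥) = 1
  have hjsrJ : jsr J = 1 := by
    refine le_antisymm ?_ ?_
    · refine jsr_le_of_forall_words 0 fun w => ?_
      refine Real.rpow_le_one (norm_nonneg _) ?_ (by positivity)
      rw [ofFn_comp_eq_map]; exact hJ_word_le _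
    · refine le_jsr_of_forall fun k => ⟨fun _ => 0, ?_⟩
      refine one_le_rpow_inv k ?_
      have : (List.ofFn fun _ : Fin (k + 1) => J 0) = List.replicate (k + 1) (J 0) :=
        List.ofFn_const _ _
      rw [this]
      exact hJ_word_ge (k + 1)
  -- ρ(𝒜) ≤ ρ(𝒜̃)
  have h_ge_A : jsr A ≤ jsr At := by
    refine jsr_le_jsr fun k w => ?_
    obtain ⟨B, hB⟩ := hstruct (List.ofFn w)
    rw [ofFn_comp_eq_map, ofFn_comp_eq_map, hB]
    exact norm_fromBlocks_ge₁₁ _ _ _ _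
  -- 1 ≤ ρ(𝒜̃)
  have h_ge_1 : (1 : ℝ) ≤ jsr At := by
    refine le_jsr_of_forall fun k => ⟨fun _ => 0, ?_⟩
    refine one_le_rpow_inv k ?_
    obtain ⟨B, hB⟩ := hstruct (List.ofFn fun _ : Fin (k + 1) => (0 : Fin q))
    rw [ofFn_comp_eq_map, hB]
    refine le_trans ?_ (norm_fromBlocks_ge₂₂ _ _ _ _)
    rw [← ofFn_comp_eq_map]
    have : (List.ofFn fun _ : Fin (k + 1) => J 0) = List.replicate (k + 1) (J 0) :=
      List.ofFn_const _ _
    rw [this]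
    exact hJ_word_ge (k + 1)
  -- ρ(𝒜̃) ≤ max(ρ(𝒜), 1)
  have h_le : jsr At ≤ max (jsr A) 1 := by
    refine le_of_forall_gt_imp_ge_of_dense fun s hs => ?_
    have hs1 : (1 : ℝ) < s := lt_of_le_of_lt (le_max_right _ _) hs
    have hsA : jsr A < s := lt_of_le_of_lt (le_max_left _ _) hs
    obtain ⟨cA, hcA1, hcA⟩ := words_bound_of_jsr_lt hsA hs1.le
    obtain ⟨c, hc1, hc⟩ := hmain s cA hs1 (le_trans zero_le_one hcA1) hcA
    have hk : ∀ k : ℕ, jsr At ≤ c ^ ((k + 1 : ℝ)⁻¹) * s := by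
      intro k
      refine jsr_le_of_forall_words k fun w => ?_
      have hb : ‖(List.ofFn fun i => At (w i)).prod‖ ≤ c * s ^ (k + 1) := by
        have h := hc (List.ofFn w)
        rw [List.length_ofFn] at h
        rwa [ofFn_comp_eq_map]
      calc ‖(List.ofFn fun i => At (w i)).prod‖ ^ ((k + 1 : ℝ)⁻¹)
          ≤ (c * s ^ (k + 1)) ^ ((k + 1 : ℝ)⁻¹) :=
            Real.rpow_le_rpow (norm_nonneg _) hb (by positivity)
        _ = c ^ ((k + 1 : ℝ)⁻¹) * (s ^ (k + 1)) ^ ((k + 1 : ℝ)⁻¹) :=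
            Real.mul_rpow (by linarith) (by positivity)
        _ = c ^ ((k + 1 : ℝ)⁻¹) * s := by rw [pow_rpow_inv s (by linarith) k]
    by_contra hlt
    push_neg at hlt
    set ε := (jsr At - s) / 2 with hε
    have hε0 : 0 < ε := by simp only [hε]; linarith
    set y := 1 + ε / s with hy
    have hy1 : 1 < y := by
      have : 0 < ε / s := div_pos hε0 (by linarith)
      simp only [hy]; linarith
    obtain ⟨nn, hnn⟩ := pow_unbounded_of_one_lt c hy1
    have hcy : c ≤ y ^ (nn + 1) :=
      le_trans hnn.le (pow_le_pow_right₀ hy1.le (Nat.le_succ nn))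
    have h1 : c ^ ((nn + 1 : ℝ)⁻¹) ≤ y := by
      calc c ^ ((nn + 1 : ℝ)⁻¹) ≤ (y ^ (nn + 1)) ^ ((nn + 1 : ℝ)⁻¹) :=
            Real.rpow_le_rpow (by linarith) hcy (by positivity)
        _ = y := pow_rpow_inv y (by linarith) nn
    have h2 : c ^ ((nn + 1 : ℝ)⁻¹) * s ≤ y * s :=
      mul_le_mul_of_nonneg_right h1 (by linarith)
    have hs0 : s ≠ 0 := by linarith
    have h3 : y * s = s + ε := by
      simp only [hy]
      field_simp
    have h5 := hk nn
    have h6 : s + ε < jsr At := by simp only [hε]; linarith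
    have h7 : jsr At ≤ s + ε := h5.trans (h2.trans (le_of_eq h3))
    exact absurd h7 (not_le.2 h6)
  have part1 : jsr At = max (jsr A) 1 := le_antisymm h_le (max_le h_ge_A h_ge_1)
  have part3 : 1 ≤ jsr A → jsr At = jsr A := fun h1 => by
    rw [part1, max_eq_left h1]
  refine ⟨part1, hjsrJ, part3, ?_⟩
  intro hρ hsg
  obtain ⟨C, hC⟩ := hsg
  have hA : ∀ l : List (Fin q), ‖(l.map A).prod‖ ≤ max C 1 * (jsr A) ^ l.length := by
    intro l
    by_cases hl : l = []
    · subst hl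
      simp only [List.map_nil, List.prod_nil, List.length_nil, pow_zero, mul_one]
      exact le_trans norm_one_le (le_max_right _ _)
    · have hlen : 1 ≤ l.length := List.length_pos_iff.2 hl
      obtain ⟨w, hw⟩ := exists_ofFn l.length l rfl
      rw [hw, ← ofFn_comp_eq_map, List.length_ofFn]
      refine le_trans (hC _ hlen w) ?_
      exact mul_le_mul_of_nonneg_right (le_max_left _ _)
        (pow_nonneg (jsr_nonneg A) _)
  obtain ⟨c, hc1, hc⟩ := hmain (jsr A) (max C 1) hρ (by positivity) hA
  refine ⟨c, fun k hk w => ?_⟩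
  rw [part3 hρ.le]
  have h := hc (List.ofFn w)
  rw [List.length_ofFn] at h
  rwa [ofFn_comp_eq_map]
end

section
/- Let q ≥ 2 and m ≥ 0 be integers and set K := (q^m − 1)/(q − 1). For 0 ≤ r < q let A_r = [[J_{r0}, J_{r1}],[0, B_r]] be a block matrix, where J_{r0} is a K×K upper triangular complex matrix with zeros on the diagonal, J_{r1} is a K×q^m complex matrix, and B_r is a q^m×q^m complex matrix. Let 𝒜 := {A₀, …, A_{q−1}}, 𝒥 := {J₀₀, …, J_{(q−1)0}} and ℬ := {B₀, …, B_{q−1}}. Then the joint spectral radii satisfy ρ(𝒜) = ρ(ℬ) and ρ(𝒥) = 0. Furthermore, if ρ(ℬ) > 0 and ℬ has the simple growth property, then 𝒜 has the simple growth property. -/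
open scoped BigOperators

attribute [local instance] Matrix.linftyOpNormedRing

section AuxNorm

attribute [local instance] Matrix.linftyOpNormedAddCommGroup

open Matrix

variable {l m n p : Type*} [Fintype l] [Fintype m] [Fintype n] [Fintype p]

private lemma nn_row_le (P : Matrix l m ℂ) (a : l) : ∑ j, ‖P a j‖₊ ≤ ‖P‖₊ := by
  rw [Matrix.linfty_opNNNorm_def]
  exact Finset.le_sup (f := fun i => ∑ j, ‖P i j‖₊) (Finset.mem_univ a)

private lemma nn_fromBlocks_le (P : Matrix l m ℂ) (Q : Matrix l n ℂ) (Y : Matrix p m ℂ)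
    (R : Matrix p n ℂ) :
    ‖Matrix.fromBlocks P Q Y R‖₊ ≤ max (‖P‖₊ + ‖Q‖₊) (‖Y‖₊ + ‖R‖₊) := by
  rw [Matrix.linfty_opNNNorm_def, Finset.sup_le_iff]
  rintro (a | b) -
  · refine le_max_of_le_left ?_
    calc ∑ j : m ⊕ n, ‖Matrix.fromBlocks P Q Y R (Sum.inl a) j‖₊
        = (∑ j : m, ‖P a j‖₊) + ∑ j : n, ‖Q a j‖₊ := by
          simp [Fintype.sum_sum_type]
      _ ≤ ‖P‖₊ + ‖Q‖₊ := add_le_add (nn_row_le _ _) (nn_row_le _ _)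
  · refine le_max_of_le_right ?_
    calc ∑ j : m ⊕ n, ‖Matrix.fromBlocks P Q Y R (Sum.inr b) j‖₊
        = (∑ j : m, ‖Y b j‖₊) + ∑ j : n, ‖R b j‖₊ := by
          simp [Fintype.sum_sum_type]
      _ ≤ ‖Y‖₊ + ‖R‖₊ := add_le_add (nn_row_le _ _) (nn_row_le _ _)

private lemma nn_blocks_le₁₂ (P : Matrix l m ℂ) (Q : Matrix l n ℂ) (Y : Matrix p m ℂ)
    (R : Matrix p n ℂ) : ‖Q‖₊ ≤ ‖Matrix.fromBlocks P Q Y R‖₊ := by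
  rw [Matrix.linfty_opNNNorm_def (A := Q), Finset.sup_le_iff]
  intro a _
  calc ∑ j, ‖Q a j‖₊ ≤ (∑ j : m, ‖P a j‖₊) + ∑ j : n, ‖Q a j‖₊ := le_add_self
    _ = ∑ j : m ⊕ n, ‖Matrix.fromBlocks P Q Y R (Sum.inl a) j‖₊ := by
        simp [Fintype.sum_sum_type]
    _ ≤ _ := nn_row_le _ _

private lemma nn_blocks_le₂₂ (P : Matrix l m ℂ) (Q : Matrix l n ℂ) (Y : Matrix p m ℂ)
    (R : Matrix p n ℂ) : ‖R‖₊ ≤ ‖Matrix.fromBlocks P Q Y R‖₊ := by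
  rw [Matrix.linfty_opNNNorm_def (A := R), Finset.sup_le_iff]
  intro b _
  calc ∑ j, ‖R b j‖₊ ≤ (∑ j : m, ‖Y b j‖₊) + ∑ j : n, ‖R b j‖₊ := le_add_self
    _ = ∑ j : m ⊕ n, ‖Matrix.fromBlocks P Q Y R (Sum.inr b) j‖₊ := by
        simp [Fintype.sum_sum_type]
    _ ≤ _ := nn_row_le _ _

private lemma norm_fromBlocks_le (P : Matrix l m ℂ) (Q : Matrix l n ℂ) (Y : Matrix p m ℂ)
    (R : Matrix p n ℂ) :
    ‖Matrix.fromBlocks P Q Y R‖ ≤ max (‖P‖ + ‖Q‖) (‖Y‖ + ‖R‖) := by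
  have h := nn_fromBlocks_le P Q Y R
  have := NNReal.coe_le_coe.mpr h
  simpa [NNReal.coe_max] using this

private lemma norm_blocks_le₁₂ (P : Matrix l m ℂ) (Q : Matrix l n ℂ) (Y : Matrix p m ℂ)
    (R : Matrix p n ℂ) : ‖Q‖ ≤ ‖Matrix.fromBlocks P Q Y R‖ :=
  NNReal.coe_le_coe.mpr (nn_blocks_le₁₂ P Q Y R)

private lemma norm_blocks_le₂₂ (P : Matrix l m ℂ) (Q : Matrix l n ℂ) (Y : Matrix p m ℂ)
    (R : Matrix p n ℂ) : ‖R‖ ≤ ‖Matrix.fromBlocks P Q Y R‖ :=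
  NNReal.coe_le_coe.mpr (nn_blocks_le₂₂ P Q Y R)

private lemma norm_listmap_prod_le {ι n : Type*} [Fintype n] [DecidableEq n] [Nonempty n]
    (G : ι → Matrix n n ℂ) (c : ℝ) (hc : 1 ≤ c) (h : ∀ r, ‖G r‖ ≤ c) :
    ∀ l : List ι, ‖(l.map G).prod‖ ≤ c ^ l.length := by
  intro l
  induction l with
  | nil => simpa using norm_one.le
  | cons r t ih =>
      calc ‖(((r :: t).map G)).prod‖ = ‖G r * (t.map G).prod‖ := by simp
        _ ≤ ‖G r‖ * ‖(t.map G).prod‖ := norm_mul_le _ _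
        _ ≤ c * c ^ t.length := by
            apply mul_le_mul (h r) ih (norm_nonneg _) (le_trans zero_le_one hc)
        _ = c ^ (r :: t).length := by rw [List.length_cons, pow_succ']

private lemma exists_blocks {ι α β : Type*} [Fintype α] [Fintype β] [DecidableEq α]
    [DecidableEq β]
    (J0 : ι → Matrix α α ℂ) (J1 : ι → Matrix α β ℂ) (B : ι → Matrix β β ℂ) :
    ∀ l : List ι, ∃ X, (l.map fun r => Matrix.fromBlocks (J0 r) (J1 r) 0 (B r)).prod
      = Matrix.fromBlocks ((l.map J0).prod) X 0 ((l.map B).prod) := by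
  intro l
  induction l with
  | nil => exact ⟨0, by simp [Matrix.fromBlocks_one]⟩
  | cons r t ih =>
      obtain ⟨X, hX⟩ := ih
      refine ⟨J0 r * X + J1 r * (t.map B).prod, ?_⟩
      simp only [List.map_cons, List.prod_cons, hX, Matrix.fromBlocks_multiply]
      simp

private lemma strict_tri_prod {K : ℕ} :
    ∀ (l : List (Matrix (Fin K) (Fin K) ℂ)),
      (∀ M ∈ l, ∀ a b : Fin K, b ≤ a → M a b = 0) →
      ∀ a b : Fin K, (b : ℕ) < (a : ℕ) + l.length → l.prod a b = 0 := by
  intro l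
  induction l with
  | nil =>
      intro _ a b hab
      have : b ≠ a := by
        intro h; subst h; simp at hab
      simp [Matrix.one_apply, Ne.symm this]
  | cons M t ih =>
      intro h a b hab
      rw [List.prod_cons, Matrix.mul_apply]
      refine Finset.sum_eq_zero fun c _ => ?_
      rcases le_or_gt c a with hca | hac
      · rw [h M (by simp) a c hca, zero_mul]
      · rw [ih (fun N hN => h N (by simp [hN])) c b ?_, mul_zero]
        have : (a : ℕ) + 1 ≤ c := hac
        simp only [List.length_cons] at hab
        omega

/-- The key quantitative bound: products of the block matrices `A r` of length `n`
are bounded by a constant times `t ^ n`, provided products of the `B r` are and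
products of `K` of the `J0 r` vanish. -/
private lemma Abound {ι α β : Type*} [Fintype ι] [Fintype α] [Fintype β] [DecidableEq α]
    [DecidableEq β] [Nonempty β]
    (J0 : ι → Matrix α α ℂ) (J1 : ι → Matrix α β ℂ) (B : ι → Matrix β β ℂ)
    (A : ι → Matrix (α ⊕ β) (α ⊕ β) ℂ)
    (hA : ∀ r, A r = Matrix.fromBlocks (J0 r) (J1 r) 0 (B r))
    (K : ℕ) (hnil : ∀ l : List ι, l.length = K → (l.map J0).prod = 0)
    (t Cb : ℝ) (ht : 0 < t) (hCb : 1 ≤ Cb)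
    (hB : ∀ l : List ι, ‖(l.map B).prod‖ ≤ Cb * t ^ l.length) :
    ∃ Ca : ℝ, 1 ≤ Ca ∧ ∀ l : List ι, ‖(l.map A).prod‖ ≤ Ca * t ^ l.length := by
  haveI : Nonempty (α ⊕ β) := ⟨Sum.inr (Classical.arbitrary β)⟩
  set M := 1 + ∑ r, ‖A r‖ with hM
  have hsum : (0:ℝ) ≤ ∑ r, ‖A r‖ := Finset.sum_nonneg fun r _ => norm_nonneg _
  have hM1 : 1 ≤ M := le_add_of_nonneg_right hsum
  have hM0 : (0:ℝ) ≤ M := zero_le_one.trans hM1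
  have hMr : ∀ r, ‖A r‖ ≤ M := fun r => by
    have : ‖A r‖ ≤ ∑ r, ‖A r‖ :=
      Finset.single_le_sum (fun i _ => norm_nonneg (A i)) (Finset.mem_univ r)
    simp only [hM]; linarith
  set c := min t 1 with hc
  have hc0 : 0 < c := lt_min ht one_pos
  have hc1 : c ≤ 1 := min_le_right _ _
  have hct : c ≤ t := min_le_left _ _
  have hMK1 : (1:ℝ) ≤ M ^ K := by
    calc (1:ℝ) = 1 ^ K := (one_pow K).symm
      _ ≤ M ^ K := pow_le_pow_left₀ zero_le_one hM1 K
  have hcK1 : c ^ K ≤ 1 := pow_le_one₀ hc0.le hc1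
  have hcK0 : (0:ℝ) < c ^ K := pow_pos hc0 K
  refine ⟨2 * M ^ K * Cb / c ^ K, ?_, ?_⟩
  · rw [le_div_iff₀ hcK0]
    nlinarith
  · intro l
    have hmapA : ∀ l' : List ι,
        l'.map A = l'.map fun r => Matrix.fromBlocks (J0 r) (J1 r) 0 (B r) :=
      fun l' => List.map_congr_left fun r _ => hA r
    rcases lt_or_ge l.length K with hn | hn
    · have hb := norm_listmap_prod_le A M hM1 hMr l
      have h1 : M ^ l.length ≤ M ^ K := pow_le_pow_right₀ hM1 hn.le
      have h2 : c ^ K ≤ c ^ l.length := pow_le_pow_of_le_one hc0.le hc1 hn.le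
      have h3 : c ^ l.length ≤ t ^ l.length := pow_le_pow_left₀ hc0.le hct _
      have e1 : M ^ K = (M ^ K / c ^ K) * c ^ K := (div_mul_cancel₀ _ hcK0.ne').symm
      have hfrac : (0:ℝ) ≤ M ^ K / c ^ K := by positivity
      calc ‖(l.map A).prod‖ ≤ M ^ l.length := hb
        _ ≤ M ^ K := h1
        _ = (M ^ K / c ^ K) * c ^ K := e1
        _ ≤ (M ^ K / c ^ K) * c ^ l.length := mul_le_mul_of_nonneg_left h2 hfrac
        _ ≤ (M ^ K / c ^ K) * t ^ l.length := mul_le_mul_of_nonneg_left h3 hfrac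
        _ ≤ (2 * M ^ K * Cb / c ^ K) * t ^ l.length := by
            apply mul_le_mul_of_nonneg_right ?_ (by positivity)
            apply div_le_div_of_nonneg_right ?_ hcK0.le
            nlinarith
    · have hlen1 : (l.take K).length = K := by rw [List.length_take]; omega
      have hlen2 : (l.drop K).length = l.length - K := List.length_drop
      obtain ⟨X1, hX1⟩ := exists_blocks J0 J1 B (l.take K)
      obtain ⟨X2, hX2⟩ := exists_blocks J0 J1 B (l.drop K)
      have hP1 : ((l.take K).map J0).prod = 0 := hnil _ hlen1
      have key : (l.map A).prod
          = Matrix.fromBlocks 0 (X1 * ((l.drop K).map B).prod) 0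
              (((l.take K).map B).prod * ((l.drop K).map B).prod) := by
        have hsplit : (l.map A).prod = ((l.take K).map A).prod * ((l.drop K).map A).prod := by
          rw [← List.prod_append, ← List.map_append, List.take_append_drop]
        rw [hsplit, hmapA, hmapA, hX1, hX2, hP1, Matrix.fromBlocks_multiply]
        simp
      have hX1n : ‖X1‖ ≤ M ^ K := by
        calc ‖X1‖ ≤ ‖Matrix.fromBlocks ((l.take K).map J0).prod X1 0
              (((l.take K).map B).prod)‖ := norm_blocks_le₁₂ _ _ _ _
          _ = ‖((l.take K).map A).prod‖ := by rw [hmapA, hX1]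
          _ ≤ M ^ (l.take K).length := norm_listmap_prod_le A M hM1 hMr _
          _ = M ^ K := by rw [hlen1]
      have hR1n : ‖((l.take K).map B).prod‖ ≤ M ^ K := by
        calc ‖((l.take K).map B).prod‖
            ≤ ‖Matrix.fromBlocks ((l.take K).map J0).prod X1 0
              (((l.take K).map B).prod)‖ := norm_blocks_le₂₂ _ _ _ _
          _ = ‖((l.take K).map A).prod‖ := by rw [hmapA, hX1]
          _ ≤ M ^ (l.take K).length := norm_listmap_prod_le A M hM1 hMr _
          _ = M ^ K := by rw [hlen1]
      have hR2 : ‖((l.drop K).map B).prod‖ ≤ Cb * t ^ (l.length - K) := by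
        have := hB (l.drop K)
        rwa [hlen2] at this
      have hR2n : (0:ℝ) ≤ ‖((l.drop K).map B).prod‖ := norm_nonneg _
      have hstep : ‖(l.map A).prod‖ ≤ 2 * M ^ K * (Cb * t ^ (l.length - K)) := by
        rw [key]
        calc ‖Matrix.fromBlocks 0 (X1 * ((l.drop K).map B).prod) 0
              (((l.take K).map B).prod * ((l.drop K).map B).prod)‖
            ≤ max (‖(0 : Matrix α α ℂ)‖ + ‖X1 * ((l.drop K).map B).prod‖)
                (‖(0 : Matrix β α ℂ)‖ +
                  ‖((l.take K).map B).prod * ((l.drop K).map B).prod‖) :=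
              norm_fromBlocks_le _ _ _ _
          _ ≤ ‖X1 * ((l.drop K).map B).prod‖ +
                ‖((l.take K).map B).prod * ((l.drop K).map B).prod‖ := by
              rw [norm_zero, norm_zero, zero_add, zero_add]
              exact max_le (le_add_of_nonneg_right (norm_nonneg _))
                (le_add_of_nonneg_left (norm_nonneg _))
          _ ≤ ‖X1‖ * ‖((l.drop K).map B).prod‖ +
                ‖((l.take K).map B).prod‖ * ‖((l.drop K).map B).prod‖ :=
              add_le_add (Matrix.linfty_opNorm_mul _ _) (Matrix.linfty_opNorm_mul _ _)
          _ ≤ M ^ K * ‖((l.drop K).map B).prod‖ + M ^ K * ‖((l.drop K).map B).prod‖ :=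
              add_le_add (mul_le_mul_of_nonneg_right hX1n hR2n)
                (mul_le_mul_of_nonneg_right hR1n hR2n)
          _ = 2 * M ^ K * ‖((l.drop K).map B).prod‖ := by ring
          _ ≤ 2 * M ^ K * (Cb * t ^ (l.length - K)) := by
              apply mul_le_mul_of_nonneg_left hR2 (by positivity)
      refine hstep.trans ?_
      have e : t ^ (l.length - K) * c ^ K ≤ t ^ l.length := by
        calc t ^ (l.length - K) * c ^ K ≤ t ^ (l.length - K) * t ^ K :=
              mul_le_mul_of_nonneg_left (pow_le_pow_left₀ hc0.le hct K) (by positivity)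
          _ = t ^ l.length := by rw [← pow_add]; congr 1; omega
      have e2 : 2 * M ^ K * (Cb * t ^ (l.length - K))
          = (2 * M ^ K * Cb / c ^ K) * (t ^ (l.length - K) * c ^ K) := by
        field_simp
      rw [e2]
      exact mul_le_mul_of_nonneg_left e (by positivity)

end AuxNorm

section AuxJsr

private lemma jsr_bddBelow {n ι : Type*} [Fintype n] [DecidableEq n] [Fintype ι]
    (A : ι → Matrix n n ℂ) :
    BddBelow (Set.range fun k : ℕ => ⨆ w : Fin (k + 1) → ι,
      ‖(List.ofFn fun i => A (w i)).prod‖ ^ ((k + 1 : ℝ)⁻¹)) := by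
  refine ⟨0, ?_⟩
  rintro x ⟨k, rfl⟩
  exact Real.iSup_nonneg fun w => Real.rpow_nonneg (norm_nonneg _) _

private lemma jsr_nonneg {n ι : Type*} [Fintype n] [DecidableEq n] [Fintype ι]
    (A : ι → Matrix n n ℂ) : 0 ≤ jsr A :=
  Real.iInf_nonneg fun k => Real.iSup_nonneg fun w => Real.rpow_nonneg (norm_nonneg _) _

private lemma jsr_mono {n n' ι : Type*} [Fintype n] [DecidableEq n] [Fintype n']
    [DecidableEq n'] [Fintype ι] [Nonempty ι]
    (G : ι → Matrix n n ℂ) (H : ι → Matrix n' n' ℂ)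
    (h : ∀ l : List ι, ‖(l.map G).prod‖ ≤ ‖(l.map H).prod‖) : jsr G ≤ jsr H := by
  refine ciInf_mono (jsr_bddBelow G) fun k => ?_
  refine ciSup_le fun w => ?_
  refine le_trans ?_ (le_ciSup (Finite.bddAbove_range _) w)
  refine Real.rpow_le_rpow (norm_nonneg _) ?_ (by positivity)
  simpa [List.map_ofFn, Function.comp_def] using h (List.ofFn w)

private lemma jsr_le_of_forall_norm_le {n ι : Type*} [Fintype n] [DecidableEq n]
    [Fintype ι] [Nonempty ι]
    (G : ι → Matrix n n ℂ) (t C : ℝ) (ht : 0 < t) (hC : 1 ≤ C)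
    (h : ∀ l : List ι, ‖(l.map G).prod‖ ≤ C * t ^ l.length) : jsr G ≤ t := by
  have hC0 : (0:ℝ) < C := lt_of_lt_of_le one_pos hC
  have key : ∀ k : ℕ, jsr G ≤ C ^ ((k + 1 : ℝ)⁻¹) * t := by
    intro k
    have h1 : jsr G ≤ ⨆ w : Fin (k + 1) → ι,
        ‖(List.ofFn fun i => G (w i)).prod‖ ^ ((k + 1 : ℝ)⁻¹) :=
      ciInf_le (jsr_bddBelow G) k
    refine h1.trans (ciSup_le fun w => ?_)
    have h2 : ‖(List.ofFn fun i => G (w i)).prod‖ ≤ C * t ^ (k + 1) := by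
      simpa [List.map_ofFn, Function.comp_def] using h (List.ofFn w)
    calc ‖(List.ofFn fun i => G (w i)).prod‖ ^ ((k + 1 : ℝ)⁻¹)
        ≤ (C * t ^ (k + 1)) ^ ((k + 1 : ℝ)⁻¹) :=
          Real.rpow_le_rpow (norm_nonneg _) h2 (by positivity)
      _ = C ^ ((k + 1 : ℝ)⁻¹) * t := by
          rw [Real.mul_rpow hC0.le (by positivity)]
          congr 1
          have hcast : ((k + 1 : ℕ) : ℝ) = (k + 1 : ℝ) := by push_cast; ring
          rw [← hcast, Real.pow_rpow_inv_natCast ht.le (Nat.succ_ne_zero k)]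
  have htend : Filter.Tendsto (fun k : ℕ => C ^ ((k + 1 : ℝ)⁻¹) * t)
      Filter.atTop (nhds t) := by
    have h1 : Filter.Tendsto (fun k : ℕ => ((k : ℝ) + 1)⁻¹) Filter.atTop (nhds 0) := by
      simpa [one_div] using tendsto_one_div_add_atTop_nhds_zero_nat (𝕜 := ℝ)
    have h2 : Filter.Tendsto (fun k : ℕ => C ^ (((k : ℝ) + 1)⁻¹))
        Filter.atTop (nhds 1) := by
      have hcont := (Real.continuousAt_const_rpow (a := C) (b := 0) hC0.ne').tendsto
      have := hcont.comp h1
      simpa [Real.rpow_zero, Function.comp_def] using this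
    have := h2.mul (tendsto_const_nhds (x := t))
    simpa using this
  exact ge_of_tendsto htend (Filter.Eventually.of_forall key)

private lemma list_eq_ofFn {ι : Type*} (l : List ι) (L : ℕ) (hl : l.length = L) :
    ∃ w : Fin L → ι, List.ofFn w = l := by
  subst hl
  exact ⟨l.get, List.ofFn_get l⟩

private lemma jsr_exists_bound {n ι : Type*} [Fintype n] [DecidableEq n] [Nonempty n]
    [Fintype ι] [Nonempty ι]
    (G : ι → Matrix n n ℂ) (t : ℝ) (hlt : jsr G < t) :
    ∃ C : ℝ, 1 ≤ C ∧ ∀ l : List ι, ‖(l.map G).prod‖ ≤ C * t ^ l.length := by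
  have ht : 0 < t := lt_of_le_of_lt (jsr_nonneg G) hlt
  obtain ⟨k0, hk0⟩ := exists_lt_of_ciInf_lt hlt
  set L := k0 + 1 with hL
  have hL0 : 0 < L := Nat.succ_pos k0
  have step1 : ∀ l : List ι, l.length = L → ‖(l.map G).prod‖ ≤ t ^ L := by
    intro l hl
    obtain ⟨w, hwl⟩ := list_eq_ofFn l L hl
    have h1 : ‖(List.ofFn fun i => G (w i)).prod‖ ^ ((k0 + 1 : ℝ)⁻¹) < t :=
      lt_of_le_of_lt (le_ciSup (f := fun w : Fin (k0 + 1) → ι =>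
        ‖(List.ofFn fun i => G (w i)).prod‖ ^ ((k0 + 1 : ℝ)⁻¹)) (Finite.bddAbove_range _) w) hk0
    have heq : (List.ofFn fun i => G (w i)) = l.map G := by
      rw [← hwl]; simp [List.map_ofFn, Function.comp_def]
    rw [heq] at h1
    have hcast : ((L : ℕ) : ℝ) = (k0 + 1 : ℝ) := by rw [hL]; push_cast; ring
    have h2 : ‖(l.map G).prod‖ = (‖(l.map G).prod‖ ^ ((k0 + 1 : ℝ)⁻¹)) ^ L := by
      rw [← hcast, Real.rpow_inv_natCast_pow (norm_nonneg _) hL0.ne']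
    rw [h2]
    exact pow_le_pow_left₀ (Real.rpow_nonneg (norm_nonneg _) _) h1.le L
  set M := 1 + ∑ r, ‖G r‖ with hM
  have hsum : (0:ℝ) ≤ ∑ r, ‖G r‖ := Finset.sum_nonneg fun r _ => norm_nonneg _
  have hM1 : 1 ≤ M := le_add_of_nonneg_right hsum
  have hMr : ∀ r, ‖G r‖ ≤ M := fun r => by
    have : ‖G r‖ ≤ ∑ r, ‖G r‖ :=
      Finset.single_le_sum (fun i _ => norm_nonneg (G i)) (Finset.mem_univ r)
    simp only [hM]; linarith
  set c := min t 1 with hc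
  have hc0 : 0 < c := lt_min ht one_pos
  have hc1 : c ≤ 1 := min_le_right _ _
  have hct : c ≤ t := min_le_left _ _
  have hMc : (1:ℝ) ≤ M / c := by
    rw [le_div_iff₀ hc0]
    nlinarith
  refine ⟨(M / c) ^ L, ?_, ?_⟩
  · calc (1:ℝ) = 1 ^ L := (one_pow L).symm
      _ ≤ (M / c) ^ L := pow_le_pow_left₀ zero_le_one hMc L
  · have main : ∀ N : ℕ, ∀ l : List ι, l.length = N →
        ‖(l.map G).prod‖ ≤ (M / c) ^ L * t ^ N := by
      intro N
      induction N using Nat.strong_induction_on with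
      | _ N ih =>
        intro l hl
        rcases lt_or_ge N L with hN | hN
        · have hb : ‖(l.map G).prod‖ ≤ M ^ N := by
            have := norm_listmap_prod_le G M hM1 hMr l
            rwa [hl] at this
          have e1 : (M / c) ^ L * c ^ L = M ^ L := by
            rw [← mul_pow, div_mul_cancel₀ _ hc0.ne']
          calc ‖(l.map G).prod‖ ≤ M ^ N := hb
            _ ≤ M ^ L := pow_le_pow_right₀ hM1 hN.le
            _ = (M / c) ^ L * c ^ L := e1.symm
            _ ≤ (M / c) ^ L * c ^ N := by
                apply mul_le_mul_of_nonneg_left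
                  (pow_le_pow_of_le_one hc0.le hc1 hN.le) (by positivity)
            _ ≤ (M / c) ^ L * t ^ N := by
                apply mul_le_mul_of_nonneg_left (pow_le_pow_left₀ hc0.le hct N)
                  (by positivity)
        · have hlen1 : (l.take L).length = L := by rw [List.length_take]; omega
          have hlen2 : (l.drop L).length = N - L := by rw [List.length_drop, hl]
          have h1 := step1 _ hlen1
          have h2 := ih (N - L) (by omega) _ hlen2
          have hsplit : (l.map G).prod = ((l.take L).map G).prod * ((l.drop L).map G).prod := by
            rw [← List.prod_append, ← List.map_append, List.take_append_drop]
          calc ‖(l.map G).prod‖ ≤ ‖((l.take L).map G).prod‖ * ‖((l.drop L).map G).prod‖ := by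
                rw [hsplit]; exact norm_mul_le _ _
            _ ≤ t ^ L * ((M / c) ^ L * t ^ (N - L)) :=
                mul_le_mul h1 h2 (norm_nonneg _) (by positivity)
            _ = (M / c) ^ L * (t ^ L * t ^ (N - L)) := by ring
            _ = (M / c) ^ L * t ^ N := by
                rw [← pow_add]; congr 2; omega
    exact fun l => main l.length l rfl

end AuxJsr

/-- **Proposition (joint spectral radius in the special case).**

Let `q ≥ 2` and `m ≥ 0` be integers, `K = (q^m − 1)/(q − 1)`, and for
`0 ≤ r < q` let `A_r = [[J_{r0}, J_{r1}], [0, B_r]]` where `J_{r0}` is a `K × K`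
upper triangular matrix with zero diagonal, `J_{r1}` is a `K × q^m` matrix and
`B_r` is a `q^m × q^m` matrix.  Then `ρ(𝒜) = ρ(ℬ)` and `ρ(𝒥) = 0`.
Furthermore, if `ρ(ℬ) > 0` and `ℬ` has the simple growth property, then so does
`𝒜`. -/
theorem jsr_special_case
    (q m K : ℕ) (hq : 2 ≤ q) (hK : K = (q ^ m - 1) / (q - 1))
    (J0 : Fin q → Matrix (Fin K) (Fin K) ℂ)
    (hJ0 : ∀ r : Fin q, ∀ a b : Fin K, b ≤ a → J0 r a b = 0)
    (J1 : Fin q → Matrix (Fin K) (Fin (q ^ m)) ℂ)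
    (B : Fin q → Matrix (Fin (q ^ m)) (Fin (q ^ m)) ℂ)
    (A : Fin q → Matrix (Fin K ⊕ Fin (q ^ m)) (Fin K ⊕ Fin (q ^ m)) ℂ)
    (hA : ∀ r : Fin q, A r = Matrix.fromBlocks (J0 r) (J1 r) 0 (B r)) :
    jsr A = jsr B ∧
    jsr J0 = 0 ∧
    (0 < jsr B → HasSimpleGrowth B → HasSimpleGrowth A) := by
  have hq0 : 0 < q := by omega
  haveI hι : Nonempty (Fin q) := ⟨⟨0, hq0⟩⟩
  haveI hβ : Nonempty (Fin (q ^ m)) := ⟨⟨0, pow_pos hq0 m⟩⟩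
  -- nilpotency of products of the J0's
  have hnil : ∀ l : List (Fin q), K ≤ l.length → (l.map J0).prod = 0 := by
    intro l hl
    ext a b
    rw [Matrix.zero_apply]
    apply strict_tri_prod
    · intro M hM a' b' hab
      obtain ⟨r, _, rfl⟩ := List.mem_map.mp hM
      exact hJ0 r a' b' hab
    · have hb := b.isLt
      simp only [List.length_map]
      omega
  -- products of the B's are dominated by products of the A's
  have hBA : ∀ l : List (Fin q), ‖(l.map B).prod‖ ≤ ‖(l.map A).prod‖ := by
    intro l
    obtain ⟨X, hX⟩ := exists_blocks J0 J1 B l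
    have hmapA : l.map A = l.map fun r => Matrix.fromBlocks (J0 r) (J1 r) 0 (B r) :=
      List.map_congr_left fun r _ => hA r
    rw [hmapA, hX]
    exact norm_blocks_le₂₂ _ _ _ _
  have h1 : jsr B ≤ jsr A := jsr_mono B A hBA
  have h2 : jsr A ≤ jsr B := by
    refine le_of_forall_pos_le_add fun ε hε => ?_
    have ht : 0 < jsr B + ε := lt_of_lt_of_le hε (le_add_of_nonneg_left (jsr_nonneg B))
    obtain ⟨Cb, hCb1, hCb⟩ := jsr_exists_bound B (jsr B + ε) (lt_add_of_pos_right _ hε)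
    obtain ⟨Ca, hCa1, hCa⟩ := Abound J0 J1 B A hA K
      (fun l hl => hnil l hl.ge) (jsr B + ε) Cb ht hCb1 hCb
    exact jsr_le_of_forall_norm_le A (jsr B + ε) Ca ht hCa1 hCa
  have hAB : jsr A = jsr B := le_antisymm h2 h1
  refine ⟨hAB, ?_, ?_⟩
  · -- jsr J0 = 0
    refine le_antisymm ?_ (jsr_nonneg J0)
    have hle : jsr J0 ≤ ⨆ w : Fin (K + 1) → Fin q,
        ‖(List.ofFn fun i => J0 (w i)).prod‖ ^ ((K + 1 : ℝ)⁻¹) :=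
      ciInf_le (jsr_bddBelow J0) K
    refine hle.trans ?_
    refine ciSup_le fun w => ?_
    have hz : (List.ofFn fun i => J0 (w i)).prod = 0 := by
      have heq : (List.ofFn fun i => J0 (w i)) = (List.ofFn w).map J0 := by
        simp [List.map_ofFn, Function.comp_def]
      rw [heq]
      exact hnil _ (by simp)
    rw [hz, norm_zero, Real.zero_rpow (by positivity)]
  · -- simple growth transfers from B to A
    intro hρ hg
    obtain ⟨C, hC⟩ := hg
    have hB0 : ∀ l : List (Fin q), ‖(l.map B).prod‖ ≤ max C 1 * jsr B ^ l.length := by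
      intro l
      rcases Nat.eq_zero_or_pos l.length with h0 | h0
      · obtain rfl : l = [] := List.length_eq_zero_iff.mp h0
        simp only [List.map_nil, List.prod_nil, List.length_nil, pow_zero, mul_one]
        calc ‖(1 : Matrix (Fin (q ^ m)) (Fin (q ^ m)) ℂ)‖ = 1 := norm_one
          _ ≤ max C 1 := le_max_right _ _
      · have hw := hC l.length h0 l.get
        have heq : (List.ofFn fun i => B (l.get i)) = l.map B := by
          conv_rhs => rw [← List.ofFn_get l]
          simp [List.map_ofFn, Function.comp_def]
        rw [heq] at hw
        refine hw.trans ?_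
        exact mul_le_mul_of_nonneg_right (le_max_left _ _)
          (pow_nonneg (jsr_nonneg B) _)
    obtain ⟨Ca, hCa1, hCa⟩ := Abound J0 J1 B A hA K
      (fun l hl => hnil l hl.ge) (jsr B) (max C 1) hρ (le_max_right _ _) hB0
    refine ⟨Ca, fun k hk w => ?_⟩
    have heq : (List.ofFn fun i => A (w i)) = (List.ofFn w).map A := by
      simp [List.map_ofFn, Function.comp_def]
    rw [heq, hAB]
    have := hCa (List.ofFn w)
    simpa [List.length_ofFn] using this
end
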